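/- arXiv:2208.14425 — 8 statements merged into one kernel-verified Lean document; each statement's English description precedes it below -/
import Mathlib

section
/- For all s ∈ [0,1), the generating function of η satisfies Σ_{x≥0} η(x) s^x = 1 − ψ(s)/(α μ(0)(1 − s)); in particular Σ_{x≥0} η(x) s^x < 1 for all s ∈ [0, s_0). -/
/-!
With the tails `μbar k = ∑_{j > k} μ j`, summation by parts gives
`(1 - s) ∑ μbar k s^k = 1 - ∑ μ j s^j` for `|s| < 1`. Adding the geometric series of the constant
`p / α` and removing the term `x = 0` turns `∑ η x s^x` into `1 - ψ s / (α μ 0 (1 - s))`, which is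
`< 1` exactly where `ψ s > 0`, in particular on `[0, s₀)`.
-/

open Set Filter Topology

section TailSums

variable {G : Type*} [AddCommGroup G] [TopologicalSpace G] [IsTopologicalAddGroup G]

lemma tendsto_tsum_sub_sum_range_succ {a : ℕ → G} (ha : Summable a) :
    Tendsto (fun k ↦ ∑' j, a j - ∑ j ∈ Finset.range (k + 1), a j) atTop (𝓝 0) := by
  simpa using (tendsto_const_nhds (x := ∑' j, a j)).sub
    (ha.hasSum.tendsto_sum_nat.comp (tendsto_add_atTop_nat 1))

lemma tsum_eq_tsum_sub_apply_zero [T2Space G] {f g : ℕ → G} (hg : Summable g) (hf0 : f 0 = 0)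
    (hfg : ∀ x, 1 ≤ x → f x = g x) : ∑' x, f x = ∑' x, g x - g 0 := by
  have hshift : (fun k ↦ f (k + 1)) = fun k ↦ g (k + 1) := funext fun k ↦ hfg _ k.succ_pos
  rw [tsum_eq_zero_add' (hshift ▸ (summable_nat_add_iff 1).mpr hg), hg.tsum_eq_zero_add, hshift,
    hf0]
  abel

end TailSums

section TailGeneratingFunction

variable {𝕜 : Type*} [NormedField 𝕜] [CompleteSpace 𝕜]

lemma summable_mul_pow_of_tendsto {u : ℕ → 𝕜} {c : 𝕜} (hu : Tendsto u atTop (𝓝 c)) {s : 𝕜}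
    (hs : ‖s‖ < 1) : Summable fun k ↦ u k * s ^ k := by
  simpa only [mul_comm] using (summable_norm_geometric_of_norm_lt_one hs).mul_tendsto_const
    (Nat.cofinite_eq_atTop ▸ hu)

theorem one_sub_mul_tsum_tail_mul_pow {a : ℕ → 𝕜} (ha : Summable a) {s : 𝕜} (hs : ‖s‖ < 1) :
    (1 - s) * ∑' k, (∑' j, a j - ∑ j ∈ Finset.range (k + 1), a j) * s ^ k
      = ∑' j, a j - ∑' j, a j * s ^ j := by
  set t : ℕ → 𝕜 := fun k ↦ ∑' j, a j - ∑ j ∈ Finset.range (k + 1), a j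
  have hts : Summable fun k ↦ t k * s ^ k :=
    summable_mul_pow_of_tendsto (tendsto_tsum_sub_sum_range_succ ha) hs
  have has : Summable fun k ↦ a k * s ^ k := summable_mul_pow_of_tendsto ha.tendsto_atTop_zero hs
  have hshift : ∀ k, t (k + 1) * s ^ (k + 1) = s * (t k * s ^ k) - a (k + 1) * s ^ (k + 1) := by
    intro k
    simp only [t, Finset.sum_range_succ _ (k + 1)]
    ring
  have ht0 : t 0 = ∑' j, a j - a 0 := by simp [t]
  -- Shifting the series by one index: `T = t 0 + s T - (∑' a j s^j - a 0)`.
  have hT := hts.tsum_eq_zero_add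
  simp_rw [hshift] at hT
  rw [(hts.mul_left s).tsum_sub ((summable_nat_add_iff 1).mpr has), tsum_mul_left] at hT
  linear_combination hT + ht0 + has.tsum_eq_zero_add

end TailGeneratingFunction

theorem stmt_2_general (α p : ℝ) (μ : ℕ → ℝ) (ψ : ℝ → ℝ) (s₀ : ℝ)
    (hα : 0 < α)
    (hμ_sum : ∑' j, μ j = 1)
    (hμ0 : 0 < μ 0)
    (hψ : ∀ s : ℝ, ψ s = α * ((∑' j, μ j * s ^ j) - s) - p * s)
    (hs₀_mem : s₀ ∈ Ioc (0:ℝ) 1)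
    (hψ_pos : ∀ s ∈ Ico (0:ℝ) s₀, 0 < ψ s)
    (μbar : ℕ → ℝ)
    (hμbar : ∀ k, μbar k = 1 - ∑ j ∈ Finset.range (k+1), μ j)
    (η : ℕ → ℝ)
    (hη0 : η 0 = 0)
    (hη : ∀ x, 1 ≤ x → η x = (1 / μ 0) * (μbar x + p / α)) :
    (∀ s ∈ Ico (0:ℝ) 1, ∑' x, η x * s ^ x = 1 - ψ s / (α * μ 0 * (1 - s))) ∧
      (∀ s ∈ Ico (0:ℝ) s₀, ∑' x, η x * s ^ x < 1) := by
  have hμ : Summable μ := by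
    by_contra h
    simp [tsum_eq_zero_of_not_summable h] at hμ_sum
  have hμbar_eq : μbar = fun k ↦ ∑' j, μ j - ∑ j ∈ Finset.range (k + 1), μ j := by
    ext k
    rw [hμbar, hμ_sum]
  have generating : ∀ s ∈ Ico (0:ℝ) 1, ∑' x, η x * s ^ x = 1 - ψ s / (α * μ 0 * (1 - s)) := by
    rintro s ⟨hs0, hs1⟩
    have hs : ‖s‖ < 1 := by rwa [Real.norm_eq_abs, abs_of_nonneg hs0]
    have htail : (1 - s) * ∑' k, μbar k * s ^ k = 1 - ∑' j, μ j * s ^ j := by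
      simpa only [hμbar_eq, hμ_sum] using one_sub_mul_tsum_tail_mul_pow hμ hs
    have hμbar_s : Summable fun k ↦ μbar k * s ^ k :=
      summable_mul_pow_of_tendsto (hμbar_eq ▸ tendsto_tsum_sub_sum_range_succ hμ) hs
    have hgeom := summable_geometric_of_lt_one hs0 hs1
    rw [tsum_eq_tsum_sub_apply_zero (g := fun x ↦ (1 / μ 0) * (μbar x * s ^ x + p / α * s ^ x))
      ((hμbar_s.add (hgeom.mul_left _)).mul_left _) (by simp [hη0])
      (fun x hx ↦ by rw [hη x hx]; ring),
      tsum_mul_left, hμbar_s.tsum_add (hgeom.mul_left _), tsum_mul_left,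
      tsum_geometric_of_lt_one hs0 hs1, hψ, hμbar 0, Finset.sum_range_one]
    have : 1 - s ≠ 0 := by linarith
    field_simp
    linear_combination α * htail
  refine ⟨generating, fun s hs ↦ ?_⟩
  have hs1 : s < 1 := hs.2.trans_le hs₀_mem.2
  rw [generating s ⟨hs.1, hs1⟩, sub_lt_self_iff]
  exact div_pos (hψ_pos s hs) (mul_pos (mul_pos hα hμ0) (sub_pos.mpr hs1))

theorem stmt_2 (α p : ℝ) (μ : ℕ → ℝ) (ψ : ℝ → ℝ) (s₀ : ℝ)
    (hα : 0 < α) (hp : 0 ≤ p)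
    (hμ_nonneg : ∀ j, 0 ≤ μ j) (hμ_sum : ∑' j, μ j = 1)
    (hμ0 : 0 < μ 0) (hμ1 : μ 1 = 0)
    (hψ : ∀ s : ℝ, ψ s = α * ((∑' j, μ j * s ^ j) - s) - p * s)
    (hs₀ : s₀ = sInf {s : ℝ | 0 < s ∧ ψ s = 0})
    (hs₀_mem : s₀ ∈ Ioc (0:ℝ) 1)
    (hψ_pos : ∀ s ∈ Ico (0:ℝ) s₀, 0 < ψ s)
    (μbar : ℕ → ℝ)
    (hμbar : ∀ k, μbar k = 1 - ∑ j ∈ Finset.range (k+1), μ j)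
    (η : ℕ → ℝ)
    (hη0 : η 0 = 0)
    (hη : ∀ x, 1 ≤ x → η x = (1 / μ 0) * (μbar x + p / α)) :
    (∀ s ∈ Ico (0:ℝ) 1, ∑' x, η x * s ^ x = 1 - ψ s / (α * μ 0 * (1 - s))) ∧
      (∀ s ∈ Ico (0:ℝ) s₀, ∑' x, η x * s ^ x < 1) :=
  stmt_2_general α p μ ψ s₀ hα hμ_sum hμ0 hψ hs₀_mem hψ_pos μbar hμbar η hη0 hη
end

section
/- For all s ∈ [0, s_0), the generating function of ΔW satisfies Σ_{k≥0} ΔW(k) s^k = (1 − s)/ψ(s). -/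
set_option maxHeartbeats 1000000


open Set Filter Topology

theorem stmt_3 (α p : ℝ) (μ : ℕ → ℝ) (ψ : ℝ → ℝ) (s₀ : ℝ)
    (hα : 0 < α) (hp : 0 ≤ p)
    (hμ_nonneg : ∀ j, 0 ≤ μ j) (hμ_sum : ∑' j, μ j = 1)
    (hμ0 : 0 < μ 0) (hμ1 : μ 1 = 0)
    (hψ : ∀ s : ℝ, ψ s = α * ((∑' j, μ j * s ^ j) - s) - p * s)
    (hs₀ : s₀ = sInf {s : ℝ | 0 < s ∧ ψ s = 0})
    (hs₀_mem : s₀ ∈ Ioc (0:ℝ) 1)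
    (hψ_pos : ∀ s ∈ Ico (0:ℝ) s₀, 0 < ψ s)
    (μbar : ℕ → ℝ)
    (hμbar : ∀ k, μbar k = 1 - ∑ j ∈ Finset.range (k+1), μ j)
    (ΔW : ℕ → ℝ)
    (hΔW0 : ΔW 0 = 1 / (α * μ 0))
    (hΔW : ∀ k, ΔW (k+1) = (1 / μ 0) * ∑ j ∈ Finset.range (k+1), ΔW j * (μbar (k - j + 1) + p / α)) :
    ∀ s ∈ Ico (0:ℝ) s₀, ∑' k, ΔW k * s ^ k = (1 - s) / ψ s := by
  -- basic facts
  have hμsum : Summable μ := by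
    by_contra h
    rw [tsum_eq_zero_of_not_summable h] at hμ_sum
    norm_num at hμ_sum
  have hμbar_nonneg : ∀ k, 0 ≤ μbar k := by
    intro k
    have := Summable.sum_le_tsum (Finset.range (k+1)) (fun i _ => hμ_nonneg i) hμsum
    rw [hμ_sum] at this
    rw [hμbar]; linarith
  have hμbar_le : ∀ k, μbar k ≤ 1 := by
    intro k
    have : (0:ℝ) ≤ ∑ j ∈ Finset.range (k+1), μ j :=
      Finset.sum_nonneg fun i _ => hμ_nonneg i
    rw [hμbar]; linarith
  have hc_nonneg : ∀ m, 0 ≤ μbar m + p / α :=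
    fun m => add_nonneg (hμbar_nonneg m) (div_nonneg hp hα.le)
  have hΔW_nonneg : ∀ k, 0 ≤ ΔW k := by
    intro k
    induction k using Nat.strong_induction_on with
    | _ k ih =>
      match k with
      | 0 => rw [hΔW0]; positivity
      | k+1 =>
        rw [hΔW k]
        refine mul_nonneg (by positivity) (Finset.sum_nonneg fun j hj => ?_)
        exact mul_nonneg (ih j (Finset.mem_range.mp hj)) (hc_nonneg _)
  have keyrec : ∀ n, 1 ≤ n →
      ∑ j ∈ Finset.range n, ΔW j * (μbar (n - j) + p / α) = μ 0 * ΔW n := by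
    intro n hn
    obtain ⟨m, rfl⟩ := Nat.exists_eq_add_of_le hn
    rw [add_comm 1 m, hΔW m, ← mul_assoc, mul_one_div, div_self hμ0.ne', one_mul]
    refine Finset.sum_congr rfl fun j hj => ?_
    have hj' : j < m + 1 := Finset.mem_range.mp hj
    have he : m + 1 - j = m - j + 1 := by omega
    rw [he]
  intro s hs
  obtain ⟨hs0, hss⟩ := hs
  have hs1 : s < 1 := lt_of_lt_of_le hss hs₀_mem.2
  have hs1' : (0:ℝ) < 1 - s := by linarith
  -- the series b
  set b : ℕ → ℝ := fun m => if m = 0 then 0 else (μbar m + p / α) * s ^ m with hbdef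
  have hb_nonneg : ∀ m, 0 ≤ b m := by
    intro m
    rcases eq_or_ne m 0 with h | h
    · simp [hbdef, h]
    · simp only [hbdef, if_neg h]
      exact mul_nonneg (hc_nonneg m) (pow_nonneg hs0 m)
  have hb_summable : Summable b := by
    refine Summable.of_nonneg_of_le hb_nonneg (fun m => ?_)
      ((summable_geometric_of_lt_one hs0 hs1).mul_left (1 + p / α))
    rcases eq_or_ne m 0 with h | h
    · simp [hbdef, h]; positivity
    · simp only [hbdef, if_neg h]
      exact mul_le_mul_of_nonneg_right (by linarith [hμbar_le m]) (pow_nonneg hs0 m)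
  set g : ℝ := ∑' m, b m with hgdef
  have hg_nonneg : 0 ≤ g := tsum_nonneg hb_nonneg
  -- factorization of ψ
  have hgeo : Summable fun m : ℕ => s ^ m := summable_geometric_of_lt_one hs0 hs1
  have hfsum : Summable fun j => μ j * s ^ j := by
    refine Summable.of_nonneg_of_le
      (fun j => mul_nonneg (hμ_nonneg j) (pow_nonneg hs0 j)) (fun j => ?_) hμsum
    calc μ j * s ^ j ≤ μ j * 1 :=
          mul_le_mul_of_nonneg_left (pow_le_one₀ hs0 hs1.le) (hμ_nonneg j)
      _ = μ j := mul_one _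
  have hHsum : Summable fun m => μbar m * s ^ m := by
    refine Summable.of_nonneg_of_le
      (fun m => mul_nonneg (hμbar_nonneg m) (pow_nonneg hs0 m)) (fun m => ?_) hgeo
    calc μbar m * s ^ m ≤ 1 * s ^ m :=
          mul_le_mul_of_nonneg_right (hμbar_le m) (pow_nonneg hs0 m)
      _ = s ^ m := one_mul _
  have hb0eq : μbar 0 = 1 - μ 0 := by
    rw [hμbar]; simp
  have hfact : ψ s = α * (1 - s) * (μ 0 - g) := by
    set f : ℝ := ∑' j, μ j * s ^ j with hfdef
    set H : ℝ := ∑' m, μbar m * s ^ m with hHdef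
    have hshiftH : Summable fun m => μbar (m+1) * s ^ (m+1) :=
      (summable_nat_add_iff (f := fun m => μbar m * s ^ m) 1).2 hHsum
    have hshiftμ : Summable fun m => μ (m+1) * s ^ (m+1) :=
      (summable_nat_add_iff (f := fun j => μ j * s ^ j) 1).2 hfsum
    have hshiftgeo : Summable fun m : ℕ => s ^ (m+1) :=
      (summable_nat_add_iff (f := fun m : ℕ => s ^ m) 1).2 hgeo
    have hsHsum : Summable fun m => μbar m * s ^ (m+1) := by
      refine (hHsum.mul_left s).congr fun m => ?_
      ring
    have hf0 : f = μ 0 + ∑' m, μ (m+1) * s ^ (m+1) := by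
      rw [hfdef, Summable.tsum_eq_zero_add hfsum]
      simp
    have hH0 : H = μbar 0 + ∑' m, μbar (m+1) * s ^ (m+1) := by
      rw [hHdef, Summable.tsum_eq_zero_add hHsum]
      simp
    have hsH : s * H = ∑' m, μbar m * s ^ (m+1) := by
      rw [hHdef, ← tsum_mul_left]
      exact tsum_congr fun m => by ring
    have hstep : ∀ m, μbar (m+1) - μbar m = -μ (m+1) := by
      intro m
      rw [hμbar, hμbar, Finset.sum_range_succ]
      ring
    have hdiff : (∑' m, μbar (m+1) * s ^ (m+1)) - (∑' m, μbar m * s ^ (m+1))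
        = -∑' m, μ (m+1) * s ^ (m+1) := by
      rw [← Summable.tsum_sub hshiftH hsHsum, ← tsum_neg]
      refine tsum_congr fun m => ?_
      linear_combination s ^ (m+1) * hstep m
    have hfH : (1 - s) * H = 1 - f := by
      have e1 : (1 - s) * H = H - s * H := by ring
      rw [e1, hsH, hH0, hf0]
      have : μbar 0 + (∑' m, μbar (m+1) * s ^ (m+1)) - (∑' m, μbar m * s ^ (m+1))
          = μbar 0 + ((∑' m, μbar (m+1) * s ^ (m+1)) - ∑' m, μbar m * s ^ (m+1)) := by ring
      rw [this, hdiff, hb0eq]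
      ring
    have hgeo1 : (∑' m : ℕ, s ^ (m+1)) = s * (1 - s)⁻¹ := by
      rw [← tsum_geometric_of_lt_one hs0 hs1, ← tsum_mul_left]
      exact tsum_congr fun m => by ring
    have hg_eq : g = (H - μbar 0) + (p / α) * (s * (1 - s)⁻¹) := by
      have h1 : g = ∑' m, b (m+1) := by
        rw [hgdef, Summable.tsum_eq_zero_add hb_summable]
        have : b 0 = 0 := by simp [hbdef]
        rw [this, zero_add]
      have h2 : ∀ m : ℕ, b (m+1) = μbar (m+1) * s ^ (m+1) + (p / α) * s ^ (m+1) := by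
        intro m
        show (if m+1 = 0 then (0:ℝ) else (μbar (m+1) + p / α) * s ^ (m+1)) = _
        rw [if_neg (Nat.succ_ne_zero m)]
        ring
      rw [h1, tsum_congr h2, Summable.tsum_add hshiftH (hshiftgeo.mul_left (p / α)),
        tsum_mul_left, hgeo1]
      have h3 : (∑' m, μbar (m+1) * s ^ (m+1)) = H - μbar 0 := by
        rw [hH0]; ring
      rw [h3]
    rw [hψ s, ← hfdef]
    have h1 : (1 - s) * (1 - s)⁻¹ = 1 := mul_inv_cancel₀ hs1'.ne'
    have h2 : α * (p / α) = p := by field_simp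
    have hkey : (1 - s) * g = (1 - f) - (1 - s) * μbar 0 + (p / α) * s := by
      rw [hg_eq]
      linear_combination hfH + (p / α) * s * h1
    linear_combination α * hkey + s * h2 - α * (1 - s) * hb0eq
  have hψs_pos : 0 < ψ s := hψ_pos s ⟨hs0, hss⟩
  have hpos : 0 < μ 0 - g := by
    rw [hfact] at hψs_pos
    by_contra h
    push_neg at h
    have h2 : (0:ℝ) < α * (1 - s) := by positivity
    linarith [mul_nonpos_of_nonneg_of_nonpos h2.le h]
  -- the series a and its summability
  set a : ℕ → ℝ := fun k => ΔW k * s ^ k with hadef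
  have ha_nonneg : ∀ k, 0 ≤ a k := fun k => mul_nonneg (hΔW_nonneg k) (pow_nonneg hs0 k)
  set B : ℝ := 1 / (α * (μ 0 - g)) with hBdef
  have hB_pos : 0 < B := by positivity
  have hBid : B * (μ 0 - g) = 1 / α := by
    rw [hBdef]; field_simp
  have ha_succ : ∀ k, a (k+1) = (1 / μ 0) * ∑ j ∈ Finset.range (k+1), a j * b (k+1-j) := by
    intro k
    show ΔW (k+1) * s ^ (k+1) = _
    rw [hΔW k, mul_assoc, Finset.sum_mul]
    congr 1
    refine Finset.sum_congr rfl fun j hj => ?_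
    have hj' : j < k + 1 := Finset.mem_range.mp hj
    have h2 : k + 1 - j ≠ 0 := by omega
    have h1 : k - j + 1 = k + 1 - j := by omega
    have h3 : s ^ j * s ^ (k + 1 - j) = s ^ (k + 1) := by
      rw [← pow_add]; congr 1; omega
    show _ = (ΔW j * s ^ j) * (if k + 1 - j = 0 then 0 else (μbar (k+1-j) + p / α) * s ^ (k+1-j))
    rw [if_neg h2, h1]
    calc ΔW j * (μbar (k+1-j) + p / α) * s ^ (k + 1)
        = ΔW j * (μbar (k+1-j) + p / α) * (s ^ j * s ^ (k+1-j)) := by rw [h3]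
      _ = ΔW j * s ^ j * ((μbar (k+1-j) + p / α) * s ^ (k+1-j)) := by ring
  have hinner_le : ∀ j n : ℕ, ∑ k ∈ Finset.Ico j n, b (k+1-j) ≤ g := by
    intro j n
    rw [Finset.sum_Ico_eq_sum_range]
    have hcg : ∀ i ∈ Finset.range (n - j), b (j + i + 1 - j) = b (i+1) := by
      intro i _
      congr 1
      omega
    rw [Finset.sum_congr rfl hcg]
    have he : ∑ i ∈ Finset.range (n - j + 1), b i = ∑ i ∈ Finset.range (n - j), b (i+1) := by
      rw [Finset.sum_range_succ' b (n - j)]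
      have hb0 : b 0 = 0 := by simp [hbdef]
      rw [hb0, add_zero]
    rw [← he]
    exact Summable.sum_le_tsum _ (fun i _ => hb_nonneg i) hb_summable
  have hbound : ∀ n, ∑ k ∈ Finset.range n, a k ≤ B := by
    intro n
    induction n with
    | zero => simp [hB_pos.le]
    | succ n ih =>
      rw [Finset.sum_range_succ' a n]
      have ha0 : a 0 = 1 / (α * μ 0) := by
        show ΔW 0 * s ^ 0 = _
        rw [pow_zero, mul_one, hΔW0]
      have hD : ∑ i ∈ Finset.range n, a (i+1)
          = (1 / μ 0) * ∑ k ∈ Finset.range n, ∑ j ∈ Finset.range (k+1), a j * b (k+1-j) := by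
        rw [Finset.mul_sum]
        exact Finset.sum_congr rfl fun k _ => ha_succ k
      have hswap : ∑ k ∈ Finset.range n, ∑ j ∈ Finset.range (k+1), a j * b (k+1-j)
          = ∑ j ∈ Finset.range n, ∑ k ∈ Finset.Ico j n, a j * b (k+1-j) := by
        have := Finset.sum_Ico_Ico_comm 0 n (fun j k => a j * b (k+1-j))
        simp only [Finset.range_eq_Ico]
        exact this.symm
      have hDle : ∑ k ∈ Finset.range n, ∑ j ∈ Finset.range (k+1), a j * b (k+1-j)
          ≤ B * g := by
        rw [hswap]
        calc ∑ j ∈ Finset.range n, ∑ k ∈ Finset.Ico j n, a j * b (k+1-j)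
            ≤ ∑ j ∈ Finset.range n, a j * g := by
              refine Finset.sum_le_sum fun j _ => ?_
              rw [← Finset.mul_sum]
              exact mul_le_mul_of_nonneg_left (hinner_le j n) (ha_nonneg j)
          _ = (∑ j ∈ Finset.range n, a j) * g := by rw [Finset.sum_mul]
          _ ≤ B * g := mul_le_mul_of_nonneg_right ih hg_nonneg
      have h1 : ∑ i ∈ Finset.range n, a (i+1) ≤ (1 / μ 0) * (B * g) := by
        rw [hD]
        exact mul_le_mul_of_nonneg_left hDle (by positivity)
      have hBid' : α * (B * (μ 0 - g)) = 1 := by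
        rw [hBdef]; field_simp
      have : 1 / (α * μ 0) + (1 / μ 0) * (B * g) = B := by
        have h0 : μ 0 ≠ 0 := hμ0.ne'
        have hα' : α ≠ 0 := hα.ne'
        field_simp
        nlinarith [hBid']
      linarith [h1, ha0.le]
  have ha_summable : Summable a := summable_of_sum_range_le ha_nonneg hbound
  -- Cauchy product
  have ha_norm : Summable fun k => ‖a k‖ := by
    simpa [Real.norm_eq_abs, abs_of_nonneg (ha_nonneg _)] using ha_summable
  have hb_norm : Summable fun k => ‖b k‖ := by
    simpa [Real.norm_eq_abs, abs_of_nonneg (hb_nonneg _)] using hb_summable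
  set W : ℝ := ∑' k, a k with hWdef
  have hC : W * g = ∑' n, ∑ k ∈ Finset.range (n+1), a k * b (n-k) :=
    tsum_mul_tsum_eq_tsum_sum_range_of_summable_norm ha_norm hb_norm
  have hinner_eq : ∀ n, ∑ k ∈ Finset.range (n+1+1), a k * b (n+1-k) = μ 0 * a (n+1) := by
    intro n
    rw [Finset.sum_range_succ]
    have hb00 : b (n+1 - (n+1)) = 0 := by simp [hbdef]
    rw [hb00, mul_zero, add_zero]
    have h1 : ∀ k ∈ Finset.range (n+1),
        a k * b (n+1-k) = ΔW k * (μbar (n+1-k) + p / α) * s ^ (n+1) := by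
      intro k hk
      have hk' : k < n + 1 := Finset.mem_range.mp hk
      have h2 : n + 1 - k ≠ 0 := by omega
      have h3 : s ^ k * s ^ (n+1-k) = s ^ (n+1) := by
        rw [← pow_add]; congr 1; omega
      show (ΔW k * s ^ k) * (if n+1-k = 0 then 0 else (μbar (n+1-k) + p / α) * s ^ (n+1-k)) = _
      rw [if_neg h2]
      calc ΔW k * s ^ k * ((μbar (n+1-k) + p / α) * s ^ (n+1-k))
          = ΔW k * (μbar (n+1-k) + p / α) * (s ^ k * s ^ (n+1-k)) := by ring
        _ = ΔW k * (μbar (n+1-k) + p / α) * s ^ (n+1) := by rw [h3]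
    rw [Finset.sum_congr rfl h1, ← Finset.sum_mul, keyrec (n+1) (by omega)]
    show μ 0 * ΔW (n+1) * s ^ (n+1) = μ 0 * (ΔW (n+1) * s ^ (n+1))
    ring
  have hWg : W * g = μ 0 * W - 1 / α := by
    have hshift_a : Summable fun n => a (n+1) :=
      (summable_nat_add_iff (f := a) 1).2 ha_summable
    have hinner_sum : Summable fun n => ∑ k ∈ Finset.range (n+1), a k * b (n-k) := by
      refine (summable_nat_add_iff
        (f := fun n => ∑ k ∈ Finset.range (n+1), a k * b (n-k)) 1).1 ?_
      exact ((hshift_a.mul_left (μ 0))).congr fun n => (hinner_eq n).symm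
    have h0 : ∑ k ∈ Finset.range (0+1), a k * b (0-k) = 0 := by
      have : b 0 = 0 := by simp [hbdef]
      simp [this]
    have hWsplit : W = a 0 + ∑' n, a (n+1) := by
      rw [hWdef]; exact Summable.tsum_eq_zero_add ha_summable
    have ha0 : a 0 = 1 / (α * μ 0) := by
      show ΔW 0 * s ^ 0 = _
      rw [pow_zero, mul_one, hΔW0]
    calc W * g = ∑' n, ∑ k ∈ Finset.range (n+1), a k * b (n-k) := hC
      _ = (∑ k ∈ Finset.range (0+1), a k * b (0-k))
          + ∑' n, ∑ k ∈ Finset.range (n+1+1), a k * b (n+1-k) :=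
        Summable.tsum_eq_zero_add hinner_sum
      _ = ∑' n, μ 0 * a (n+1) := by
        rw [h0, zero_add]
        exact tsum_congr hinner_eq
      _ = μ 0 * ∑' n, a (n+1) := tsum_mul_left
      _ = μ 0 * W - 1 / α := by
        have h4 : (∑' n, a (n+1)) = W - 1 / (α * μ 0) := by
          rw [hWsplit, ha0]; ring
        rw [h4, mul_sub]
        congr 1
        field_simp
  -- conclusion
  have hne : α * (1 - s) * (μ 0 - g) ≠ 0 := by positivity
  show W = (1 - s) / ψ s
  rw [hfact, eq_div_iff hne]
  have hWeq : α * (W * (μ 0 - g)) = 1 := by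
    have hαne : α ≠ 0 := hα.ne'
    field_simp at hWg ⊢
    linarith [hWg]
  linear_combination (1 - s) * hWeq
end

section
/- For all s ∈ [0, s_0), the generating function of W satisfies Σ_{k≥0} W(k) s^k = 1/ψ(s). -/
open Set Filter Topology

set_option maxHeartbeats 1000000 in
theorem stmt_4 (α p : ℝ) (μ : ℕ → ℝ) (ψ : ℝ → ℝ) (s₀ : ℝ)
    (hα : 0 < α) (hp : 0 ≤ p)
    (hμ_nonneg : ∀ j, 0 ≤ μ j) (hμ_sum : ∑' j, μ j = 1)
    (hμ0 : 0 < μ 0) (hμ1 : μ 1 = 0)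
    (hψ : ∀ s : ℝ, ψ s = α * ((∑' j, μ j * s ^ j) - s) - p * s)
    (hs₀ : s₀ = sInf {s : ℝ | 0 < s ∧ ψ s = 0})
    (hs₀_mem : s₀ ∈ Ioc (0:ℝ) 1)
    (hψ_pos : ∀ s ∈ Ico (0:ℝ) s₀, 0 < ψ s)
    (μbar : ℕ → ℝ)
    (hμbar : ∀ k, μbar k = 1 - ∑ j ∈ Finset.range (k+1), μ j)
    (ΔW : ℕ → ℝ)
    (hΔW0 : ΔW 0 = 1 / (α * μ 0))
    (hΔW : ∀ k, ΔW (k+1) = (1 / μ 0) * ∑ j ∈ Finset.range (k+1), ΔW j * (μbar (k - j + 1) + p / α))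
    (W : ℕ → ℝ)
    (hW : ∀ k, W k = ∑ j ∈ Finset.range (k+1), ΔW j) :
    ∀ s ∈ Ico (0:ℝ) s₀, ∑' k, W k * s ^ k = 1 / ψ s := by
  intro s hs
  obtain ⟨hsge, hslt⟩ := hs
  have hs1 : s < 1 := lt_of_lt_of_le hslt hs₀_mem.2
  have hs1' : (0:ℝ) < 1 - s := by linarith
  have hψs : 0 < ψ s := hψ_pos s ⟨hsge, hslt⟩
  have hαμ0 : 0 < α * μ 0 := mul_pos hα hμ0
  -- μ is summable
  have hμ_summ : Summable μ := by
    by_contra h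
    rw [tsum_eq_zero_of_not_summable h] at hμ_sum
    norm_num at hμ_sum
  have hf_summ : Summable (fun j => μ j * s ^ j) := by
    refine Summable.of_nonneg_of_le
      (fun j => mul_nonneg (hμ_nonneg j) (pow_nonneg hsge j)) (fun j => ?_) hμ_summ
    calc μ j * s ^ j ≤ μ j * 1 := by
          exact mul_le_mul_of_nonneg_left (pow_le_one₀ hsge hs1.le) (hμ_nonneg j)
      _ = μ j := mul_one _
  -- tail measure facts
  have hμbar_eq : ∀ k, μbar k = ∑' j, μ (j + (k+1)) := by
    intro k
    have h := Summable.sum_add_tsum_nat_add (k+1) hμ_summ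
    rw [hμ_sum] at h
    rw [hμbar k]
    linarith
  have hμbar_nonneg : ∀ k, 0 ≤ μbar k := by
    intro k
    rw [hμbar_eq k]
    exact tsum_nonneg (fun j => hμ_nonneg _)
  have hμbar_le_one : ∀ k, μbar k ≤ 1 := by
    intro k
    rw [hμbar k]
    have : 0 ≤ ∑ j ∈ Finset.range (k+1), μ j :=
      Finset.sum_nonneg (fun j _ => hμ_nonneg j)
    linarith
  have hμbar_rec : ∀ k, μbar k = μbar (k+1) + μ (k+1) := by
    intro k
    have h := Finset.sum_range_succ μ (k+1)
    rw [hμbar k, hμbar (k+1)]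
    linarith
  have hgeom : Summable (fun m : ℕ => s ^ m) := summable_geometric_of_lt_one hsge hs1
  have hA_summ : Summable (fun k => μbar k * s ^ k) := by
    refine Summable.of_nonneg_of_le
      (fun k => mul_nonneg (hμbar_nonneg k) (pow_nonneg hsge k)) (fun k => ?_) hgeom
    calc μbar k * s ^ k ≤ 1 * s ^ k :=
          mul_le_mul_of_nonneg_right (hμbar_le_one k) (pow_nonneg hsge k)
      _ = s ^ k := one_mul _
  -- tail identity
  set F : ℝ := ∑' j, μ j * s ^ j with hF
  set A : ℝ := ∑' k, μbar k * s ^ k with hA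
  have hμbar0 : μbar 0 = 1 - μ 0 := by
    rw [hμbar 0]; simp
  have htail : (1 - s) * A = 1 - F := by
    have h1 : s * A = ∑' k, μbar k * s ^ (k+1) := by
      rw [hA, ← tsum_mul_left]
      congr 1; funext k; ring
    have hA_shift : Summable (fun k => μbar (k+1) * s ^ (k+1)) := by
      exact (summable_nat_add_iff 1).mpr hA_summ
    have hf_shift : Summable (fun k => μ (k+1) * s ^ (k+1)) := by
      exact (summable_nat_add_iff 1).mpr hf_summ
    have h2 : ∑' k, μbar k * s ^ (k+1) =
        (∑' k, μbar (k+1) * s ^ (k+1)) + ∑' k, μ (k+1) * s ^ (k+1) := by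
      rw [← Summable.tsum_add hA_shift hf_shift]
      congr 1; funext k
      rw [hμbar_rec k]; ring
    have h3 : (∑' k, μbar (k+1) * s ^ (k+1)) = A - μbar 0 := by
      have := Summable.tsum_eq_zero_add hA_summ
      rw [← hA] at this
      simp only [pow_zero, mul_one] at this
      linarith
    have h4 : (∑' k, μ (k+1) * s ^ (k+1)) = F - μ 0 := by
      have := Summable.tsum_eq_zero_add hf_summ
      rw [← hF] at this
      simp only [pow_zero, mul_one] at this
      linarith
    have : s * A = (A - μbar 0) + (F - μ 0) := by rw [h1, h2, h3, h4]
    rw [hμbar0] at this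
    linarith
  -- the series T
  set Y : ℕ → ℝ := fun m => α * (μbar (m+1) + p / α) * s ^ (m+1) with hYdef
  have hY_nonneg : ∀ m, 0 ≤ Y m := by
    intro m
    exact mul_nonneg (mul_nonneg hα.le (add_nonneg (hμbar_nonneg _) (div_nonneg hp hα.le)))
      (pow_nonneg hsge _)
  have hY_summ : Summable Y := by
    refine Summable.of_nonneg_of_le hY_nonneg (fun m => ?_)
      ((hgeom.mul_left (α * (1 + p / α) * s)))
    have h1 : μbar (m+1) + p / α ≤ 1 + p / α := by
      have := hμbar_le_one (m+1); linarith
    calc Y m = α * (μbar (m+1) + p / α) * (s * s ^ m) := by rw [hYdef]; ring_nf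
      _ ≤ α * (1 + p / α) * (s * s ^ m) := by
          refine mul_le_mul_of_nonneg_right ?_ (mul_nonneg hsge (pow_nonneg hsge m))
          exact mul_le_mul_of_nonneg_left h1 hα.le
      _ = α * (1 + p / α) * s * s ^ m := by ring
  set T : ℝ := ∑' m, Y m with hT
  have hT_nonneg : 0 ≤ T := tsum_nonneg hY_nonneg
  -- key identity : ψ s = (1-s) * (α * μ 0 - T)
  have hgeo_shift : Summable (fun m : ℕ => s ^ (m+1)) := (summable_nat_add_iff 1).mpr hgeom
  have hA_shift : Summable (fun k => μbar (k+1) * s ^ (k+1)) :=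
    (summable_nat_add_iff 1).mpr hA_summ
  have hT_split : T = α * (∑' m, μbar (m+1) * s ^ (m+1)) + p * ∑' m : ℕ, s ^ (m+1) := by
    rw [hT, ← tsum_mul_left, ← tsum_mul_left, ← Summable.tsum_add (hA_shift.mul_left α)
      (hgeo_shift.mul_left p)]
    congr 1; funext m
    have hpa : α * (p / α) = p := by field_simp
    simp only [hYdef]
    linear_combination s ^ (m+1) * hpa
  have hAshift_val : (∑' k, μbar (k+1) * s ^ (k+1)) = A - μbar 0 := by
    have := Summable.tsum_eq_zero_add hA_summ
    rw [← hA] at this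
    simp only [pow_zero, mul_one] at this
    linarith
  have hgeo_val : (∑' m : ℕ, s ^ (m+1)) = s * (1 - s)⁻¹ := by
    have := Summable.tsum_eq_zero_add hgeom
    rw [tsum_geometric_of_lt_one hsge hs1] at this
    simp only [pow_zero] at this
    have h2 : s * (1 - s)⁻¹ = (1 - s)⁻¹ - 1 := by
      field_simp
      ring
    linarith
  have hkey : ψ s = (1 - s) * (α * μ 0 - T) := by
    rw [hψ s, ← hF]
    rw [hT_split, hAshift_val, hgeo_val, hμbar0]
    have hss : (1 - s) * (s * (1 - s)⁻¹) = s := by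
      field_simp
    have expand : (1-s) * (α * μ 0 - (α * (A - (1 - μ 0)) + p * (s * (1-s)⁻¹)))
        = α * ((1-s) * μ 0 - (1-s) * A + (1-s) * (1 - μ 0)) - p * ((1-s) * (s * (1-s)⁻¹)) := by
      ring
    rw [expand, hss, htail]
    ring
  have hV_pos : 0 < α * μ 0 - T := by
    by_contra h
    push_neg at h
    nlinarith
  -- nonnegativity of ΔW
  have hΔW_nonneg : ∀ k, 0 ≤ ΔW k := by
    intro k
    induction k using Nat.strong_induction_on with
    | _ k ih =>
      match k with
      | 0 => rw [hΔW0]; positivity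
      | Nat.succ k =>
        rw [hΔW k]
        refine mul_nonneg (by positivity) (Finset.sum_nonneg fun j hj => ?_)
        refine mul_nonneg (ih j (Finset.mem_range.mp hj)) ?_
        have := hμbar_nonneg (k - j + 1)
        positivity
  -- summability of ΔW k * s^k
  set x : ℕ → ℝ := fun k => ΔW k * s ^ k with hxdef
  have hx_nonneg : ∀ k, 0 ≤ x k := fun k => mul_nonneg (hΔW_nonneg k) (pow_nonneg hsge k)
  have hx0 : α * μ 0 * x 0 = 1 := by
    simp only [hxdef, hΔW0, pow_zero, mul_one]
    field_simp
  have hconv : ∀ k, α * μ 0 * x (k+1) = ∑ j ∈ Finset.range (k+1), x j * Y (k - j) := by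
    intro k
    have : ∀ j ∈ Finset.range (k+1), x j * Y (k - j)
        = α * s ^ (k+1) * (ΔW j * (μbar (k - j + 1) + p / α)) := by
      intro j hj
      have hjk : j ≤ k := Nat.lt_succ_iff.mp (Finset.mem_range.mp hj)
      have hpow : s ^ j * s ^ (k - j + 1) = s ^ (k+1) := by
        rw [← pow_add]
        congr 1
        omega
      simp only [hxdef, hYdef]
      calc ΔW j * s ^ j * (α * (μbar (k - j + 1) + p / α) * s ^ (k - j + 1))
          = α * (s ^ j * s ^ (k - j + 1)) * (ΔW j * (μbar (k - j + 1) + p / α)) := by ring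
        _ = α * s ^ (k+1) * (ΔW j * (μbar (k - j + 1) + p / α)) := by rw [hpow]
    rw [Finset.sum_congr rfl this, ← Finset.mul_sum]
    have := hΔW k
    have hsum : ∑ j ∈ Finset.range (k+1), ΔW j * (μbar (k - j + 1) + p / α)
        = μ 0 * ΔW (k+1) := by
      rw [this]; field_simp
      exact Finset.sum_congr rfl (fun _ _ => by ring)
    rw [hsum]
    simp only [hxdef]
    ring
  have hbound : ∀ n, α * μ 0 * (∑ k ∈ Finset.range n, x k) ≤
      1 + T * ∑ k ∈ Finset.range n, x k := by
    intro n
    match n with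
    | 0 => simp
    | Nat.succ m =>
      have h1 : α * μ 0 * (∑ k ∈ Finset.range (m+1), x k)
          = 1 + ∑ k ∈ Finset.range m, ∑ j ∈ Finset.range (k+1), x j * Y (k - j) := by
        rw [Finset.sum_range_succ' x m, mul_add, hx0, Finset.mul_sum]
        rw [add_comm]
        congr 1
        exact Finset.sum_congr rfl (fun k _ => hconv k)
      have hswap : ∑ k ∈ Finset.range m, ∑ j ∈ Finset.range (k+1), x j * Y (k - j)
          = ∑ j ∈ Finset.range m, ∑ k ∈ Finset.Ico j m, x j * Y (k - j) := by
        have h := Finset.sum_Ico_Ico_comm 0 m (fun i j => x i * Y (j - i))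
        simp only [← Finset.range_eq_Ico] at h
        exact h.symm
      have hinner : ∀ j, ∑ k ∈ Finset.Ico j m, x j * Y (k - j) ≤ x j * T := by
        intro j
        rw [← Finset.mul_sum]
        refine mul_le_mul_of_nonneg_left ?_ (hx_nonneg j)
        have : ∑ k ∈ Finset.Ico j m, Y (k - j) = ∑ t ∈ Finset.range (m - j), Y t := by
          rw [Finset.sum_Ico_eq_sum_range]
          exact Finset.sum_congr rfl (fun t _ => by congr 1; omega)
        rw [this, hT]
        exact Summable.sum_le_tsum _ (fun t _ => hY_nonneg t) hY_summ
      calc α * μ 0 * (∑ k ∈ Finset.range (m+1), x k)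
          = 1 + ∑ j ∈ Finset.range m, ∑ k ∈ Finset.Ico j m, x j * Y (k - j) := by
            rw [h1, hswap]
        _ ≤ 1 + ∑ j ∈ Finset.range m, x j * T :=
            add_le_add_right (Finset.sum_le_sum (fun j _ => hinner j)) 1
        _ = 1 + T * ∑ j ∈ Finset.range m, x j := by
            rw [Finset.mul_sum]
            congr 1
            exact Finset.sum_congr rfl (fun i _ => mul_comm _ _)
        _ ≤ 1 + T * ∑ j ∈ Finset.range (m+1), x j := by
            refine add_le_add_right (mul_le_mul_of_nonneg_left ?_ hT_nonneg) 1
            rw [Finset.sum_range_succ]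
            have := hx_nonneg m
            linarith
  have hx_partial : ∀ n, ∑ k ∈ Finset.range n, x k ≤ 1 / (α * μ 0 - T) := by
    intro n
    have h := hbound n
    rw [le_div_iff₀ hV_pos]
    nlinarith [h]
  have hx_summ : Summable x := summable_of_sum_range_le hx_nonneg hx_partial
  -- the series v for ψ s / (1-s)
  set v : ℕ → ℝ := fun m => (if m = 0 then α * μ 0 else -(α * (μbar m + p / α))) * s ^ m
    with hvdef
  have hv_shift : ∀ m : ℕ, v (m+1) = -(Y m) := by
    intro m
    simp only [hvdef, hYdef, Nat.succ_ne_zero, if_false]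
    ring
  have hv_summ : Summable v := by
    rw [← summable_nat_add_iff 1]
    simp only [hv_shift]
    exact hY_summ.neg
  have hv_tsum : ∑' m, v m = α * μ 0 - T := by
    rw [Summable.tsum_eq_zero_add hv_summ]
    simp only [hv_shift]
    rw [tsum_neg]
    simp only [hvdef, if_pos rfl, pow_zero, mul_one, if_true, eq_self_iff_true]
    rw [← hT]
    ring
  -- coefficient identity
  have hcoef : ∀ n, ∑ k ∈ Finset.range (n+1),
      ΔW k * (if n - k = 0 then α * μ 0 else -(α * (μbar (n-k) + p / α)))
      = if n = 0 then 1 else 0 := by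
    intro n
    match n with
    | 0 =>
      norm_num [Finset.sum_range_one, hΔW0]
      field_simp
    | Nat.succ K =>
      rw [Finset.sum_range_succ]
      have hlast : K + 1 - (K + 1) = 0 := by omega
      rw [hlast]
      simp only [if_pos rfl, Nat.succ_ne_zero, if_false]
      have hrest : ∀ k ∈ Finset.range (K+1),
          ΔW k * (if K + 1 - k = 0 then α * μ 0 else -(α * (μbar (K+1-k) + p / α)))
          = -(α * (ΔW k * (μbar (K - k + 1) + p / α))) := by
        intro k hk
        have hkK : k ≤ K := Nat.lt_succ_iff.mp (Finset.mem_range.mp hk)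
        have h1 : K + 1 - k ≠ 0 := by omega
        have h2 : K + 1 - k = K - k + 1 := by omega
        rw [if_neg h1, h2]
        ring
      rw [Finset.sum_congr rfl hrest]
      have := hΔW K
      have hsum : ∑ k ∈ Finset.range (K+1), ΔW k * (μbar (K - k + 1) + p / α)
          = μ 0 * ΔW (K+1) := by
        rw [this]; field_simp
        exact Finset.sum_congr rfl (fun _ _ => by ring)
      rw [Finset.sum_neg_distrib]
      rw [← Finset.mul_sum, hsum]
      simp only [if_true, eq_self_iff_true]
      ring
  -- Cauchy product 1 : (∑' x) * (∑' v) = 1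
  have hx_norm : Summable (fun k => ‖x k‖) := summable_norm_iff.mpr hx_summ
  have hv_norm : Summable (fun m => ‖v m‖) := summable_norm_iff.mpr hv_summ
  have hcauchy1 : (∑' k, x k) * (∑' m, v m) = 1 := by
    rw [tsum_mul_tsum_eq_tsum_sum_range_of_summable_norm hx_norm hv_norm]
    have : ∀ n : ℕ, ∑ k ∈ Finset.range (n+1), x k * v (n - k)
        = if n = 0 then 1 else 0 := by
      intro n
      have h1 : ∀ k ∈ Finset.range (n+1), x k * v (n - k)
          = (ΔW k * (if n - k = 0 then α * μ 0 else -(α * (μbar (n-k) + p / α)))) * s ^ n := by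
        intro k hk
        have hkn : k ≤ n := Nat.lt_succ_iff.mp (Finset.mem_range.mp hk)
        have hpow : s ^ k * s ^ (n - k) = s ^ n := by
          rw [← pow_add]; congr 1; omega
        simp only [hxdef, hvdef]
        calc ΔW k * s ^ k * ((if n - k = 0 then α * μ 0 else -(α * (μbar (n-k) + p / α))) * s ^ (n-k))
            = (ΔW k * (if n - k = 0 then α * μ 0 else -(α * (μbar (n-k) + p / α)))) * (s ^ k * s ^ (n-k)) := by ring
          _ = (ΔW k * (if n - k = 0 then α * μ 0 else -(α * (μbar (n-k) + p / α)))) * s ^ n := by rw [hpow]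
      rw [Finset.sum_congr rfl h1, ← Finset.sum_mul, hcoef n]
      by_cases hn : n = 0
      · subst hn; simp
      · simp [hn]
    rw [tsum_congr this]
    exact tsum_ite_eq 0 1
  -- Cauchy product 2 : ∑' W k s^k = (∑' x) * (1-s)⁻¹
  have hgeo_norm : Summable (fun m : ℕ => ‖s ^ m‖) := summable_norm_iff.mpr hgeom
  have hcauchy2 : (∑' k, x k) * (1 - s)⁻¹ = ∑' n, W n * s ^ n := by
    rw [← tsum_geometric_of_lt_one hsge hs1]
    rw [tsum_mul_tsum_eq_tsum_sum_range_of_summable_norm hx_norm hgeo_norm]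
    congr 1
    funext n
    have h1 : ∀ k ∈ Finset.range (n+1), x k * s ^ (n - k) = ΔW k * s ^ n := by
      intro k hk
      have hkn : k ≤ n := Nat.lt_succ_iff.mp (Finset.mem_range.mp hk)
      have hpow : s ^ k * s ^ (n - k) = s ^ n := by
        rw [← pow_add]; congr 1; omega
      simp only [hxdef]
      rw [mul_assoc, hpow]
    rw [Finset.sum_congr rfl h1, ← Finset.sum_mul, ← hW n]
  -- conclude
  rw [← hcauchy2]
  rw [hv_tsum] at hcauchy1
  have hGx : (∑' k, x k) = (α * μ 0 - T)⁻¹ := by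
    field_simp at hcauchy1 ⊢
    linarith [hcauchy1]
  rw [hGx, hkey]
  rw [one_div, mul_inv]
  ring
end

section
/- The function V : ℕ → [0,∞) defined by V(0) = 1/(α μ(0)) and V(x+1) = 1/(α μ(0)) + (1/μ(0)) Σ_{j=0}^{x} V(j)(μ̄(x − j + 1) + p/α) for x ≥ 0 coincides with W, i.e. V(x) = Σ_{j=0}^{x} ΔW(j) for all x ≥ 0; consequently Σ_{x≥0} V(x) s^x = 1/ψ(s) for all s ∈ [0, s_0). -/
open Set Filter Topology

private lemma tri_swap (f : ℕ → ℕ → ℝ) (N : ℕ) :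
    ∑ k ∈ Finset.range N, ∑ j ∈ Finset.range (k+1), f j k
      = ∑ j ∈ Finset.range N, ∑ k ∈ Finset.Ico j N, f j k := by
  induction N with
  | zero => simp
  | succ N ih =>
    rw [Finset.sum_range_succ _ N, ih,
      Finset.sum_congr rfl (fun j hj => Finset.sum_Ico_succ_top
        (Nat.lt_succ_iff.mp (Finset.mem_range.mp hj)) (f j)),
      Finset.sum_add_distrib, Finset.sum_range_succ (fun j => ∑ k ∈ Finset.Ico j N, f j k) N]
    simp

private lemma tri_swap' (f : ℕ → ℕ → ℝ) (N : ℕ) :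
    ∑ k ∈ Finset.range N, ∑ j ∈ Finset.range k, f j k
      = ∑ j ∈ Finset.range N, ∑ k ∈ Finset.Ico (j+1) N, f j k := by
  induction N with
  | zero => simp
  | succ N ih =>
    rw [Finset.sum_range_succ _ N, ih]
    conv_rhs => rw [Finset.sum_range_succ]
    rw [Finset.sum_congr rfl (fun j hj => Finset.sum_Ico_succ_top
        (Nat.succ_le_of_lt (Finset.mem_range.mp hj)) (f j)),
      Finset.sum_add_distrib]
    simp

private lemma sum_shift_eq (g w : ℕ → ℝ) (N : ℕ) :
    ∑ k ∈ Finset.range N, ∑ j ∈ Finset.range (k+1), w j * g (k - j + 1)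
      = ∑ j ∈ Finset.range N, w j * ∑ m ∈ Finset.range (N - j), g (m+1) := by
  rw [tri_swap]
  refine Finset.sum_congr rfl fun j hj => ?_
  rw [Finset.sum_Ico_eq_sum_range, Finset.mul_sum]
  refine Finset.sum_congr rfl fun m hm => ?_
  congr 2
  omega

private lemma sum_rev_eq (g w : ℕ → ℝ) (n : ℕ) :
    ∑ j ∈ Finset.range (n+1), (∑ i ∈ Finset.range (j+1), w i) * g (n - j + 1)
      = ∑ j ∈ Finset.range (n+1), w j * ∑ m ∈ Finset.range (n + 1 - j), g (m+1) := by
  simp_rw [Finset.sum_mul]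
  rw [tri_swap]
  refine Finset.sum_congr rfl fun i hi => ?_
  rw [Finset.sum_Ico_eq_sum_range, Finset.mul_sum,
    ← Finset.sum_range_reflect (fun m => w i * g (m+1)) (n+1-i)]
  refine Finset.sum_congr rfl fun m hm => ?_
  have h1 := Finset.mem_range.mp hi
  have h2 := Finset.mem_range.mp hm
  congr 2
  omega

set_option maxHeartbeats 1000000 in
theorem stmt_5 (α p : ℝ) (μ : ℕ → ℝ) (ψ : ℝ → ℝ) (s₀ : ℝ)
    (hα : 0 < α) (hp : 0 ≤ p)
    (hμ_nonneg : ∀ j, 0 ≤ μ j) (hμ_sum : ∑' j, μ j = 1)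
    (hμ0 : 0 < μ 0) (hμ1 : μ 1 = 0)
    (hψ : ∀ s : ℝ, ψ s = α * ((∑' j, μ j * s ^ j) - s) - p * s)
    (hs₀ : s₀ = sInf {s : ℝ | 0 < s ∧ ψ s = 0})
    (hs₀_mem : s₀ ∈ Ioc (0:ℝ) 1)
    (hψ_pos : ∀ s ∈ Ico (0:ℝ) s₀, 0 < ψ s)
    (μbar : ℕ → ℝ)
    (hμbar : ∀ k, μbar k = 1 - ∑ j ∈ Finset.range (k+1), μ j)
    (ΔW : ℕ → ℝ)
    (hΔW0 : ΔW 0 = 1 / (α * μ 0))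
    (hΔW : ∀ k, ΔW (k+1) = (1 / μ 0) * ∑ j ∈ Finset.range (k+1), ΔW j * (μbar (k - j + 1) + p / α))
    (W : ℕ → ℝ)
    (hW : ∀ k, W k = ∑ j ∈ Finset.range (k+1), ΔW j)
    (V : ℕ → ℝ)
    (hV0 : V 0 = 1 / (α * μ 0))
    (hV : ∀ x : ℕ, V (x+1) = 1 / (α * μ 0) +
      (1 / μ 0) * ∑ j ∈ Finset.range (x+1), V j * (μbar (x - j + 1) + p / α)) :
    (∀ x : ℕ, V x = ∑ j ∈ Finset.range (x+1), ΔW j) ∧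
      (∀ s ∈ Ico (0:ℝ) s₀, ∑' x, V x * s ^ x = 1 / ψ s) := by
  -- Part 1
  have part1 : ∀ x : ℕ, V x = ∑ j ∈ Finset.range (x+1), ΔW j := by
    intro x
    induction x using Nat.strong_induction_on with
    | _ x ih =>
      match x, ih with
      | 0, _ => rw [hV0]; simp [hΔW0]
      | (n+1), ih =>
        have hIH : ∀ j ∈ Finset.range (n+1), V j * (μbar (n - j + 1) + p/α)
            = (∑ i ∈ Finset.range (j+1), ΔW i) * (μbar (n - j + 1) + p/α) := by
          intro j hj
          rw [ih j (by have := Finset.mem_range.mp hj; omega)]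
        rw [hV n, Finset.sum_congr rfl hIH,
          sum_rev_eq (fun m => μbar m + p/α) ΔW n,
          Finset.sum_range_succ' ΔW (n+1),
          Finset.sum_congr rfl (fun k (_ : k ∈ Finset.range (n+1)) => hΔW k),
          ← Finset.mul_sum, sum_shift_eq (fun m => μbar m + p/α) ΔW (n+1), hΔW0]
        ring
  refine ⟨part1, ?_⟩
  -- Part 2
  intro s hs
  obtain ⟨hs0, hss₀⟩ := hs
  have hs1 : s < 1 := lt_of_lt_of_le hss₀ hs₀_mem.2
  have h1s : (0:ℝ) < 1 - s := by linarith
  -- basic summability facts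
  have hμ_summable : Summable μ := by
    by_contra h
    rw [tsum_eq_zero_of_not_summable h] at hμ_sum
    norm_num at hμ_sum
  have hμ_le_one : ∀ k, μ k ≤ 1 := by
    intro k
    calc μ k ≤ ∑' j, μ j := Summable.le_tsum hμ_summable k (fun j _ => hμ_nonneg j)
    _ = 1 := hμ_sum
  have hμbar_nonneg : ∀ k, 0 ≤ μbar k := by
    intro k
    rw [hμbar]
    have := Summable.sum_le_tsum (Finset.range (k+1)) (fun j _ => hμ_nonneg j) hμ_summable
    rw [hμ_sum] at this
    linarith
  have hμbar_le_one : ∀ k, μbar k ≤ 1 := by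
    intro k
    rw [hμbar]
    have : (0:ℝ) ≤ ∑ j ∈ Finset.range (k+1), μ j :=
      Finset.sum_nonneg fun j _ => hμ_nonneg j
    linarith
  have hpα : 0 ≤ p / α := div_nonneg hp hα.le
  have ha_nonneg : ∀ m, 0 ≤ μbar m + p / α := fun m => add_nonneg (hμbar_nonneg m) hpα
  have hgeo : Summable (fun n : ℕ => s ^ n) := summable_geometric_of_lt_one hs0 hs1
  have hμs_sum : Summable (fun k : ℕ => μ k * s ^ k) := by
    refine Summable.of_nonneg_of_le (fun k => mul_nonneg (hμ_nonneg k) (pow_nonneg hs0 k))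
      (fun k => ?_) hgeo
    calc μ k * s ^ k ≤ 1 * s ^ k := by
          exact mul_le_mul_of_nonneg_right (hμ_le_one k) (pow_nonneg hs0 k)
    _ = s ^ k := one_mul _
  have hM_sum : Summable (fun k : ℕ => μbar k * s ^ k) := by
    refine Summable.of_nonneg_of_le
      (fun k => mul_nonneg (hμbar_nonneg k) (pow_nonneg hs0 k)) (fun k => ?_) hgeo
    calc μbar k * s ^ k ≤ 1 * s ^ k :=
          mul_le_mul_of_nonneg_right (hμbar_le_one k) (pow_nonneg hs0 k)
    _ = s ^ k := one_mul _
  have ha_sum : Summable (fun k : ℕ => (μbar (k+1) + p/α) * s ^ (k+1)) := by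
    refine Summable.of_nonneg_of_le
      (fun k => mul_nonneg (ha_nonneg (k+1)) (pow_nonneg hs0 (k+1))) (fun k => ?_)
      ((hgeo.mul_left (1 + p/α)).comp_injective (add_left_injective 1))
    have := pow_nonneg hs0 (k+1)
    have := hμbar_le_one (k+1)
    have := hμbar_nonneg (k+1)
    simp only [Function.comp]
    nlinarith
  set M : ℝ := ∑' k, μbar k * s ^ k with hMdef
  set A : ℝ := ∑' k, (μbar (k+1) + p/α) * s ^ (k+1) with hAdef
  -- telescoping identity: (1-s) * M = 1 - ∑' μ j s^j
  have hμbar_succ : ∀ k, μbar (k+1) = μbar k - μ (k+1) := by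
    intro k
    rw [hμbar, hμbar, Finset.sum_range_succ]
    ring
  have hshift_sum : Summable (fun k : ℕ => μbar (k+1) * s ^ (k+1)) :=
    (summable_nat_add_iff 1).mpr hM_sum
  have hμshift_sum : Summable (fun k : ℕ => μ (k+1) * s ^ (k+1)) :=
    (summable_nat_add_iff 1).mpr hμs_sum
  have hsM : s * M = ∑' k, μbar k * s ^ (k+1) := by
    rw [hMdef, ← tsum_mul_left]
    refine tsum_congr fun k => ?_
    ring
  have hsM_sum : Summable (fun k : ℕ => μbar k * s ^ (k+1)) := by
    have := hM_sum.mul_left s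
    refine this.congr fun k => ?_
    ring
  have htel : (1 - s) * M = 1 - ∑' j, μ j * s ^ j := by
    have hM0 : M = μbar 0 * s ^ 0 + ∑' k, μbar (k+1) * s ^ (k+1) := Summable.tsum_eq_zero_add hM_sum
    have hf0 : (∑' j, μ j * s ^ j) = μ 0 * s ^ 0 + ∑' k, μ (k+1) * s ^ (k+1) :=
      Summable.tsum_eq_zero_add hμs_sum
    have hdiff : M - s * M = μbar 0 + ∑' k, (μbar (k+1) * s ^ (k+1) - μbar k * s ^ (k+1)) := by
      rw [hsM, Summable.tsum_sub hshift_sum hsM_sum, hM0, pow_zero, mul_one]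
      ring
    have hterm : ∀ k : ℕ, μbar (k+1) * s ^ (k+1) - μbar k * s ^ (k+1)
        = -(μ (k+1) * s ^ (k+1)) := by
      intro k
      rw [hμbar_succ k]
      ring
    have hμbar0 : μbar 0 = 1 - μ 0 := by
      rw [hμbar]
      simp
    rw [show (1-s) * M = M - s * M by ring, hdiff]
    rw [tsum_congr hterm, tsum_neg, hμbar0, hf0, pow_zero, mul_one]
    ring
  -- ψ in product form
  have hgeo1 : (∑' k : ℕ, s ^ (k+1)) = s / (1 - s) := by
    have : (∑' k : ℕ, s ^ (k+1)) = s * ∑' k : ℕ, s ^ k := by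
      rw [← tsum_mul_left]
      exact tsum_congr fun k => by ring
    rw [this, tsum_geometric_of_lt_one hs0 hs1]
    field_simp
  have hgeo1_sum : Summable (fun k : ℕ => s ^ (k+1)) := (summable_nat_add_iff 1).mpr hgeo
  have hA_eq : A = (M - μbar 0) + (p/α) * (s / (1-s)) := by
    rw [hAdef]
    have hsplit : (∑' k, (μbar (k+1) + p/α) * s ^ (k+1))
        = (∑' k, μbar (k+1) * s ^ (k+1)) + ∑' k, (p/α) * s ^ (k+1) := by
      rw [← Summable.tsum_add hshift_sum (hgeo1_sum.mul_left (p/α))]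
      exact tsum_congr fun k => by ring
    rw [hsplit, tsum_mul_left, hgeo1]
    have hM0 : M = μbar 0 * s ^ 0 + ∑' k, μbar (k+1) * s ^ (k+1) := Summable.tsum_eq_zero_add hM_sum
    rw [hM0, pow_zero, mul_one]
    ring
  have hμbar0 : μbar 0 = 1 - μ 0 := by rw [hμbar]; simp
  have hψ_prod : ψ s = α * (1 - s) * (μ 0 - A) := by
    rw [hψ s, hA_eq, hμbar0]
    have hαne : α ≠ 0 := hα.ne'
    have h1sne : (1:ℝ) - s ≠ 0 := h1s.ne'
    field_simp
    nlinarith [htel]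
  have hψs_pos : 0 < ψ s := hψ_pos s ⟨hs0, hss₀⟩
  have hμ0A : 0 < μ 0 - A := by
    rw [hψ_prod] at hψs_pos
    nlinarith [mul_pos hα h1s, hψs_pos]
  -- V is nonnegative
  have hV_nonneg : ∀ x, 0 ≤ V x := by
    intro x
    induction x using Nat.strong_induction_on with
    | _ x ih =>
      match x, ih with
      | 0, _ => rw [hV0]; positivity
      | (n+1), ih =>
        rw [hV n]
        have h1 : (0:ℝ) ≤ 1 / (α * μ 0) := by positivity
        have h2 : (0:ℝ) ≤ ∑ j ∈ Finset.range (n+1), V j * (μbar (n - j + 1) + p / α) := by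
          refine Finset.sum_nonneg fun j hj => mul_nonneg ?_ (ha_nonneg _)
          exact ih j (by have := Finset.mem_range.mp hj; omega)
        have h3 : (0:ℝ) ≤ 1 / μ 0 := by positivity
        nlinarith
  -- key coefficient identity
  have key_id : ∀ n : ℕ, μ 0 * (V n * s ^ n)
      = (1/α) * s ^ n + ∑ j ∈ Finset.range n, (V j * s ^ j) * ((μbar (n-j) + p/α) * s ^ (n-j)) := by
    intro n
    match n with
    | 0 =>
      have hαne : α ≠ 0 := hα.ne'
      have hμ0ne : μ 0 ≠ 0 := hμ0.ne'
      simp only [pow_zero, mul_one, Finset.range_zero, Finset.sum_empty, add_zero, hV0]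
      field_simp
    | (x+1) =>
      have hμ0ne : μ 0 ≠ 0 := hμ0.ne'
      have hαne : α ≠ 0 := hα.ne'
      have hterm : ∀ j ∈ Finset.range (x+1),
          (V j * s ^ j) * ((μbar (x+1-j) + p/α) * s ^ (x+1-j))
            = (V j * (μbar (x - j + 1) + p/α)) * s ^ (x+1) := by
        intro j hj
        have hjx := Finset.mem_range.mp hj
        have h1 : x + 1 - j = x - j + 1 := by omega
        have h2 : s ^ j * s ^ (x+1-j) = s ^ (x+1) := by
          rw [← pow_add]
          congr 1
          omega
        calc V j * s ^ j * ((μbar (x+1-j) + p/α) * s ^ (x+1-j))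
            = (V j * (μbar (x+1-j) + p/α)) * (s ^ j * s ^ (x+1-j)) := by ring
          _ = (V j * (μbar (x - j + 1) + p/α)) * s ^ (x+1) := by rw [h2, h1]
      rw [Finset.sum_congr rfl hterm, ← Finset.sum_mul, hV x]
      have h1 : μ 0 * (1/(α * μ 0)) = 1/α := by field_simp
      have h2 : μ 0 * (1/μ 0) = 1 := by field_simp
      set S := ∑ j ∈ Finset.range (x+1), V j * (μbar (x - j + 1) + p/α) with hS
      linear_combination (s^(x+1)) * h1 + (S * s^(x+1)) * h2
  -- bound on partial sums
  have hA_partial : ∀ L : ℕ, ∑ m ∈ Finset.range L, (μbar (m+1) + p/α) * s ^ (m+1) ≤ A := by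
    intro L
    exact Summable.sum_le_tsum (Finset.range L)
      (fun m _ => mul_nonneg (ha_nonneg _) (pow_nonneg hs0 _)) ha_sum
  have hbound : ∀ N : ℕ, ∑ n ∈ Finset.range N, V n * s ^ n ≤ (1/(α*(1-s))) / (μ 0 - A) := by
    intro N
    set P := ∑ n ∈ Finset.range N, V n * s ^ n with hP
    have hP_nonneg : 0 ≤ P :=
      Finset.sum_nonneg fun n _ => mul_nonneg (hV_nonneg n) (pow_nonneg hs0 n)
    have hsum_id : μ 0 * P = (1/α) * ∑ n ∈ Finset.range N, s ^ n
        + ∑ n ∈ Finset.range N, ∑ j ∈ Finset.range n,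
            (V j * s ^ j) * ((μbar (n-j) + p/α) * s ^ (n-j)) := by
      rw [hP, Finset.mul_sum, Finset.sum_congr rfl (fun n _ => key_id n),
        Finset.sum_add_distrib, Finset.mul_sum]
    have hD : ∑ n ∈ Finset.range N, ∑ j ∈ Finset.range n,
        (V j * s ^ j) * ((μbar (n-j) + p/α) * s ^ (n-j)) ≤ A * P := by
      rw [tri_swap']
      have hinner : ∀ j ∈ Finset.range N,
          ∑ n ∈ Finset.Ico (j+1) N, (V j * s ^ j) * ((μbar (n-j) + p/α) * s ^ (n-j))
            ≤ (V j * s ^ j) * A := by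
        intro j hj
        rw [Finset.sum_Ico_eq_sum_range]
        have hrw : ∀ m ∈ Finset.range (N - (j+1)),
            (V j * s ^ j) * ((μbar ((j+1+m)-j) + p/α) * s ^ ((j+1+m)-j))
              = (V j * s ^ j) * ((μbar (m+1) + p/α) * s ^ (m+1)) := by
          intro m hm
          have he : j + 1 + m - j = m + 1 := by omega
          rw [he]
        rw [Finset.sum_congr rfl hrw, ← Finset.mul_sum]
        refine mul_le_mul_of_nonneg_left (hA_partial _) ?_
        exact mul_nonneg (hV_nonneg j) (pow_nonneg hs0 j)
      calc ∑ j ∈ Finset.range N, ∑ n ∈ Finset.Ico (j+1) N,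
            (V j * s ^ j) * ((μbar (n-j) + p/α) * s ^ (n-j))
          ≤ ∑ j ∈ Finset.range N, (V j * s ^ j) * A := Finset.sum_le_sum hinner
        _ = A * P := by rw [hP, Finset.mul_sum]; exact Finset.sum_congr rfl fun j _ => by ring
    have hgeoN : ∑ n ∈ Finset.range N, s ^ n ≤ (1 - s)⁻¹ := by
      have := Summable.sum_le_tsum (Finset.range N) (fun n _ => pow_nonneg hs0 n) hgeo
      rwa [tsum_geometric_of_lt_one hs0 hs1] at this
    have h4 : μ 0 * P ≤ 1/(α*(1-s)) + A * P := by
      have h5 : (1/α) * ∑ n ∈ Finset.range N, s ^ n ≤ 1/(α*(1-s)) := by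
        have : (1/α) * ∑ n ∈ Finset.range N, s ^ n ≤ (1/α) * (1-s)⁻¹ :=
          mul_le_mul_of_nonneg_left hgeoN (by positivity)
        calc (1/α) * ∑ n ∈ Finset.range N, s ^ n ≤ (1/α) * (1-s)⁻¹ := this
          _ = 1/(α*(1-s)) := by field_simp
      linarith [hsum_id, hD]
    rw [le_div_iff₀ hμ0A]
    nlinarith
  have hVs_sum : Summable (fun n : ℕ => V n * s ^ n) :=
    summable_of_sum_range_le (fun n => mul_nonneg (hV_nonneg n) (pow_nonneg hs0 n)) hbound
  -- Cauchy product
  set c : ℕ → ℝ := fun n => if n = 0 then -(μ 0) else (μbar n + p/α) * s ^ n with hc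
  have hc_shift : (fun k : ℕ => c (k+1)) = fun k => (μbar (k+1) + p/α) * s ^ (k+1) := by
    funext k
    simp [hc]
  have hc_sum : Summable c := by
    rw [← summable_nat_add_iff 1, hc_shift]
    exact ha_sum
  have hc_tsum : ∑' n, c n = A - μ 0 := by
    rw [Summable.tsum_eq_zero_add hc_sum, hc_shift]
    simp [hc, hAdef]
    ring
  have hVs_norm : Summable (fun n : ℕ => ‖V n * s ^ n‖) := by
    refine hVs_sum.congr fun n => ?_
    rw [Real.norm_eq_abs, abs_of_nonneg (mul_nonneg (hV_nonneg n) (pow_nonneg hs0 n))]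
  have hc_norm : Summable (fun n : ℕ => ‖c n‖) := by
    have : Summable (fun n : ℕ => |c n|) := hc_sum.abs
    exact this.congr fun n => (Real.norm_eq_abs _).symm
  have hprod := tsum_mul_tsum_eq_tsum_sum_range_of_summable_norm hVs_norm hc_norm
  have hcauchy : ∀ n : ℕ, ∑ k ∈ Finset.range (n+1), (V k * s ^ k) * c (n - k)
      = -((1/α) * s ^ n) := by
    intro n
    rw [Finset.sum_range_succ]
    have hlast : (V n * s ^ n) * c (n - n) = -(μ 0 * (V n * s ^ n)) := by
      simp [hc]
      ring
    have hrest : ∀ k ∈ Finset.range n, (V k * s ^ k) * c (n - k)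
        = (V k * s ^ k) * ((μbar (n-k) + p/α) * s ^ (n-k)) := by
      intro k hk
      have : n - k ≠ 0 := by have := Finset.mem_range.mp hk; omega
      simp [hc, this]
    rw [Finset.sum_congr rfl hrest, hlast, key_id n]
    ring
  rw [hc_tsum] at hprod
  have hFneg : (∑' n, V n * s ^ n) * (A - μ 0) = -(1/(α * (1-s))) := by
    rw [hprod, tsum_congr hcauchy, tsum_neg, tsum_mul_left,
      tsum_geometric_of_lt_one hs0 hs1]
    field_simp
  -- conclude
  have hψne : ψ s ≠ 0 := hψs_pos.ne'
  rw [eq_div_iff hψne, hψ_prod]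
  have : (∑' n, V n * s ^ n) * (μ 0 - A) = 1/(α * (1-s)) := by linarith [hFneg]
  calc (∑' x, V x * s ^ x) * (α * (1-s) * (μ 0 - A))
      = (α * (1-s)) * ((∑' n, V n * s ^ n) * (μ 0 - A)) := by ring
    _ = (α * (1-s)) * (1/(α*(1-s))) := by rw [this]
    _ = 1 := by field_simp
end

section
/- For all s ∈ [0, s_0), the generating function of κ satisfies Σ_{k≥0} κ(k) s^k = φ(s)/ψ(s). -/
open Set Filter Topology

private lemma aux_swap (F : ℕ → ℕ → ℝ) (n : ℕ) :
    ∑ k ∈ Finset.range n, ∑ j ∈ Finset.range (k+1), F k j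
      = ∑ j ∈ Finset.range n, ∑ k ∈ Finset.Ico j n, F k j := by
  induction n with
  | zero => simp
  | succ m ih =>
    rw [Finset.sum_range_succ, ih]
    have h1 : ∀ j ∈ Finset.range (m+1), ∑ k ∈ Finset.Ico j (m+1), F k j
        = ∑ k ∈ Finset.Ico j m, F k j + F m j := fun j hj =>
      Finset.sum_Ico_succ_top (Nat.lt_succ_iff.mp (Finset.mem_range.mp hj)) _
    rw [Finset.sum_congr rfl h1, Finset.sum_add_distrib,
      Finset.sum_range_succ (fun j => ∑ k ∈ Finset.Ico j m, F k j)]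
    simp

private lemma aux_summable {w : ℕ → ℝ} (hw : ∀ j, 0 ≤ w j) (hws : ∑' j, w j = 1) :
    Summable w := by
  by_contra h
  rw [tsum_eq_zero_of_not_summable h] at hws
  norm_num at hws

private lemma aux_tail {w : ℕ → ℝ} (hw : ∀ j, 0 ≤ w j) (hws : ∑' j, w j = 1)
    {wbar : ℕ → ℝ} (hwbar : ∀ k, wbar k = 1 - ∑ j ∈ Finset.range (k+1), w j)
    {s : ℝ} (h0 : 0 ≤ s) (h1 : s < 1) :
    (∀ k, 0 ≤ wbar k ∧ wbar k ≤ 1) ∧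
    Summable (fun k => wbar k * s^k) ∧ Summable (fun j => w j * s^j) ∧
    (1 - s) * (∑' k, wbar k * s^k) = 1 - ∑' j, w j * s^j := by
  have hsw : Summable w := aux_summable hw hws
  have hb : ∀ k, 0 ≤ wbar k ∧ wbar k ≤ 1 := by
    intro k
    constructor
    · rw [hwbar k]
      have := Summable.sum_le_tsum (Finset.range (k+1)) (fun i _ => hw i) hsw
      rw [hws] at this; linarith
    · rw [hwbar k]
      have : (0:ℝ) ≤ ∑ j ∈ Finset.range (k+1), w j :=
        Finset.sum_nonneg fun i _ => hw i
      linarith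
  have hsgeo : Summable (fun k : ℕ => s ^ k) := summable_geometric_of_lt_one h0 h1
  have hsum1 : Summable (fun k => wbar k * s ^ k) := by
    apply Summable.of_nonneg_of_le (fun k => mul_nonneg (hb k).1 (pow_nonneg h0 k))
      (fun k => ?_) hsgeo
    calc wbar k * s ^ k ≤ 1 * s ^ k := by
          exact mul_le_mul_of_nonneg_right (hb k).2 (pow_nonneg h0 k)
      _ = s ^ k := one_mul _
  have hsum2 : Summable (fun j => w j * s ^ j) := by
    apply Summable.of_nonneg_of_le (fun j => mul_nonneg (hw j) (pow_nonneg h0 j))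
      (fun j => ?_) hsw
    calc w j * s ^ j ≤ w j * 1 :=
          mul_le_mul_of_nonneg_left (pow_le_one₀ h0 h1.le) (hw j)
      _ = w j := mul_one _
  refine ⟨hb, hsum1, hsum2, ?_⟩
  have hsum1' : Summable (fun k => wbar (k+1) * s ^ (k+1)) :=
    (summable_nat_add_iff (f := fun k => wbar k * s ^ k) 1).mpr hsum1
  have hsum2' : Summable (fun k => w (k+1) * s ^ (k+1)) :=
    (summable_nat_add_iff (f := fun k => w k * s ^ k) 1).mpr hsum2
  have hshift : ∑' k, wbar k * s ^ k = wbar 0 + ∑' k, wbar (k+1) * s ^ (k+1) := by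
    rw [Summable.tsum_eq_zero_add hsum1]; simp
  have hshift2 : ∑' j, w j * s ^ j = w 0 + ∑' k, w (k+1) * s ^ (k+1) := by
    rw [Summable.tsum_eq_zero_add hsum2]; simp
  have hmul : s * ∑' k, wbar k * s ^ k = ∑' k, wbar k * s ^ (k+1) := by
    rw [← tsum_mul_left]
    exact tsum_congr fun k => by ring
  have hdiff : wbar 0 = 1 - w 0 := by rw [hwbar 0]; simp
  have hstep : ∀ k, wbar (k+1) = wbar k - w (k+1) := by
    intro k
    rw [hwbar (k+1), hwbar k, Finset.sum_range_succ]
    ring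
  have key : (∑' k, wbar (k+1) * s ^ (k+1)) - ∑' k, wbar k * s ^ (k+1)
      = - ∑' k, w (k+1) * s ^ (k+1) := by
    rw [← Summable.tsum_sub hsum1' ((hsum1.mul_right s).congr
      (fun k => by ring : ∀ k, wbar k * s ^ k * s = wbar k * s ^ (k+1))), ← tsum_neg]
    exact tsum_congr fun k => by rw [hstep k]; ring
  have hexp : (1 - s) * (∑' k, wbar k * s ^ k)
      = (∑' k, wbar k * s ^ k) - s * (∑' k, wbar k * s ^ k) := by ring
  linarith [hexp, hmul, hshift, hshift2, key, hdiff]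

theorem stmt_6 (α p : ℝ) (μ : ℕ → ℝ) (ψ : ℝ → ℝ) (s₀ : ℝ)
    (hα : 0 < α) (hp : 0 ≤ p)
    (hμ_nonneg : ∀ j, 0 ≤ μ j) (hμ_sum : ∑' j, μ j = 1)
    (hμ0 : 0 < μ 0) (hμ1 : μ 1 = 0)
    (hψ : ∀ s : ℝ, ψ s = α * ((∑' j, μ j * s ^ j) - s) - p * s)
    (hs₀ : s₀ = sInf {s : ℝ | 0 < s ∧ ψ s = 0})
    (hs₀_mem : s₀ ∈ Ioc (0:ℝ) 1)
    (hψ_pos : ∀ s ∈ Ico (0:ℝ) s₀, 0 < ψ s)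
    (β q : ℝ) (ν : ℕ → ℝ) (φ : ℝ → ℝ)
    (hβ : 0 ≤ β) (hq : 0 ≤ q)
    (hν_nonneg : ∀ j, 0 ≤ ν j) (hν0 : ν 0 = 0) (hν_sum : ∑' j, ν j = 1)
    (hφ : ∀ s : ℝ, φ s = β * (1 - ∑' j, ν j * s ^ j) + q)
    (νbar : ℕ → ℝ)
    (hνbar : ∀ k, νbar k = 1 - ∑ j ∈ Finset.range (k+1), ν j)
    (μbar : ℕ → ℝ)
    (hμbar : ∀ k, μbar k = 1 - ∑ j ∈ Finset.range (k+1), μ j)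
    (ΔW : ℕ → ℝ)
    (hΔW0 : ΔW 0 = 1 / (α * μ 0))
    (hΔW : ∀ k, ΔW (k+1) = (1 / μ 0) * ∑ j ∈ Finset.range (k+1), ΔW j * (μbar (k - j + 1) + p / α))
    (W : ℕ → ℝ)
    (hW : ∀ k, W k = ∑ j ∈ Finset.range (k+1), ΔW j)
    (κ : ℕ → ℝ)
    (hκ : ∀ k, κ k = β * (∑ y ∈ Finset.range (k+1), ΔW (k - y) * νbar y) + q * W k) :
    ∀ s ∈ Ico (0:ℝ) s₀, ∑' k, κ k * s ^ k = φ s / ψ s := by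
  intro s hs
  obtain ⟨hs0, hss⟩ := hs
  have hs1 : s < 1 := lt_of_lt_of_le hss hs₀_mem.2
  have hψs : 0 < ψ s := hψ_pos s ⟨hs0, hss⟩
  have h1s : (0:ℝ) < 1 - s := by linarith
  have hinv : (1 - s) * (1 - s)⁻¹ = 1 := mul_inv_cancel₀ (ne_of_gt h1s)
  obtain ⟨hμb_bd, hμb_sum, hfμ_sum, hμb_eq⟩ := aux_tail hμ_nonneg hμ_sum hμbar hs0 hs1
  obtain ⟨hνb_bd, hνb_sum, hfν_sum, hνb_eq⟩ := aux_tail hν_nonneg hν_sum hνbar hs0 hs1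
  -- ΔW is nonnegative
  have hΔW_nn : ∀ k, 0 ≤ ΔW k := by
    intro k
    induction k using Nat.strong_induction_on with
    | _ k ih =>
      match k with
      | 0 =>
        rw [hΔW0]; positivity
      | (m+1) =>
        rw [hΔW m]
        apply mul_nonneg (by positivity)
        apply Finset.sum_nonneg
        intro j hj
        apply mul_nonneg (ih j (Finset.mem_range.mp hj))
        exact add_nonneg (hμb_bd (m - j + 1)).1 (div_nonneg hp hα.le)
  -- the sequence b
  set b : ℕ → ℝ := fun i => if i = 0 then 0 else (α * μbar i + p) * s ^ i with hb
  have hb0 : b 0 = 0 := by simp [hb]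
  have hbsucc : ∀ i, b (i+1) = (α * μbar (i+1) + p) * s ^ (i+1) := fun i => by simp [hb]
  have hb_nn : ∀ i, 0 ≤ b i := by
    intro i
    match i with
    | 0 => rw [hb0]
    | (m+1) =>
      rw [hbsucc]
      have := (hμb_bd (m+1)).1
      positivity
  have hb_le : ∀ i, b i ≤ (α + p) * s ^ i := by
    intro i
    match i with
    | 0 => rw [hb0]; positivity
    | (m+1) =>
      rw [hbsucc]
      apply mul_le_mul_of_nonneg_right _ (pow_nonneg hs0 _)
      have h1 := (hμb_bd (m+1)).2
      nlinarith
  have hb_sum : Summable b :=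
    Summable.of_nonneg_of_le hb_nn hb_le
      ((summable_geometric_of_lt_one hs0 hs1).mul_left (α + p))
  have hb_sum' : Summable (fun i => b (i+1)) :=
    (summable_nat_add_iff (f := b) 1).mpr hb_sum
  have hg' : ∑' i, b (i+1) = ∑' i, b i := by
    rw [Summable.tsum_eq_zero_add hb_sum, hb0, zero_add]
  -- the sequence u
  set u : ℕ → ℝ := fun k => ΔW k * s ^ k with hu
  have hu_nn : ∀ k, 0 ≤ u k := fun k => mul_nonneg (hΔW_nn k) (pow_nonneg hs0 k)
  have hu0 : u 0 = ΔW 0 := by simp [hu]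
  have hαμ0 : (0:ℝ) < α * μ 0 := mul_pos hα hμ0
  have hu0' : α * μ 0 * u 0 = 1 := by
    rw [hu0, hΔW0]; field_simp
  -- the recursion in convolution form
  have hrec : ∀ k, ∑ j ∈ Finset.range (k+1), u j * b (k+1-j) = α * μ 0 * u (k+1) := by
    intro k
    have hterm : ∀ j ∈ Finset.range (k+1),
        u j * b (k+1-j) = ΔW j * (α * μbar (k-j+1) + p) * s ^ (k+1) := by
      intro j hj
      have hjk : j ≤ k := Nat.lt_succ_iff.mp (Finset.mem_range.mp hj)
      have h1 : k+1-j = (k-j)+1 := by omega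
      have h2 : s ^ j * s ^ ((k-j)+1) = s ^ (k+1) := by
        rw [← pow_add]; congr 1; omega
      rw [h1, hbsucc (k-j), hu]
      calc ΔW j * s ^ j * ((α * μbar (k-j+1) + p) * s ^ ((k-j)+1))
          = ΔW j * (α * μbar (k-j+1) + p) * (s ^ j * s ^ ((k-j)+1)) := by ring
        _ = ΔW j * (α * μbar (k-j+1) + p) * s ^ (k+1) := by rw [h2]
    rw [Finset.sum_congr rfl hterm, hu]
    show _ = α * μ 0 * (ΔW (k+1) * s ^ (k+1))
    rw [hΔW k, Finset.mul_sum, Finset.sum_mul, Finset.mul_sum]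
    apply Finset.sum_congr rfl
    intro j _
    field_simp
  -- value of the generating function of b, and relation to ψ
  have hHμ' : ∑' i, μbar (i+1) * s ^ (i+1) = (∑' k, μbar k * s ^ k) - μbar 0 := by
    have h := Summable.tsum_eq_zero_add hμb_sum
    rw [pow_zero, mul_one] at h
    linarith
  have hg_eq : ∑' i, b i = α * ((∑' k, μbar k * s ^ k) - μbar 0) + p * s * (1 - s)⁻¹ := by
    rw [← hg']
    have h2 : ∀ i : ℕ, b (i+1) = α * (μbar (i+1) * s ^ (i+1)) + (p*s) * s ^ i := by
      intro i; rw [hbsucc]; ring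
    have hS1 : Summable (fun i => α * (μbar (i+1) * s ^ (i+1))) :=
      ((summable_nat_add_iff (f := fun k => μbar k * s ^ k) 1).mpr hμb_sum).mul_left α
    have hS2 : Summable (fun i : ℕ => (p*s) * s ^ i) :=
      (summable_geometric_of_lt_one hs0 hs1).mul_left (p*s)
    rw [tsum_congr h2, Summable.tsum_add hS1 hS2, tsum_mul_left, tsum_mul_left,
      tsum_geometric_of_lt_one hs0 hs1, hHμ']
  have hμbar0 : μbar 0 = 1 - μ 0 := by rw [hμbar 0]; simp
  have hDψ : (1 - s) * (α * μ 0 - ∑' i, b i) = ψ s := by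
    rw [hg_eq, hψ s]
    linear_combination (-(p*s)) * hinv + (-α) * hμb_eq + (α*(1-s)) * hμbar0
  have hDpos : 0 < α * μ 0 - ∑' i, b i := by
    rcases le_or_gt (α * μ 0 - ∑' i, b i) 0 with h | h
    · nlinarith [mul_nonneg h1s.le (neg_nonneg.mpr h)]
    · exact h
  -- partial sums of u are bounded
  have hbound : ∀ n, (α * μ 0 - ∑' i, b i) * (∑ k ∈ Finset.range n, u k) ≤ 1 := by
    intro n
    match n with
    | 0 => simp
    | (m+1) =>
      have hsplit : ∑ k ∈ Finset.range (m+1), u k = (∑ k ∈ Finset.range m, u (k+1)) + u 0 :=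
        Finset.sum_range_succ' u m
      have hg_nn : 0 ≤ ∑' i, b i := tsum_nonneg hb_nn
      have step1 : α * μ 0 * (∑ k ∈ Finset.range m, u (k+1))
          = ∑ j ∈ Finset.range m, ∑ k ∈ Finset.Ico j m, u j * b (k+1-j) := by
        rw [← aux_swap (fun k j => u j * b (k+1-j)) m, Finset.mul_sum]
        exact Finset.sum_congr rfl fun k _ => (hrec k).symm
      have step2 : ∀ j ∈ Finset.range m,
          ∑ k ∈ Finset.Ico j m, u j * b (k+1-j) ≤ u j * ∑' i, b i := by
        intro j hj
        rw [← Finset.mul_sum]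
        apply mul_le_mul_of_nonneg_left _ (hu_nn j)
        have hre : ∑ k ∈ Finset.Ico j m, b (k+1-j) = ∑ i ∈ Finset.range (m-j), b (i+1) := by
          rw [Finset.sum_Ico_eq_sum_range]
          exact Finset.sum_congr rfl fun i _ => by congr 1; omega
        rw [hre, ← hg']
        exact Summable.sum_le_tsum (Finset.range (m-j)) (fun i _ => hb_nn _) hb_sum'
      have step3 : α * μ 0 * (∑ k ∈ Finset.range m, u (k+1))
          ≤ (∑' i, b i) * ∑ k ∈ Finset.range (m+1), u k := by
        rw [step1]
        calc ∑ j ∈ Finset.range m, ∑ k ∈ Finset.Ico j m, u j * b (k+1-j)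
            ≤ ∑ j ∈ Finset.range m, u j * ∑' i, b i := Finset.sum_le_sum step2
          _ = (∑' i, b i) * ∑ j ∈ Finset.range m, u j := by rw [← Finset.sum_mul]; ring
          _ ≤ (∑' i, b i) * ∑ j ∈ Finset.range (m+1), u j := by
              apply mul_le_mul_of_nonneg_left _ hg_nn
              rw [Finset.sum_range_succ]
              linarith [hu_nn m]
      have e : α * μ 0 * (∑ k ∈ Finset.range (m+1), u k)
          = α * μ 0 * (∑ k ∈ Finset.range m, u (k+1)) + 1 := by
        rw [hsplit, mul_add, hu0']
      calc (α * μ 0 - ∑' i, b i) * (∑ k ∈ Finset.range (m+1), u k)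
          = α * μ 0 * (∑ k ∈ Finset.range (m+1), u k)
            - (∑' i, b i) * (∑ k ∈ Finset.range (m+1), u k) := by ring
        _ ≤ 1 := by linarith only [step3, e]
  have hu_sum : Summable u := by
    apply summable_of_sum_range_le hu_nn (c := 1 / (α * μ 0 - ∑' i, b i))
    intro n
    rw [le_div_iff₀ hDpos]
    linarith only [hbound n, hDpos]
  -- Cauchy product identities
  have hu_norm : Summable (fun k => ‖u k‖) := by
    simp only [Real.norm_eq_abs]; exact hu_sum.abs
  have hb_norm : Summable (fun i => ‖b i‖) := by
    simp only [Real.norm_eq_abs]; exact hb_sum.abs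
  have hconv_sum : Summable (fun n => ∑ k ∈ Finset.range (n+1), u k * b (n-k)) :=
    (summable_norm_sum_mul_range_of_summable_norm hu_norm hb_norm).of_norm
  have hcauchy := tsum_mul_tsum_eq_tsum_sum_range_of_summable_norm hu_norm hb_norm
  have hconvsucc : ∀ m : ℕ, ∑ k ∈ Finset.range (m+1+1), u k * b (m+1-k) = α * μ 0 * u (m+1) := by
    intro m
    rw [Finset.sum_range_succ]
    have h0 : m + 1 - (m+1) = 0 := by omega
    rw [h0, hb0, mul_zero, add_zero]
    exact hrec m
  have hTg : (∑' k, u k) * (∑' i, b i) = α * μ 0 * ((∑' k, u k) - u 0) := by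
    rw [hcauchy, Summable.tsum_eq_zero_add hconv_sum]
    have h00 : ∑ k ∈ Finset.range (0+1), u k * b (0-k) = 0 := by simp [hb0]
    rw [h00, zero_add, tsum_congr hconvsucc, tsum_mul_left]
    congr 1
    have h := Summable.tsum_eq_zero_add hu_sum
    linarith only [h]
  have hψT : ψ s * (∑' k, u k) = 1 - s := by
    have h1 : (α * μ 0 - ∑' i, b i) * (∑' k, u k) = 1 := by
      linarith only [hTg, hu0']
    calc ψ s * (∑' k, u k)
        = ((1-s) * (α * μ 0 - ∑' i, b i)) * (∑' k, u k) := by rw [hDψ]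
      _ = (1-s) * ((α * μ 0 - ∑' i, b i) * (∑' k, u k)) := by ring
      _ = 1 - s := by rw [h1, mul_one]
  -- W generating function
  have hgeo_norm : Summable (fun i : ℕ => ‖s ^ i‖) := by
    simp only [Real.norm_eq_abs]
    exact (summable_geometric_of_lt_one hs0 hs1).abs
  have hWconv : ∀ n, ∑ k ∈ Finset.range (n+1), u k * s ^ (n-k) = W n * s ^ n := by
    intro n
    rw [hW n, Finset.sum_mul]
    apply Finset.sum_congr rfl
    intro k hk
    have hkn : k ≤ n := Nat.lt_succ_iff.mp (Finset.mem_range.mp hk)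
    rw [hu]
    show ΔW k * s ^ k * s ^ (n-k) = ΔW k * s ^ n
    rw [mul_assoc, ← pow_add]
    congr 2
    omega
  have hWsum : Summable (fun n => W n * s ^ n) :=
    ((summable_norm_sum_mul_range_of_summable_norm hu_norm hgeo_norm).of_norm).congr hWconv
  have hWval : ∑' n, W n * s ^ n = (∑' k, u k) * (1 - s)⁻¹ := by
    have h := tsum_mul_tsum_eq_tsum_sum_range_of_summable_norm hu_norm hgeo_norm
    rw [tsum_geometric_of_lt_one hs0 hs1] at h
    exact (tsum_congr hWconv).symm.trans h.symm
  -- generating function of the ν-convolution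
  have hvb_norm : Summable (fun k => ‖νbar k * s ^ k‖) := by
    simp only [Real.norm_eq_abs]; exact hνb_sum.abs
  have hcconv : ∀ n, ∑ k ∈ Finset.range (n+1), (νbar k * s ^ k) * u (n-k)
      = (∑ y ∈ Finset.range (n+1), ΔW (n-y) * νbar y) * s ^ n := by
    intro n
    rw [Finset.sum_mul]
    apply Finset.sum_congr rfl
    intro k hk
    have hkn : k ≤ n := Nat.lt_succ_iff.mp (Finset.mem_range.mp hk)
    rw [hu]
    show νbar k * s ^ k * (ΔW (n-k) * s ^ (n-k)) = ΔW (n-k) * νbar k * s ^ n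
    have hpow : s ^ k * s ^ (n-k) = s ^ n := by rw [← pow_add]; congr 1; omega
    calc νbar k * s ^ k * (ΔW (n-k) * s ^ (n-k))
        = ΔW (n-k) * νbar k * (s ^ k * s ^ (n-k)) := by ring
      _ = ΔW (n-k) * νbar k * s ^ n := by rw [hpow]
  have hcsum : Summable (fun n => (∑ y ∈ Finset.range (n+1), ΔW (n-y) * νbar y) * s ^ n) :=
    ((summable_norm_sum_mul_range_of_summable_norm hvb_norm hu_norm).of_norm).congr hcconv
  have hcval : ∑' n, (∑ y ∈ Finset.range (n+1), ΔW (n-y) * νbar y) * s ^ n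
      = (∑' k, νbar k * s ^ k) * (∑' k, u k) := by
    have h := tsum_mul_tsum_eq_tsum_sum_range_of_summable_norm hvb_norm hu_norm
    exact (tsum_congr hcconv).symm.trans h.symm
  -- final computation
  have hκconv : ∀ k, κ k * s ^ k
      = β * ((∑ y ∈ Finset.range (k+1), ΔW (k-y) * νbar y) * s ^ k) + q * (W k * s ^ k) := by
    intro k; rw [hκ k]; ring
  rw [tsum_congr hκconv, Summable.tsum_add (hcsum.mul_left β) (hWsum.mul_left q), tsum_mul_left,
    tsum_mul_left, hcval, hWval, eq_div_iff (ne_of_gt hψs), hφ s]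
  linear_combination (β * (∑' k, νbar k * s ^ k) + q * (1-s)⁻¹) * hψT + β * hνb_eq + q * hinv
end

section
/- For all s ∈ [0, s_0), the generating function of π satisfies Σ_{k≥0} π(k) s^k = exp(∫_0^s φ(u)/ψ(u) du). -/
open Set Filter Topology


/-- Cauchy product for nonnegative summable real sequences. -/
lemma cauchy_nonneg {a b : ℕ → ℝ} (ha : ∀ n, 0 ≤ a n) (hb : ∀ n, 0 ≤ b n)
    (hsa : Summable a) (hsb : Summable b) :
    Summable (fun n => ∑ j ∈ Finset.range (n+1), a (n - j) * b j) ∧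
      (∑' n, ∑ j ∈ Finset.range (n+1), a (n - j) * b j) = (∑' n, a n) * (∑' n, b n) := by
  have hna : Summable fun n => ‖a n‖ := by
    simpa only [Real.norm_eq_abs] using hsa.abs
  have hnb : Summable fun n => ‖b n‖ := by
    simpa only [Real.norm_eq_abs] using hsb.abs
  have hre : ∀ n, ∑ j ∈ Finset.range (n+1), a (n - j) * b j
      = ∑ k ∈ Finset.range (n+1), a k * b (n - k) := by
    intro n
    rw [← Finset.sum_range_reflect (fun k => a k * b (n - k)) (n+1)]
    refine Finset.sum_congr rfl fun j hj => ?_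
    have hj' : j ≤ n := by simpa [Nat.lt_succ_iff] using hj
    have h1 : n + 1 - 1 - j = n - j := by omega
    have h2 : n - (n - j) = j := by omega
    rw [h1, h2]
  constructor
  · refine Summable.of_norm ?_
    have := summable_norm_sum_mul_range_of_summable_norm hna hnb
    refine this.congr fun n => ?_
    rw [hre]
  · rw [tsum_congr hre, ← tsum_mul_tsum_eq_tsum_sum_range_of_summable_norm hna hnb]

/-- Partial sums of a convolution are bounded by products of partial sums. -/
lemma conv_partial_le {a b : ℕ → ℝ} (ha : ∀ n, 0 ≤ a n) (hb : ∀ n, 0 ≤ b n) (n : ℕ) :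
    ∑ k ∈ Finset.range n, ∑ j ∈ Finset.range (k+1), a (k - j) * b j
      ≤ (∑ k ∈ Finset.range n, a k) * (∑ k ∈ Finset.range n, b k) := by
  have hre : ∀ k, ∑ j ∈ Finset.range (k+1), a (k - j) * b j
      = ∑ ij ∈ Finset.HasAntidiagonal.antidiagonal k, a ij.2 * b ij.1 := by
    intro k
    rw [Finset.Nat.sum_antidiagonal_eq_sum_range_succ_mk]
  calc ∑ k ∈ Finset.range n, ∑ j ∈ Finset.range (k+1), a (k - j) * b j
      = ∑ k ∈ Finset.range n, ∑ ij ∈ Finset.HasAntidiagonal.antidiagonal k, a ij.2 * b ij.1 := by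
        exact Finset.sum_congr rfl fun k _ => hre k
    _ = ∑ ij ∈ (Finset.range n).biUnion Finset.HasAntidiagonal.antidiagonal, a ij.2 * b ij.1 := by
        rw [Finset.sum_biUnion]
        intro x _ y _ hxy
        refine Finset.disjoint_left.2 fun p hp hp' => hxy ?_
        rw [Finset.HasAntidiagonal.mem_antidiagonal] at hp hp'
        omega
    _ ≤ ∑ ij ∈ Finset.range n ×ˢ Finset.range n, a ij.2 * b ij.1 := by
        refine Finset.sum_le_sum_of_subset_of_nonneg ?_ fun p _ _ => mul_nonneg (ha _) (hb _)
        intro p hp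
        rw [Finset.mem_biUnion] at hp
        obtain ⟨k, hk, hpk⟩ := hp
        rw [Finset.HasAntidiagonal.mem_antidiagonal] at hpk
        rw [Finset.mem_range] at hk
        rw [Finset.mem_product, Finset.mem_range, Finset.mem_range]
        omega
    _ = (∑ k ∈ Finset.range n, a k) * (∑ k ∈ Finset.range n, b k) := by
        rw [Finset.sum_product]
        simp only [← Finset.sum_mul, ← Finset.mul_sum]


/-- Generating function of the tail of a probability measure. -/
lemma tail_gf {μ : ℕ → ℝ} (hnn : ∀ j, 0 ≤ μ j) (hsum : ∑' j, μ j = 1)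
    {t : ℝ} (ht0 : 0 ≤ t) (ht1 : t < 1) :
    Summable (fun m => (1 - ∑ j ∈ Finset.range (m+1), μ j) * t^m) ∧
      (∑' m, (1 - ∑ j ∈ Finset.range (m+1), μ j) * t^m)
        = (1 - ∑' j, μ j * t^j) / (1 - t) := by
  have hμs : Summable μ := by
    by_contra h
    rw [tsum_eq_zero_of_not_summable h] at hsum
    norm_num at hsum
  set B : ℕ → ℝ := fun m => 1 - ∑ j ∈ Finset.range (m+1), μ j with hB
  have hB0 : ∀ m, 0 ≤ B m := by
    intro m
    have := Summable.sum_le_tsum (Finset.range (m+1)) (fun i _ => hnn i) hμs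
    simp only [hB]
    linarith [this.trans_eq hsum]
  have hB1 : ∀ m, B m ≤ 1 := by
    intro m
    have : 0 ≤ ∑ j ∈ Finset.range (m+1), μ j :=
      Finset.sum_nonneg fun i _ => hnn i
    simp only [hB]; linarith
  have hgeo : Summable (fun m : ℕ => t^m) := summable_geometric_of_lt_one ht0 ht1
  have hS : Summable (fun m => B m * t^m) := by
    refine Summable.of_nonneg_of_le (fun m => mul_nonneg (hB0 m) (pow_nonneg ht0 m))
      (fun m => ?_) hgeo
    calc B m * t^m ≤ 1 * t^m := by
          exact mul_le_mul_of_nonneg_right (hB1 m) (pow_nonneg ht0 m)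
      _ = t^m := one_mul _
  have hfts : Summable (fun j => μ j * t^j) := by
    refine Summable.of_nonneg_of_le (fun m => mul_nonneg (hnn m) (pow_nonneg ht0 m))
      (fun m => ?_) hμs
    calc μ m * t^m ≤ μ m * 1 := by
          refine mul_le_mul_of_nonneg_left (pow_le_one₀ ht0 ht1.le) (hnn m)
      _ = μ m := mul_one _
  refine ⟨hS, ?_⟩
  -- key identity for partial sums
  have hid : ∀ n : ℕ, (1 - t) * ∑ m ∈ Finset.range (n+1), B m * t^m
      = 1 - (∑ j ∈ Finset.range (n+1), μ j * t^j) - B n * t^(n+1) := by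
    intro n
    induction n with
    | zero =>
      have hB00 : B 0 = 1 - μ 0 := by simp [hB, Finset.sum_range_one]
      simp [Finset.sum_range_one]
      rw [hB00]
      ring
    | succ n ih =>
      have hBs : B (n+1) = B n - μ (n+1) := by
        simp only [hB, Finset.sum_range_succ]
        ring
      rw [Finset.sum_range_succ (fun m => B m * t^m), mul_add, ih, hBs,
        Finset.sum_range_succ (fun j => μ j * t^j) (n+1)]
      ring
  -- pass to the limit
  have h1 : Tendsto (fun n => ∑ m ∈ Finset.range (n+1), B m * t^m) atTop
      (𝓝 (∑' m, B m * t^m)) := by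
    exact (hS.hasSum.tendsto_sum_nat).comp (tendsto_add_atTop_nat 1)
  have h2 : Tendsto (fun n => ∑ j ∈ Finset.range (n+1), μ j * t^j) atTop
      (𝓝 (∑' j, μ j * t^j)) := by
    exact (hfts.hasSum.tendsto_sum_nat).comp (tendsto_add_atTop_nat 1)
  have h3 : Tendsto (fun n => B n * t^(n+1)) atTop (𝓝 0) := by
    have hub : ∀ n : ℕ, B n * t^(n+1) ≤ t^(n+1) := by
      intro n
      calc B n * t^(n+1) ≤ 1 * t^(n+1) :=
            mul_le_mul_of_nonneg_right (hB1 n) (pow_nonneg ht0 _)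
        _ = t^(n+1) := one_mul _
    have hlb : ∀ n : ℕ, 0 ≤ B n * t^(n+1) :=
      fun n => mul_nonneg (hB0 n) (pow_nonneg ht0 _)
    have htend : Tendsto (fun n : ℕ => t^(n+1)) atTop (𝓝 0) := by
      have := tendsto_pow_atTop_nhds_zero_of_lt_one ht0 ht1
      exact this.comp (tendsto_add_atTop_nat 1)
    exact squeeze_zero hlb hub htend
  have hlim1 : Tendsto (fun n => (1 - t) * ∑ m ∈ Finset.range (n+1), B m * t^m) atTop
      (𝓝 ((1 - t) * ∑' m, B m * t^m)) := h1.const_mul _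
  have hlim2 : Tendsto (fun n => 1 - (∑ j ∈ Finset.range (n+1), μ j * t^j) - B n * t^(n+1))
      atTop (𝓝 (1 - (∑' j, μ j * t^j) - 0)) :=
    ((tendsto_const_nhds.sub h2).sub h3)
  have heq : (1 - t) * ∑' m, B m * t^m = 1 - (∑' j, μ j * t^j) - 0 := by
    refine tendsto_nhds_unique ?_ hlim2
    refine Tendsto.congr (fun n => hid n) hlim1
  have ht1' : (1 : ℝ) - t ≠ 0 := by linarith
  rw [eq_div_iff ht1']
  rw [mul_comm, heq]
  ring


lemma ps_summable {a : ℕ → ℝ} (ha : ∀ n, 0 ≤ a n) {r x : ℝ}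
    (hs : Summable (fun n => a n * r^n)) (hx : |x| ≤ r) :
    Summable (fun n => a n * x^n) := by
  refine Summable.of_norm ?_
  refine Summable.of_nonneg_of_le (fun n => norm_nonneg _) (fun n => ?_) hs
  rw [norm_mul, Real.norm_eq_abs, Real.norm_eq_abs, abs_of_nonneg (ha n), abs_pow]
  exact mul_le_mul_of_nonneg_left (pow_le_pow_left₀ (abs_nonneg x) hx n) (ha n)

lemma ps_deriv_summable {a : ℕ → ℝ} (ha : ∀ n, 0 ≤ a n) {r r' x : ℝ}
    (hrr' : r < r') (hr : 0 < r)
    (hs : Summable (fun n => a n * r'^n)) (hx : |x| ≤ r) :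
    Summable (fun n => a n * ((n : ℝ) * x^(n-1))) := by
  have hr' : 0 < r' := hr.trans hrr'
  refine Summable.of_norm ?_
  -- bound by u n = a n * n * r^(n-1)
  have hb : ∀ n : ℕ, ‖a n * ((n : ℝ) * x^(n-1))‖ ≤ a n * ((n:ℝ) * r^(n-1)) := by
    intro n
    rw [norm_mul, Real.norm_eq_abs, Real.norm_eq_abs, abs_of_nonneg (ha n), abs_mul,
      abs_pow, Nat.abs_cast]
    refine mul_le_mul_of_nonneg_left ?_ (ha n)
    refine mul_le_mul_of_nonneg_left ?_ (Nat.cast_nonneg n)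
    exact pow_le_pow_left₀ (abs_nonneg x) hx _
  refine Summable.of_nonneg_of_le (fun n => norm_nonneg _) hb ?_
  -- now show Summable (fun n => a n * (n * r^(n-1)))
  rw [← summable_nat_add_iff 1]
  have hC : ∀ n : ℕ, a n * r'^n ≤ ∑' m, a m * r'^m := by
    intro n
    exact Summable.le_tsum hs n fun m _ => mul_nonneg (ha m) (pow_nonneg hr'.le m)
  set C := ∑' m, a m * r'^m with hCdef
  have hbound : ∀ n : ℕ, a (n+1) * (((n:ℝ)+1) * r^n)
      ≤ (C / r') * (((n:ℝ)+1) * (r/r')^n) := by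
    intro n
    have h1 : a (n+1) ≤ C / r'^(n+1) := by
      rw [le_div_iff₀ (pow_pos hr' (n+1))]
      exact hC (n+1)
    calc a (n+1) * (((n:ℝ)+1) * r^n) ≤ (C / r'^(n+1)) * (((n:ℝ)+1) * r^n) := by
          refine mul_le_mul_of_nonneg_right h1 ?_
          positivity
      _ = (C / r') * (((n:ℝ)+1) * (r/r')^n) := by
          rw [div_pow, pow_succ]
          ring
  have hgs : Summable (fun n : ℕ => (C / r') * (((n:ℝ)+1) * (r/r')^n)) := by
    refine Summable.mul_left _ ?_
    have hq0 : (0:ℝ) ≤ r / r' := by positivity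
    have hq1 : r / r' < 1 := (div_lt_one hr').2 hrr'
    have h1 : Summable (fun n : ℕ => (n:ℝ) * (r/r')^n) := by
      have := summable_pow_mul_geometric_of_norm_lt_one 1 (r := r/r')
        (by rw [Real.norm_eq_abs, abs_of_nonneg hq0]; exact hq1)
      simpa using this
    have h2 : Summable (fun n : ℕ => (r/r')^n) := summable_geometric_of_lt_one hq0 hq1
    simpa [add_mul, one_mul] using h1.add h2
  refine Summable.of_nonneg_of_le (fun n => ?_) (fun n => ?_) hgs
  · simp only [Nat.cast_add, Nat.cast_one, Nat.add_sub_cancel]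
    exact mul_nonneg (ha _) (by positivity)
  · simpa only [Nat.cast_add, Nat.cast_one, Nat.add_sub_cancel] using hbound n

lemma ps_continuousOn {a : ℕ → ℝ} (ha : ∀ n, 0 ≤ a n) {r : ℝ}
    (hs : Summable fun n => a n * r^n) :
    ContinuousOn (fun x : ℝ => ∑' n, a n * x^n) {x : ℝ | |x| ≤ r} := by
  refine (tendstoUniformlyOn_tsum hs (fun n x hx => ?_)).continuousOn
    (Eventually.of_forall fun s => ?_).frequently
  · rw [norm_mul, Real.norm_eq_abs, Real.norm_eq_abs, abs_of_nonneg (ha n), abs_pow]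
    refine mul_le_mul_of_nonneg_left (pow_le_pow_left₀ (abs_nonneg x) hx n) (ha n)
  · exact continuousOn_finset_sum _ fun n _ => (continuous_const.mul (continuous_pow n)).continuousOn

lemma ps_hasDerivAt {a : ℕ → ℝ} (ha : ∀ n, 0 ≤ a n) {r r' x : ℝ} (hr : 0 < r) (hrr' : r < r')
    (hs : Summable (fun n => a n * r'^n)) (hx : x ∈ Ioo (-r) r) :
    HasDerivAt (fun y : ℝ => ∑' n, a n * y^n) (∑' n, a n * ((n:ℝ) * x^(n-1))) x := by
  have hr' : 0 < r' := hr.trans hrr'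
  refine hasDerivAt_tsum_of_isPreconnected (𝕜 := ℝ) (F := ℝ) (g := fun n y => a n * y^n) (g' := fun n y => a n * ((n:ℝ) * y^(n-1))) (ps_deriv_summable ha hrr' hr hs (le_of_eq (abs_of_nonneg hr.le))) isOpen_Ioo (convex_Ioo _ _).isPreconnected
    (fun n y _ => ?_) (fun n y hy => ?_) (show (0:ℝ) ∈ Ioo (-r) r by constructor <;> linarith)
    ?_ hx
  · exact (hasDerivAt_pow n y).const_mul (a n)
  · rw [norm_mul, Real.norm_eq_abs, Real.norm_eq_abs, abs_of_nonneg (ha n), abs_mul,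
      abs_pow, Nat.abs_cast]
    refine mul_le_mul_of_nonneg_left ?_ (ha n)
    refine mul_le_mul_of_nonneg_left ?_ (Nat.cast_nonneg n)
    refine pow_le_pow_left₀ (abs_nonneg y) ?_ _
    rw [abs_le]
    exact ⟨hy.1.le, hy.2.le⟩
  · refine ps_summable ha hs ?_
    rw [abs_zero]
    linarith


lemma renewal {a b : ℕ → ℝ} (ha : ∀ n, 0 ≤ a n) (hb : ∀ n, 0 ≤ b n) (hb0 : b 0 = 0)
    (hrec : ∀ n, a (n+1) = ∑ j ∈ Finset.range (n+2), a (n+1-j) * b j)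
    (hbs : Summable b) (hB : ∑' n, b n < 1) :
    Summable a ∧ ∑' n, a n = a 0 / (1 - ∑' n, b n) := by
  set B := ∑' n, b n with hBdef
  have hBnn : 0 ≤ B := tsum_nonneg hb
  have h1B : 0 < 1 - B := by linarith
  -- partial sum bound
  have hpart : ∀ n, ∑ k ∈ Finset.range n, a k ≤ a 0 / (1 - B) := by
    intro n
    have key : ∀ m, ∑ k ∈ Finset.range (m+1), a k ≤ a 0 + (∑ k ∈ Finset.range (m+1), a k) * B := by
      intro m
      have h1 : ∑ k ∈ Finset.range (m+1), a k
          = a 0 + ∑ k ∈ Finset.range m, a (k+1) := by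
        rw [Finset.sum_range_succ']
        ring
      have h2 : ∑ k ∈ Finset.range m, a (k+1)
          = ∑ k ∈ Finset.range m, ∑ j ∈ Finset.range (k+2), a (k+1-j) * b j := by
        exact Finset.sum_congr rfl fun k _ => hrec k
      have h3 : ∑ k ∈ Finset.range m, ∑ j ∈ Finset.range (k+2), a (k+1-j) * b j
          ≤ ∑ k ∈ Finset.range (m+1), ∑ j ∈ Finset.range (k+1), a (k-j) * b j := by
        rw [Finset.sum_range_succ' (fun k => ∑ j ∈ Finset.range (k+1), a (k-j) * b j)]
        have h0 : (0:ℝ) ≤ ∑ j ∈ Finset.range (0+1), a (0-j) * b j :=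
          Finset.sum_nonneg fun j _ => mul_nonneg (ha _) (hb _)
        have := le_add_of_nonneg_right (a := ∑ k ∈ Finset.range m,
          ∑ j ∈ Finset.range (k+1+1), a (k+1-j) * b j) h0
        exact this
      have h4 : ∑ k ∈ Finset.range (m+1), ∑ j ∈ Finset.range (k+1), a (k-j) * b j
          ≤ (∑ k ∈ Finset.range (m+1), a k) * (∑ k ∈ Finset.range (m+1), b k) :=
        conv_partial_le ha hb (m+1)
      have h5 : (∑ k ∈ Finset.range (m+1), a k) * (∑ k ∈ Finset.range (m+1), b k)
          ≤ (∑ k ∈ Finset.range (m+1), a k) * B := by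
        refine mul_le_mul_of_nonneg_left ?_ (Finset.sum_nonneg fun i _ => ha i)
        exact Summable.sum_le_tsum _ (fun i _ => hb i) hbs
      linarith
    have hmono : ∀ m, ∑ k ∈ Finset.range m, a k ≤ a 0 / (1 - B) := by
      intro m
      cases m with
      | zero =>
        simp only [Finset.range_zero, Finset.sum_empty]
        exact div_nonneg (ha 0) h1B.le
      | succ m =>
        have hk := key m
        rw [le_div_iff₀ h1B]
        nlinarith [hk]
    exact hmono n
  have hsa : Summable a := summable_of_sum_range_le ha hpart
  refine ⟨hsa, ?_⟩
  -- exact value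
  have hconv := cauchy_nonneg ha hb hsa hbs
  have hshift : (∑' n, a n) = a 0 + ∑' n, a (n+1) := Summable.tsum_eq_zero_add hsa
  have hshift2 : (∑' n, ∑ j ∈ Finset.range (n+1), a (n-j) * b j)
      = (∑ j ∈ Finset.range 1, a (0-j) * b j)
        + ∑' n, ∑ j ∈ Finset.range (n+2), a (n+1-j) * b j := by
    exact Summable.tsum_eq_zero_add hconv.1
  have hzero : (∑ j ∈ Finset.range 1, a (0-j) * b j) = 0 := by
    simp [hb0]
  have heq : ∑' n, a (n+1) = (∑' n, a n) * B := by
    have h6 : (∑' n, a (n+1)) = ∑' n, ∑ j ∈ Finset.range (n+2), a (n+1-j) * b j :=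
      tsum_congr fun n => hrec n
    rw [h6, ← hconv.2, hshift2, hzero, zero_add]
  have hfin : (∑' n, a n) = a 0 + (∑' n, a n) * B := by
    calc (∑' n, a n) = a 0 + ∑' n, a (n+1) := hshift
      _ = a 0 + (∑' n, a n) * B := by rw [heq]
  rw [eq_div_iff (ne_of_gt h1B)]
  linear_combination hfin
lemma gronwall_summable {c κ : ℕ → ℝ} {t r : ℝ} (hc0 : c 0 = 1) (hcnn : ∀ n, 0 ≤ c n)
    (hκnn : ∀ n, 0 ≤ κ n)
    (hrec : ∀ k : ℕ, ((k:ℝ)+1) * c (k+1) = ∑ j ∈ Finset.range (k+1), c (k-j) * κ j)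
    (ht : 0 ≤ t) (htr : t < r) (hκs : Summable fun n => κ n * r^n) :
    Summable fun n => c n * t^n := by
  have hr : 0 < r := lt_of_le_of_lt ht htr
  set K : ℝ → ℝ := fun x => ∑' k, κ k * x^k with hKdef
  have hKc : ContinuousOn K {x : ℝ | |x| ≤ r} := ps_continuousOn hκnn hκs
  have hsubIoo : Ioo (-r) r ⊆ {x : ℝ | |x| ≤ r} := by
    intro u hu
    simp only [mem_setOf_eq]
    rw [abs_le]
    exact ⟨hu.1.le, hu.2.le⟩
  have hKct : ∀ y ∈ Ioo (-r) r, ContinuousAt K y := by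
    intro y hy
    exact (hKc.mono hsubIoo).continuousAt (isOpen_Ioo.mem_nhds hy)
  set J : ℝ → ℝ := fun y => ∫ u in (0:ℝ)..y, K u with hJdef
  have hmemIoo : ∀ y ∈ Icc (0:ℝ) t, y ∈ Ioo (-r) r := by
    intro y hy
    exact ⟨by linarith [hy.1], by linarith [hy.2]⟩
  have hJd : ∀ y ∈ Icc (0:ℝ) t, HasDerivAt J (K y) y := by
    intro y hy
    have hy' := hmemIoo y hy
    refine intervalIntegral.integral_hasDerivAt_right ?_ ?_ (hKct y hy')
    · refine (hKc.mono ?_).intervalIntegrable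
      intro u hu
      rw [Set.mem_uIcc] at hu
      simp only [mem_setOf_eq]
      rw [abs_le]
      rcases hu with ⟨h1, h2⟩ | ⟨h1, h2⟩ <;> constructor <;> linarith [hy.1, hy.2, hy'.1, hy'.2]
    · exact ContinuousOn.stronglyMeasurableAtFilter isOpen_Ioo (hKc.mono hsubIoo) y hy'
  have hJc : ContinuousOn J (Icc (0:ℝ) t) := by
    intro y hy
    exact ((hJd y hy).continuousAt).continuousWithinAt
  set E : ℝ → ℝ := fun y => Real.exp (-(J y)) with hEdef
  have hEpos : ∀ y, 0 < E y := fun y => Real.exp_pos _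
  have hEc : ContinuousOn E (Icc (0:ℝ) t) :=
    Real.continuous_exp.comp_continuousOn hJc.neg
  -- partial sums and their derivatives
  set P : ℕ → ℝ → ℝ := fun n y => ∑ k ∈ Finset.range (n+1), c k * y^k with hPdef
  set Pd : ℕ → ℝ → ℝ := fun n y => ∑ k ∈ Finset.range (n+1), c k * ((k:ℝ) * y^(k-1))
    with hPddef
  have hPd : ∀ n y, HasDerivAt (fun z => P n z) (Pd n y) y := by
    intro n y
    exact HasDerivAt.fun_sum fun k _ => (hasDerivAt_pow k y).const_mul (c k)
  have hPc : ∀ n, Continuous (P n) := by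
    intro n
    exact continuous_finset_sum _ fun k _ => continuous_const.mul (continuous_pow k)
  have hPdc : ∀ n, Continuous (Pd n) := by
    intro n
    exact continuous_finset_sum _ fun k _ =>
      continuous_const.mul (continuous_const.mul (continuous_pow (k-1)))
  have hPnn : ∀ n y, 0 ≤ y → 0 ≤ P n y := by
    intro n y hy
    exact Finset.sum_nonneg fun k _ => mul_nonneg (hcnn k) (pow_nonneg hy k)
  -- the key differential inequality
  have hPdle : ∀ n, ∀ y ∈ Icc (0:ℝ) t, Pd n y ≤ K y * P n y := by
    intro n y hy
    have hy0 : 0 ≤ y := hy.1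
    have hyr : |y| ≤ r := by
      rw [abs_of_nonneg hy0]; linarith [hy.2]
    have step1 : Pd n y = ∑ k ∈ Finset.range n, c (k+1) * (((k:ℝ)+1) * y^k) := by
      show (∑ k ∈ Finset.range (n+1), c k * ((k:ℝ) * y^(k-1))) = _
      rw [Finset.sum_range_succ' (fun k => c k * ((k:ℝ) * y^(k-1)))]
      simp only [Nat.cast_zero, zero_mul, mul_zero, add_zero, Nat.add_sub_cancel]
      push_cast
      rfl
    have step2 : ∀ k, c (k+1) * (((k:ℝ)+1) * y^k)
        = ∑ j ∈ Finset.range (k+1), (c (k-j) * y^(k-j)) * (κ j * y^j) := by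
      intro k
      have h1 : c (k+1) * (((k:ℝ)+1) * y^k) = (((k:ℝ)+1) * c (k+1)) * y^k := by ring
      rw [h1, hrec k, Finset.sum_mul]
      refine Finset.sum_congr rfl fun j hj => ?_
      rw [Finset.mem_range, Nat.lt_succ_iff] at hj
      have h2 : y^(k-j) * y^j = y^k := by
        rw [← pow_add]
        congr 1
        omega
      calc c (k-j) * κ j * y^k = c (k-j) * κ j * (y^(k-j) * y^j) := by rw [h2]
        _ = (c (k-j) * y^(k-j)) * (κ j * y^j) := by ring
    have step3 : Pd n y ≤ (∑ k ∈ Finset.range n, c k * y^k) * (∑ k ∈ Finset.range n, κ k * y^k) := by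
      rw [step1]
      calc ∑ k ∈ Finset.range n, c (k+1) * (((k:ℝ)+1) * y^k)
          = ∑ k ∈ Finset.range n, ∑ j ∈ Finset.range (k+1), (c (k-j) * y^(k-j)) * (κ j * y^j) :=
            Finset.sum_congr rfl fun k _ => step2 k
        _ ≤ _ := by
            have := conv_partial_le (a := fun k => c k * y^k) (b := fun k => κ k * y^k)
              (fun k => mul_nonneg (hcnn k) (pow_nonneg hy0 k))
              (fun k => mul_nonneg (hκnn k) (pow_nonneg hy0 k)) n
            exact this
    have step4 : (∑ k ∈ Finset.range n, c k * y^k) ≤ P n y := by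
      show _ ≤ ∑ k ∈ Finset.range (n+1), c k * y^k
      rw [Finset.sum_range_succ]
      have : 0 ≤ c n * y^n := mul_nonneg (hcnn n) (pow_nonneg hy0 n)
      linarith
    have step5 : (∑ k ∈ Finset.range n, κ k * y^k) ≤ K y :=
      Summable.sum_le_tsum _ (fun k _ => mul_nonneg (hκnn k) (pow_nonneg hy0 k))
        (ps_summable hκnn hκs hyr)
    calc Pd n y ≤ (∑ k ∈ Finset.range n, c k * y^k) * (∑ k ∈ Finset.range n, κ k * y^k) := step3
      _ ≤ P n y * K y := by
          refine mul_le_mul step4 step5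
            (Finset.sum_nonneg fun k _ => mul_nonneg (hκnn k) (pow_nonneg hy0 k))
            (hPnn n y hy0)
      _ = K y * P n y := mul_comm _ _
  -- Gronwall via FTC
  have hbound : ∀ n, P n t ≤ Real.exp (J t) := by
    intro n
    set g : ℝ → ℝ := fun y => Pd n y * E y + P n y * (Real.exp (-(J y)) * -(K y)) with hgdef
    have hgd : ∀ y ∈ uIcc (0:ℝ) t, HasDerivAt (fun z => P n z * E z) (g y) y := by
      intro y hy
      rw [uIcc_of_le ht] at hy
      exact (hPd n y).mul (((hJd y hy).neg).exp)
    have hgc : ContinuousOn g (Icc (0:ℝ) t) := by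
      refine ContinuousOn.add (((hPdc n).continuousOn).mul hEc) ?_
      refine ContinuousOn.mul ((hPc n).continuousOn) ?_
      refine ContinuousOn.mul ?_ ((hKc.mono ?_).neg)
      · exact Real.continuous_exp.comp_continuousOn hJc.neg
      · intro u hu
        simp only [mem_setOf_eq]
        rw [abs_of_nonneg hu.1]
        linarith [hu.2]
    have hgint : IntervalIntegrable g MeasureTheory.volume 0 t := by
      rw [← uIcc_of_le ht] at hgc
      exact hgc.intervalIntegrable
    have hftc := intervalIntegral.integral_eq_sub_of_hasDerivAt hgd hgint
    have hgnonpos : ∀ y ∈ Icc (0:ℝ) t, g y ≤ 0 := by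
      intro y hy
      have h1 : Pd n y ≤ K y * P n y := hPdle n y hy
      have h2 : (0:ℝ) < E y := hEpos y
      have : g y = (Pd n y - K y * P n y) * E y := by
        rw [hgdef]
        simp only [hEdef]
        ring
      rw [this]
      exact mul_nonpos_of_nonpos_of_nonneg (by linarith) h2.le
    have hint_nonpos : (∫ y in (0:ℝ)..t, g y) ≤ 0 := by
      have h1 : (0:ℝ) ≤ ∫ y in (0:ℝ)..t, -(g y) := by
        refine intervalIntegral.integral_nonneg ht fun u hu => ?_
        linarith [hgnonpos u hu]
      rw [intervalIntegral.integral_neg] at h1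
      linarith
    have hP0 : P n 0 = 1 := by
      show (∑ k ∈ Finset.range (n+1), c k * (0:ℝ)^k) = 1
      rw [Finset.sum_eq_single_of_mem 0 (Finset.mem_range.2 (Nat.succ_pos n))]
      · rw [pow_zero, mul_one, hc0]
      · intro k _ hk
        rw [zero_pow hk, mul_zero]
    have hE0 : E 0 = 1 := by
      show Real.exp (-(J 0)) = 1
      have : J 0 = 0 := intervalIntegral.integral_same
      rw [this]
      simp
    rw [hftc, hP0, hE0, mul_one] at hint_nonpos
    -- P n t * E t ≤ 1
    have h3 : P n t * Real.exp (-(J t)) ≤ 1 := by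
      have : E t = Real.exp (-(J t)) := rfl
      linarith [hint_nonpos]
    calc P n t = P n t * Real.exp (-(J t)) * Real.exp (J t) := by
          rw [mul_assoc, ← Real.exp_add]
          simp
      _ ≤ 1 * Real.exp (J t) := mul_le_mul_of_nonneg_right h3 (Real.exp_pos _).le
      _ = Real.exp (J t) := one_mul _
  refine summable_of_sum_range_le (c := Real.exp (J t))
    (fun n => mul_nonneg (hcnn n) (pow_nonneg ht n)) (fun n => ?_)
  calc ∑ i ∈ Finset.range n, c i * t^i ≤ P n t := by
        show _ ≤ ∑ k ∈ Finset.range (n+1), c k * t^k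
        rw [Finset.sum_range_succ]
        have : 0 ≤ c n * t^n := mul_nonneg (hcnn n) (pow_nonneg ht n)
        linarith
    _ ≤ Real.exp (J t) := hbound n
lemma exp_ode {c κ : ℕ → ℝ} {s r r' : ℝ} (hc0 : c 0 = 1) (hcnn : ∀ n, 0 ≤ c n)
    (hκnn : ∀ n, 0 ≤ κ n)
    (hrec : ∀ k : ℕ, ((k:ℝ)+1) * c (k+1) = ∑ j ∈ Finset.range (k+1), c (k-j) * κ j)
    (hs0 : 0 ≤ s) (hsr : s < r) (hrr' : r < r')
    (hcs : Summable fun n => c n * r'^n) (hκs : Summable fun n => κ n * r^n) :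
    ∑' k, c k * s^k = Real.exp (∫ u in (0:ℝ)..s, ∑' k, κ k * u^k) := by
  have hr : 0 < r := lt_of_le_of_lt hs0 hsr
  set K : ℝ → ℝ := fun x => ∑' k, κ k * x^k with hKdef
  set F : ℝ → ℝ := fun x => ∑' n, c n * x^n with hFdef
  have hKc : ContinuousOn K {x : ℝ | |x| ≤ r} := ps_continuousOn hκnn hκs
  have hsubIoo : Ioo (-r) r ⊆ {x : ℝ | |x| ≤ r} := by
    intro u hu
    simp only [mem_setOf_eq]
    rw [abs_le]
    exact ⟨hu.1.le, hu.2.le⟩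
  have hKct : ∀ y ∈ Ioo (-r) r, ContinuousAt K y := by
    intro y hy
    exact (hKc.mono hsubIoo).continuousAt (isOpen_Ioo.mem_nhds hy)
  set J : ℝ → ℝ := fun y => ∫ u in (0:ℝ)..y, K u with hJdef
  have hmemIoo : ∀ y ∈ Icc (0:ℝ) s, y ∈ Ioo (-r) r := by
    intro y hy
    exact ⟨by linarith [hy.1], by linarith [hy.2]⟩
  have hJd : ∀ y ∈ Icc (0:ℝ) s, HasDerivAt J (K y) y := by
    intro y hy
    have hy' := hmemIoo y hy
    refine intervalIntegral.integral_hasDerivAt_right ?_ ?_ (hKct y hy')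
    · refine (hKc.mono ?_).intervalIntegrable
      intro u hu
      rw [Set.mem_uIcc] at hu
      simp only [mem_setOf_eq]
      rw [abs_le]
      rcases hu with ⟨h1, h2⟩ | ⟨h1, h2⟩ <;> constructor <;> linarith [hy.1, hy.2, hy'.1, hy'.2]
    · exact ContinuousOn.stronglyMeasurableAtFilter isOpen_Ioo (hKc.mono hsubIoo) y hy'
  -- derivative of F
  have hFd : ∀ x ∈ Icc (0:ℝ) s, HasDerivAt F (∑' n, c n * ((n:ℝ) * x^(n-1))) x := by
    intro x hx
    exact ps_hasDerivAt hcnn hr hrr' hcs (hmemIoo x hx)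
  have hFval : ∀ x ∈ Icc (0:ℝ) s, (∑' n, c n * ((n:ℝ) * x^(n-1))) = K x * F x := by
    intro x hx
    have hx0 : 0 ≤ x := hx.1
    have hxr : |x| ≤ r := by rw [abs_of_nonneg hx0]; linarith [hx.2]
    have hxr' : |x| ≤ r' := le_trans hxr (le_of_lt hrr')
    have hsumd : Summable (fun n => c n * ((n:ℝ) * x^(n-1))) :=
      ps_deriv_summable hcnn hrr' hr hcs hxr
    have hsc : Summable (fun n => c n * x^n) := ps_summable hcnn hcs hxr'
    have hsk : Summable (fun n => κ n * x^n) := ps_summable hκnn hκs hxr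
    have h1 : (∑' n, c n * ((n:ℝ) * x^(n-1)))
        = c 0 * ((0:ℝ) * x^(0-1)) + ∑' n, c (n+1) * (((n:ℕ):ℝ)+1) * x^n := by
      rw [Summable.tsum_eq_zero_add hsumd]
      congr 1
      · norm_num
      · refine tsum_congr fun n => ?_
        push_cast
        ring_nf
    have h2 : ∀ n : ℕ, c (n+1) * (((n:ℕ):ℝ)+1) * x^n
        = ∑ j ∈ Finset.range (n+1), (c (n-j) * x^(n-j)) * (κ j * x^j) := by
      intro n
      have ha : c (n+1) * (((n:ℕ):ℝ)+1) * x^n = (((n:ℝ)+1) * c (n+1)) * x^n := by ring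
      rw [ha, hrec n, Finset.sum_mul]
      refine Finset.sum_congr rfl fun j hj => ?_
      rw [Finset.mem_range, Nat.lt_succ_iff] at hj
      have h3 : x^(n-j) * x^j = x^n := by
        rw [← pow_add]
        congr 1
        omega
      calc c (n-j) * κ j * x^n = c (n-j) * κ j * (x^(n-j) * x^j) := by rw [h3]
        _ = (c (n-j) * x^(n-j)) * (κ j * x^j) := by ring
    have hcau := cauchy_nonneg (a := fun n => c n * x^n) (b := fun n => κ n * x^n)
      (fun n => mul_nonneg (hcnn n) (pow_nonneg hx0 n))
      (fun n => mul_nonneg (hκnn n) (pow_nonneg hx0 n)) hsc hsk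
    calc (∑' n, c n * ((n:ℝ) * x^(n-1)))
        = c 0 * ((0:ℝ) * x^(0-1)) + ∑' n, c (n+1) * (((n:ℕ):ℝ)+1) * x^n := h1
      _ = ∑' n, c (n+1) * (((n:ℕ):ℝ)+1) * x^n := by simp
      _ = ∑' n, ∑ j ∈ Finset.range (n+1), (c (n-j) * x^(n-j)) * (κ j * x^j) :=
          tsum_congr fun n => h2 n
      _ = (∑' n, c n * x^n) * (∑' n, κ n * x^n) := hcau.2
      _ = K x * F x := mul_comm _ _
  -- the function F · exp(-J) has zero derivative
  have hΦd : ∀ x ∈ uIcc (0:ℝ) s, HasDerivAt (fun y => F y * Real.exp (-(J y))) ((0:ℝ)) x := by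
    intro x hx
    rw [uIcc_of_le hs0] at hx
    have h := (hFd x hx).mul (((hJd x hx).neg).exp)
    have hval : (∑' n, c n * ((n:ℝ) * x^(n-1))) * Real.exp (-(J x))
        + F x * (Real.exp (-(J x)) * -(K x)) = 0 := by
      rw [hFval x hx]
      ring
    have h := h.congr_deriv hval
    exact h
  have hftc := intervalIntegral.integral_eq_sub_of_hasDerivAt hΦd
    (intervalIntegrable_const)
  rw [intervalIntegral.integral_const, smul_zero] at hftc
  have hJ0 : J 0 = 0 := intervalIntegral.integral_same
  have hF0 : F 0 = 1 := by
    show (∑' n, c n * (0:ℝ)^n) = 1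
    rw [tsum_eq_single 0 (fun n hn => by rw [zero_pow hn, mul_zero])]
    rw [pow_zero, mul_one, hc0]
  have hΦ0 : F 0 * Real.exp (-(J 0)) = 1 := by
    rw [hF0, hJ0]
    simp
  have hΦs : F s * Real.exp (-(J s)) = 1 := by
    rw [← hΦ0]
    linarith [hftc]
  have : F s = Real.exp (J s) := by
    calc F s = F s * Real.exp (-(J s)) * Real.exp (J s) := by
          rw [mul_assoc, ← Real.exp_add]
          simp
      _ = 1 * Real.exp (J s) := by rw [hΦs]
      _ = Real.exp (J s) := one_mul _
  exact this
theorem stmt_7 (α p : ℝ) (μ : ℕ → ℝ) (ψ : ℝ → ℝ) (s₀ : ℝ)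
    (hα : 0 < α) (hp : 0 ≤ p)
    (hμ_nonneg : ∀ j, 0 ≤ μ j) (hμ_sum : ∑' j, μ j = 1)
    (hμ0 : 0 < μ 0) (hμ1 : μ 1 = 0)
    (hψ : ∀ s : ℝ, ψ s = α * ((∑' j, μ j * s ^ j) - s) - p * s)
    (hs₀ : s₀ = sInf {s : ℝ | 0 < s ∧ ψ s = 0})
    (hs₀_mem : s₀ ∈ Ioc (0:ℝ) 1)
    (hψ_pos : ∀ s ∈ Ico (0:ℝ) s₀, 0 < ψ s)
    (β q : ℝ) (ν : ℕ → ℝ) (φ : ℝ → ℝ)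
    (hβ : 0 ≤ β) (hq : 0 ≤ q)
    (hν_nonneg : ∀ j, 0 ≤ ν j) (hν0 : ν 0 = 0) (hν_sum : ∑' j, ν j = 1)
    (hφ : ∀ s : ℝ, φ s = β * (1 - ∑' j, ν j * s ^ j) + q)
    (νbar : ℕ → ℝ)
    (hνbar : ∀ k, νbar k = 1 - ∑ j ∈ Finset.range (k+1), ν j)
    (μbar : ℕ → ℝ)
    (hμbar : ∀ k, μbar k = 1 - ∑ j ∈ Finset.range (k+1), μ j)
    (ΔW : ℕ → ℝ)
    (hΔW0 : ΔW 0 = 1 / (α * μ 0))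
    (hΔW : ∀ k, ΔW (k+1) = (1 / μ 0) * ∑ j ∈ Finset.range (k+1), ΔW j * (μbar (k - j + 1) + p / α))
    (W : ℕ → ℝ)
    (hW : ∀ k, W k = ∑ j ∈ Finset.range (k+1), ΔW j)
    (κ : ℕ → ℝ)
    (hκ : ∀ k, κ k = β * (∑ y ∈ Finset.range (k+1), ΔW (k - y) * νbar y) + q * W k)
    (π : ℕ → ℝ)
    (hπ0 : π 0 = 1)
    (hπ : ∀ k, π (k+1) = (∑ y ∈ Finset.range (k+1), π (k - y) * κ y) / (k + 1 : ℝ)) :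
    ∀ s ∈ Ico (0:ℝ) s₀, ∑' k, π k * s ^ k = Real.exp (∫ u in (0:ℝ)..s, φ u / ψ u) := by
  have hs₀0 : 0 < s₀ := hs₀_mem.1
  have hs₀1 : s₀ ≤ 1 := hs₀_mem.2
  have hμs : Summable μ := by
    by_contra h
    rw [tsum_eq_zero_of_not_summable h] at hμ_sum
    norm_num at hμ_sum
  have hνs : Summable ν := by
    by_contra h
    rw [tsum_eq_zero_of_not_summable h] at hν_sum
    norm_num at hν_sum
  have hμbar_nn : ∀ k, 0 ≤ μbar k := by
    intro k
    rw [hμbar k]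
    have h1 := Summable.sum_le_tsum (Finset.range (k+1)) (fun i _ => hμ_nonneg i) hμs
    linarith [h1.trans_eq hμ_sum]
  have hνbar_nn : ∀ k, 0 ≤ νbar k := by
    intro k
    rw [hνbar k]
    have h1 := Summable.sum_le_tsum (Finset.range (k+1)) (fun i _ => hν_nonneg i) hνs
    linarith [h1.trans_eq hν_sum]
  have hμbar_le : ∀ k, μbar k ≤ 1 := by
    intro k
    rw [hμbar k]
    have h1 : 0 ≤ ∑ j ∈ Finset.range (k+1), μ j := Finset.sum_nonneg fun i _ => hμ_nonneg i
    linarith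
  have hΔWnn : ∀ k, 0 ≤ ΔW k := by
    intro k
    induction k using Nat.strong_induction_on with
    | _ k ih =>
      match k with
      | 0 =>
        rw [hΔW0]
        positivity
      | Nat.succ k =>
        rw [hΔW k]
        refine mul_nonneg (by positivity) (Finset.sum_nonneg fun j hj => ?_)
        rw [Finset.mem_range] at hj
        refine mul_nonneg (ih j (by omega)) ?_
        have h1 := hμbar_nn (k - j + 1)
        positivity
  have hWnn : ∀ k, 0 ≤ W k := by
    intro k
    rw [hW]
    exact Finset.sum_nonneg fun j _ => hΔWnn j
  have hκnn : ∀ k, 0 ≤ κ k := by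
    intro k
    rw [hκ]
    have h1 : 0 ≤ ∑ y ∈ Finset.range (k+1), ΔW (k-y) * νbar y :=
      Finset.sum_nonneg fun y _ => mul_nonneg (hΔWnn _) (hνbar_nn _)
    exact add_nonneg (mul_nonneg hβ h1) (mul_nonneg hq (hWnn k))
  have hπnn : ∀ k, 0 ≤ π k := by
    intro k
    induction k using Nat.strong_induction_on with
    | _ k ih =>
      match k with
      | 0 =>
        rw [hπ0]
        norm_num
      | Nat.succ k =>
        rw [hπ k]
        refine div_nonneg (Finset.sum_nonneg fun y hy =>
          mul_nonneg (ih (k - y) (by omega)) (hκnn y)) (by positivity)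
  have hrecπ : ∀ k : ℕ, ((k:ℝ)+1) * π (k+1) = ∑ j ∈ Finset.range (k+1), π (k-j) * κ j := by
    intro k
    rw [hπ k]
    have hk : ((k:ℝ)+1) ≠ 0 := by positivity
    field_simp
  -- main computation of the generating function of κ
  have keyK : ∀ t : ℝ, 0 ≤ t → t < s₀ →
      (Summable fun k => κ k * t^k) ∧ (∑' k, κ k * t^k) = φ t / ψ t := by
    intro t ht0 hts₀
    have ht1 : t < 1 := lt_of_lt_of_le hts₀ hs₀1
    have hψt : 0 < ψ t := hψ_pos t ⟨ht0, hts₀⟩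
    have h1t : (0:ℝ) < 1 - t := by linarith
    have hgeos : Summable (fun j : ℕ => t^j) := summable_geometric_of_lt_one ht0 ht1
    -- tail generating functions
    have hT1 := tail_gf hμ_nonneg hμ_sum ht0 ht1
    have hT1s : Summable (fun m => μbar m * t^m) :=
      hT1.1.congr fun m => by rw [hμbar m]
    have hT1v : (∑' m, μbar m * t^m) = (1 - ∑' j, μ j * t^j) / (1-t) := by
      rw [← hT1.2]
      exact tsum_congr fun m => by rw [hμbar m]
    have hT2 := tail_gf hν_nonneg hν_sum ht0 ht1
    have hT2s : Summable (fun m => νbar m * t^m) :=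
      hT2.1.congr fun m => by rw [hνbar m]
    have hT2v : (∑' m, νbar m * t^m) = (1 - ∑' j, ν j * t^j) / (1-t) := by
      rw [← hT2.2]
      exact tsum_congr fun m => by rw [hνbar m]
    -- the renewal kernel
    set b : ℕ → ℝ := fun m => if m = 0 then 0 else (μbar m + p/α)/(μ 0) * t^m with hbdef
    have hb0 : b 0 = 0 := by simp [hbdef]
    have hbnn : ∀ m, 0 ≤ b m := by
      intro m
      rw [hbdef]
      by_cases hm : m = 0
      · simp [hm]
      · simp only [hm, if_false]
        have h1 := hμbar_nn m
        positivity
    have hbs : Summable b := by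
      refine Summable.of_nonneg_of_le hbnn (fun m => ?_)
        (hgeos.mul_left ((1 + p/α)/(μ 0)))
      rw [hbdef]
      by_cases hm : m = 0
      · simp only [hm, if_true]
        positivity
      · simp only [hm, if_false]
        refine mul_le_mul_of_nonneg_right ?_ (pow_nonneg ht0 m)
        have h9 : μbar m + p/α ≤ 1 + p/α := by linarith [hμbar_le m]
        exact div_le_div_of_nonneg_right h9 hμ0.le
    -- value of the kernel sum
    have hbshift : ∀ m : ℕ, b (m+1)
        = (1/(μ 0)) * (μbar (m+1) * t^(m+1) + (p/α) * t^(m+1)) := by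
      intro m
      rw [hbdef]
      simp only [Nat.succ_ne_zero, if_false]
      ring
    have hs1 : Summable (fun m => μbar (m+1) * t^(m+1)) := by
      have := (summable_nat_add_iff 1).2 hT1s
      exact this
    have hs2 : Summable (fun m : ℕ => (p/α) * t^(m+1)) := by
      have h2 : Summable (fun m : ℕ => ((p/α) * t) * t^m) := hgeos.mul_left _
      refine h2.congr fun m => ?_
      rw [pow_succ]
      ring
    have hBval0 : (∑' m, b m)
        = (1/(μ 0)) * ((∑' m, μbar (m+1) * t^(m+1)) + ∑' m, (p/α) * t^(m+1)) := by
      rw [Summable.tsum_eq_zero_add hbs, hb0, zero_add]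
      rw [tsum_congr hbshift]
      rw [tsum_mul_left, Summable.tsum_add hs1 hs2]
    have hshift1 : (∑' m, μbar (m+1) * t^(m+1)) = (∑' m, μbar m * t^m) - μbar 0 := by
      have h3 := Summable.tsum_eq_zero_add hT1s
      rw [pow_zero, mul_one] at h3
      linarith
    have hshift2 : (∑' m : ℕ, (p/α) * t^(m+1)) = (p/α) * t / (1-t) := by
      have h4 : (∑' m : ℕ, (p/α) * t^(m+1)) = ∑' m : ℕ, ((p/α) * t) * t^m := by
        refine tsum_congr fun m => ?_
        rw [pow_succ]
        ring
      rw [h4, tsum_mul_left, tsum_geometric_of_lt_one ht0 ht1]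
      field_simp
    have hμbar0 : μbar 0 = 1 - μ 0 := by
      rw [hμbar 0]
      rw [Finset.sum_range_one]
    have hBval : 1 - (∑' m, b m) = ψ t / (α * μ 0 * (1-t)) := by
      rw [hBval0, hshift1, hshift2, hT1v, hμbar0, hψ t]
      have hα' : α ≠ 0 := ne_of_gt hα
      have hμ0' : μ 0 ≠ 0 := ne_of_gt hμ0
      have h1t' : (1:ℝ) - t ≠ 0 := ne_of_gt h1t
      field_simp
      ring
    have hBlt : (∑' m, b m) < 1 := by
      have h5 : 0 < ψ t / (α * μ 0 * (1-t)) := by positivity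
      linarith
    -- renewal equation for ΔW
    have hrecA : ∀ n : ℕ, ΔW (n+1) * t^(n+1)
        = ∑ j ∈ Finset.range (n+2), ΔW (n+1-j) * t^(n+1-j) * b j := by
      intro n
      rw [Finset.sum_range_succ' (fun j => ΔW (n+1-j) * t^(n+1-j) * b j) (n+1)]
      simp only [Nat.sub_zero, hb0, mul_zero, add_zero]
      rw [hΔW n, ← Finset.sum_range_reflect (fun j => ΔW j * (μbar (n-j+1) + p/α)) (n+1),
        Finset.mul_sum, Finset.sum_mul]
      refine Finset.sum_congr rfl fun i hi => ?_
      rw [Finset.mem_range, Nat.lt_succ_iff] at hi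
      have e1 : n + 1 - 1 - i = n - i := by omega
      have e2 : n - (n - i) + 1 = i + 1 := by omega
      have e3 : n + 1 - (i + 1) = n - i := by omega
      have hbeq : b (i+1) = (μbar (i+1) + p/α)/(μ 0) * t^(i+1) := by
        rw [hbdef]
        simp only [Nat.succ_ne_zero, if_false]
      rw [e1, e2, e3, hbeq]
      have e4 : t^(n-i) * t^(i+1) = t^(n+1) := by
        rw [← pow_add]
        congr 1
        omega
      rw [← e4]
      ring
    have hDa := renewal (a := fun k => ΔW k * t^k) (b := b)
      (fun n => mul_nonneg (hΔWnn n) (pow_nonneg ht0 n)) hbnn hb0 hrecA hbs hBlt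
    have hDs : Summable (fun k => ΔW k * t^k) := hDa.1
    have hDval : (∑' k, ΔW k * t^k) = (1-t)/ψ t := by
      rw [hDa.2]
      simp only [pow_zero, mul_one]
      rw [hΔW0, hBval]
      have hα' : α ≠ 0 := ne_of_gt hα
      have hμ0' : μ 0 ≠ 0 := ne_of_gt hμ0
      have h1t' : (1:ℝ) - t ≠ 0 := ne_of_gt h1t
      have hψt' : ψ t ≠ 0 := ne_of_gt hψt
      field_simp
    -- the W series
    have hWconv : ∀ k, W k * t^k
        = ∑ j ∈ Finset.range (k+1), (ΔW (k-j) * t^(k-j)) * t^j := by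
      intro k
      have h6 : W k = ∑ j ∈ Finset.range (k+1), ΔW (k-j) := by
        rw [hW k, ← Finset.sum_range_reflect (fun j => ΔW j) (k+1)]
        refine Finset.sum_congr rfl fun j hj => ?_
        rw [Finset.mem_range, Nat.lt_succ_iff] at hj
        congr 1
      rw [h6, Finset.sum_mul]
      refine Finset.sum_congr rfl fun j hj => ?_
      rw [Finset.mem_range, Nat.lt_succ_iff] at hj
      have e4 : t^(k-j) * t^j = t^k := by
        rw [← pow_add]
        congr 1
        omega
      rw [← e4]
      ring
    have hWcau := cauchy_nonneg (a := fun k => ΔW k * t^k) (b := fun j => t^j)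
      (fun n => mul_nonneg (hΔWnn n) (pow_nonneg ht0 n)) (fun j => pow_nonneg ht0 j) hDs hgeos
    have hWs : Summable (fun k => W k * t^k) :=
      hWcau.1.congr fun k => (hWconv k).symm
    have hWv : (∑' k, W k * t^k) = 1/ψ t := by
      rw [tsum_congr hWconv, hWcau.2, hDval, tsum_geometric_of_lt_one ht0 ht1]
      have h1t' : (1:ℝ) - t ≠ 0 := ne_of_gt h1t
      have hψt' : ψ t ≠ 0 := ne_of_gt hψt
      field_simp
    -- the κ series
    have hconv2 := cauchy_nonneg (a := fun k => ΔW k * t^k) (b := fun m => νbar m * t^m)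
      (fun n => mul_nonneg (hΔWnn n) (pow_nonneg ht0 n))
      (fun m => mul_nonneg (hνbar_nn m) (pow_nonneg ht0 m)) hDs hT2s
    have hκconv : ∀ k, κ k * t^k
        = β * (∑ y ∈ Finset.range (k+1), (ΔW (k-y) * t^(k-y)) * (νbar y * t^y))
          + q * (W k * t^k) := by
      intro k
      have h7 : (∑ y ∈ Finset.range (k+1), ΔW (k-y) * νbar y) * t^k
          = ∑ y ∈ Finset.range (k+1), (ΔW (k-y) * t^(k-y)) * (νbar y * t^y) := by
        rw [Finset.sum_mul]
        refine Finset.sum_congr rfl fun y hy => ?_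
        rw [Finset.mem_range, Nat.lt_succ_iff] at hy
        have e4 : t^(k-y) * t^y = t^k := by
          rw [← pow_add]
          congr 1
          omega
        rw [← e4]
        ring
      calc κ k * t^k
          = (β * (∑ y ∈ Finset.range (k+1), ΔW (k-y) * νbar y) + q * W k) * t^k := by
            rw [hκ k]
        _ = β * ((∑ y ∈ Finset.range (k+1), ΔW (k-y) * νbar y) * t^k) + q * (W k * t^k) := by
            ring
        _ = _ := by rw [h7]
    have hκsum : Summable (fun k => κ k * t^k) := by
      refine Summable.congr ?_ fun k => (hκconv k).symm
      exact (hconv2.1.mul_left β).add (hWs.mul_left q)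
    have hκval : (∑' k, κ k * t^k) = φ t / ψ t := by
      rw [tsum_congr hκconv,
        Summable.tsum_add (hconv2.1.mul_left β) (hWs.mul_left q),
        tsum_mul_left, tsum_mul_left, hconv2.2, hDval, hT2v, hWv, hφ t]
      have h1t' : (1:ℝ) - t ≠ 0 := ne_of_gt h1t
      have hψt' : ψ t ≠ 0 := ne_of_gt hψt
      field_simp
    exact ⟨hκsum, hκval⟩
  -- conclusion
  intro s hsmem
  obtain ⟨hs0, hss₀⟩ := hsmem
  have hgap : 0 < s₀ - s := by linarith
  set r1 : ℝ := s + (s₀ - s)/4 with hr1def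
  set r2 : ℝ := s + (s₀ - s)/2 with hr2def
  set r3 : ℝ := s + 3*(s₀ - s)/4 with hr3def
  have hsr1 : s < r1 := by rw [hr1def]; linarith
  have hr12 : r1 < r2 := by rw [hr1def, hr2def]; linarith
  have hr23 : r2 < r3 := by rw [hr2def, hr3def]; linarith
  have hr3s₀ : r3 < s₀ := by rw [hr3def]; linarith
  have hr20 : 0 ≤ r2 := by rw [hr2def]; linarith
  have hr30 : 0 ≤ r3 := by rw [hr3def]; linarith
  have hr10 : 0 ≤ r1 := by rw [hr1def]; linarith
  obtain ⟨hκs3, -⟩ := keyK r3 hr30 hr3s₀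
  have hπs2 : Summable (fun n => π n * r2^n) :=
    gronwall_summable hπ0 hπnn hκnn hrecπ hr20 hr23 hκs3
  obtain ⟨hκs1, -⟩ := keyK r1 hr10 (by linarith)
  have hmain := exp_ode hπ0 hπnn hκnn hrecπ hs0 hsr1 hr12 hπs2 hκs1
  rw [hmain]
  congr 1
  refine intervalIntegral.integral_congr ?_
  intro u hu
  rw [uIcc_of_le hs0] at hu
  exact (keyK u hu.1 (lt_of_le_of_lt hu.2 hss₀)).2
end

section
/- The function Λ : [0, s_0) → [0,∞) defined by Λ(s) = ∫_0^s du/ψ(u) is strictly increasing and continuous with Λ(0) = 0 and lim_{s↑s_0} Λ(s) = ∞; in particular Λ is a bijection from [0, s_0) onto [0,∞). -/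
open Set Filter Topology

theorem stmt_10 (α p : ℝ) (μ : ℕ → ℝ) (ψ : ℝ → ℝ) (s₀ : ℝ)
    (hα : 0 < α) (hp : 0 ≤ p)
    (hμ_nonneg : ∀ j, 0 ≤ μ j) (hμ_sum : ∑' j, μ j = 1)
    (hμ0 : 0 < μ 0) (hμ1 : μ 1 = 0)
    (hψ : ∀ s : ℝ, ψ s = α * ((∑' j, μ j * s ^ j) - s) - p * s)
    (hs₀ : s₀ = sInf {s : ℝ | 0 < s ∧ ψ s = 0})
    (hs₀_mem : s₀ ∈ Ioc (0:ℝ) 1)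
    (hψ_pos : ∀ s ∈ Ico (0:ℝ) s₀, 0 < ψ s)
    (Λ : ℝ → ℝ)
    (hΛ : ∀ s : ℝ, Λ s = ∫ u in (0:ℝ)..s, 1 / ψ u) :
    StrictMonoOn Λ (Ico 0 s₀) ∧ ContinuousOn Λ (Ico 0 s₀) ∧ Λ 0 = 0 ∧
      Tendsto Λ (nhdsWithin s₀ (Iio s₀)) atTop ∧
      BijOn Λ (Ico 0 s₀) (Ici 0) := by
  obtain ⟨hs₀_pos, hs₀_le⟩ := hs₀_mem
  -- summability of μ
  have hμ_summable : Summable μ := by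
    by_contra h
    rw [tsum_eq_zero_of_not_summable h] at hμ_sum
    norm_num at hμ_sum
  have hsum : ∀ s : ℝ, |s| ≤ 1 → Summable (fun j => μ j * s ^ j) := by
    intro s hs
    apply Summable.of_norm_bounded hμ_summable
    intro j
    rw [norm_mul, Real.norm_eq_abs, Real.norm_eq_abs, abs_of_nonneg (hμ_nonneg j), abs_pow]
    calc μ j * |s| ^ j ≤ μ j * 1 ^ j := by
          apply mul_le_mul_of_nonneg_left (pow_le_pow_left₀ (abs_nonneg s) hs j) (hμ_nonneg j)
      _ = μ j := by simp
  -- continuity of the generating function on [0,1]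
  have hf_cont : ContinuousOn (fun s : ℝ => ∑' j, μ j * s ^ j) (Icc (0:ℝ) 1) := by
    rw [continuousOn_iff_continuous_restrict]
    apply continuous_tsum (u := μ) (f := fun j (x : Icc (0:ℝ) 1) => μ j * (x : ℝ) ^ j)
    · intro j
      exact continuous_const.mul ((continuous_subtype_val).pow j)
    · exact hμ_summable
    · intro n x
      have hx : |(x : ℝ)| ≤ 1 := abs_le.2 ⟨by linarith [x.2.1], x.2.2⟩
      rw [norm_mul, Real.norm_eq_abs, Real.norm_eq_abs, abs_of_nonneg (hμ_nonneg n), abs_pow]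
      calc μ n * |(x : ℝ)| ^ n ≤ μ n * 1 ^ n := by
            apply mul_le_mul_of_nonneg_left (pow_le_pow_left₀ (abs_nonneg _) hx n) (hμ_nonneg n)
        _ = μ n := by simp
  have hψ_cont : ContinuousOn ψ (Icc (0:ℝ) 1) := by
    have h : ContinuousOn (fun s : ℝ => α * ((∑' j, μ j * s ^ j) - s) - p * s)
        (Icc (0:ℝ) 1) :=
      (continuousOn_const.mul (hf_cont.sub continuousOn_id)).sub
        (continuousOn_const.mul continuousOn_id)
    exact h.congr fun s _ => hψ s
  -- monotonicity of the generating function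
  have hf_le : ∀ u : ℝ, 0 ≤ u → u ≤ s₀ →
      (∑' j, μ j * u ^ j) ≤ ∑' j, μ j * s₀ ^ j := by
    intro u hu hus
    have hu1 : |u| ≤ 1 := abs_le.2 ⟨by linarith, by linarith⟩
    have hs1 : |s₀| ≤ 1 := abs_le.2 ⟨by linarith, hs₀_le⟩
    apply Summable.tsum_le_tsum _ (hsum u hu1) (hsum s₀ hs1)
    intro j
    exact mul_le_mul_of_nonneg_left (pow_le_pow_left₀ hu hus j) (hμ_nonneg j)
  -- ψ s₀ ≤ 0
  have hψs₀ : ψ s₀ ≤ 0 := by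
    rcases eq_or_lt_of_le hs₀_le with h1 | h1
    · have hone : (∑' j, μ j * (1:ℝ) ^ j) = 1 := by simpa using hμ_sum
      rw [hψ, h1, hone]
      nlinarith
    · by_contra hcon
      push_neg at hcon
      have hmem : Icc (0:ℝ) 1 ∈ 𝓝 s₀ :=
        Icc_mem_nhds hs₀_pos h1
      have hc : ContinuousAt ψ s₀ :=
        (hψ_cont s₀ ⟨hs₀_pos.le, hs₀_le⟩).continuousAt hmem
      have hev : ∀ᶠ u in 𝓝 s₀, 0 < ψ u := hc.eventually (eventually_gt_nhds hcon)
      obtain ⟨ε, hε, hball⟩ := Metric.eventually_nhds_iff.mp hev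
      set S := {s : ℝ | 0 < s ∧ ψ s = 0} with hS
      have hSne : S.Nonempty := by
        by_contra hSne
        rw [not_nonempty_iff_eq_empty] at hSne
        rw [hSne, Real.sInf_empty] at hs₀
        exact absurd hs₀ (ne_of_gt hs₀_pos)
      have hbdd : BddBelow S := ⟨0, fun s hs => hs.1.le⟩
      obtain ⟨t, htS, htlt⟩ := (csInf_lt_iff hbdd hSne).mp
        (by rw [← hs₀]; linarith : sInf S < s₀ + ε)
      have hts : s₀ ≤ t := hs₀ ▸ csInf_le hbdd htS
      have : 0 < ψ t := hball (by rw [Real.dist_eq, abs_of_nonneg (by linarith)]; linarith)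
      exact absurd htS.2 (ne_of_gt this)
  -- upper bound on ψ
  have hψ_ub : ∀ u : ℝ, 0 ≤ u → u < s₀ → ψ u ≤ (α + p) * (s₀ - u) := by
    intro u hu hus
    have hfle := hf_le u hu hus.le
    have h1 := hψ u
    have h2 := hψ s₀
    nlinarith
  -- continuity of 1/ψ on [0, s₀)
  have h1ψ_cont : ContinuousOn (fun u => 1 / ψ u) (Ico 0 s₀) := by
    apply ContinuousOn.div continuousOn_const
      (hψ_cont.mono fun u hu => ⟨hu.1, le_trans hu.2.le hs₀_le⟩)
      fun u hu => (hψ_pos u hu).ne'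
  -- interval integrability
  have hInt : ∀ a b : ℝ, 0 ≤ a → b < s₀ → a ≤ b →
      IntervalIntegrable (fun u => 1 / ψ u) MeasureTheory.volume a b := by
    intro a b ha hb hab
    apply ContinuousOn.intervalIntegrable_of_Icc hab
    exact h1ψ_cont.mono fun u hu => ⟨le_trans ha hu.1, lt_of_le_of_lt hu.2 hb⟩
  -- strict monotonicity
  have hmono : StrictMonoOn Λ (Ico 0 s₀) := by
    intro a ha b hb hab
    have key : Λ b - Λ a = ∫ u in a..b, 1 / ψ u := by
      rw [hΛ a, hΛ b]
      exact intervalIntegral.integral_interval_sub_left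
        (hInt 0 b le_rfl hb.2 (le_trans ha.1 hab.le)) (hInt 0 a le_rfl ha.2 ha.1)
    have hpos : 0 < ∫ u in a..b, 1 / ψ u := by
      apply intervalIntegral.intervalIntegral_pos_of_pos_on
        (hInt a b ha.1 hb.2 hab.le) _ hab
      intro x hx
      exact one_div_pos.2 (hψ_pos x ⟨le_trans ha.1 hx.1.le, hx.2.trans hb.2⟩)
    linarith
  -- Λ 0 = 0
  have hΛ0 : Λ 0 = 0 := by rw [hΛ]; simp
  -- continuity of Λ
  have hcont : ContinuousOn Λ (Ico 0 s₀) := by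
    intro x hx
    set b := (x + s₀) / 2 with hbdef
    have hxb : x < b := by rw [hbdef]; linarith [hx.2]
    have hbs : b < s₀ := by rw [hbdef]; linarith [hx.2]
    have hb0 : (0:ℝ) ≤ b := le_trans hx.1 hxb.le
    have hC : ContinuousOn Λ (Icc 0 b) := by
      have h0b : uIcc (0:ℝ) b = Icc 0 b := uIcc_of_le hb0
      have hprim :=
        intervalIntegral.continuousOn_primitive_interval'
          (f := fun u => 1 / ψ u) (b₁ := (0:ℝ)) (b₂ := b) (a := (0:ℝ))
          (by rw [intervalIntegrable_iff] ; exact (hInt 0 b le_rfl hbs hb0).1.congr_set_ae (by rw [uIoc_of_le hb0]; exact Filter.EventuallyEq.rfl))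
          (by rw [h0b]; exact ⟨le_rfl, hb0⟩)
      rw [h0b] at hprim
      exact hprim.congr fun s _ => hΛ s
    have hw : ContinuousWithinAt Λ (Icc 0 b) x := hC.continuousWithinAt ⟨hx.1, hxb.le⟩
    apply hw.mono_of_mem_nhdsWithin
    apply mem_of_superset (inter_mem_nhdsWithin (Ico 0 s₀) (Iio_mem_nhds hxb))
    exact fun u hu => ⟨hu.1.1, hu.2.le⟩
  -- lower bound for Λ
  have hαp : 0 < α + p := by linarith
  have hbound : ∀ s : ℝ, 0 ≤ s → s < s₀ →
      (α + p)⁻¹ * (Real.log s₀ - Real.log (s₀ - s)) ≤ Λ s := by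
    intro s hs hss
    rw [hΛ]
    have hint1 : IntervalIntegrable (fun u => ((α + p) * (s₀ - u))⁻¹)
        MeasureTheory.volume 0 s := by
      apply ContinuousOn.intervalIntegrable_of_Icc hs
      apply ContinuousOn.inv₀
      · exact continuousOn_const.mul (continuousOn_const.sub continuousOn_id)
      · intro u hu
        have : 0 < s₀ - u := by linarith [hu.2]
        positivity
    have hle : ∀ u ∈ Icc (0:ℝ) s, ((α + p) * (s₀ - u))⁻¹ ≤ 1 / ψ u := by
      intro u hu
      have hu' : u < s₀ := lt_of_le_of_lt hu.2 hss
      have h1 : 0 < ψ u := hψ_pos u ⟨hu.1, hu'⟩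
      have h2 : ψ u ≤ (α + p) * (s₀ - u) := hψ_ub u hu.1 hu'
      rw [one_div]
      exact inv_anti₀ h1 h2
    have hmon := intervalIntegral.integral_mono_on hs hint1 (hInt 0 s le_rfl hss hs) hle
    have hcomp : (∫ u in (0:ℝ)..s, ((α + p) * (s₀ - u))⁻¹) =
        (α + p)⁻¹ * (Real.log s₀ - Real.log (s₀ - s)) := by
      have hrw : ∀ u : ℝ, ((α + p) * (s₀ - u))⁻¹ = (α + p)⁻¹ * (s₀ - u)⁻¹ :=
        fun u => by rw [mul_inv]
      simp_rw [hrw]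
      rw [intervalIntegral.integral_const_mul]
      congr 1
      have hsub := intervalIntegral.integral_comp_sub_left
        (a := (0:ℝ)) (b := s) (fun x : ℝ => x⁻¹) s₀
      rw [hsub, sub_zero, integral_inv]
      · rw [Real.log_div (by positivity) (sub_ne_zero.mpr (ne_of_gt hss))]
      · intro hmem
        rw [uIcc_of_le (by linarith : s₀ - s ≤ s₀)] at hmem
        linarith [hmem.1]
    linarith [hcomp ▸ hmon]
  -- tendsto atTop
  have htend : Tendsto Λ (𝓝[<] s₀) atTop := by
    have hgrow : Tendsto (fun s => (α + p)⁻¹ * (Real.log s₀ - Real.log (s₀ - s)))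
        (𝓝[<] s₀) atTop := by
      apply Tendsto.const_mul_atTop (inv_pos.2 hαp)
      have h1 : Tendsto (fun s => s₀ - s) (𝓝[<] s₀) (𝓝[>] 0) := by
        apply tendsto_nhdsWithin_of_tendsto_nhds_of_eventually_within
        · have : Tendsto (fun s : ℝ => s₀ - s) (𝓝 s₀) (𝓝 (s₀ - s₀)) :=
            tendsto_const_nhds.sub tendsto_id
          simpa using this.mono_left nhdsWithin_le_nhds
        · filter_upwards [self_mem_nhdsWithin] with s hs
          simp only [mem_Iio] at hs
          exact mem_Ioi.2 (by linarith)
      have h2 : Tendsto (fun s => Real.log (s₀ - s)) (𝓝[<] s₀) atBot :=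
        Real.tendsto_log_nhdsGT_zero.comp h1
      have h3 : Tendsto (fun s => -Real.log (s₀ - s)) (𝓝[<] s₀) atTop :=
        tendsto_neg_atBot_atTop.comp h2
      simpa [sub_eq_add_neg] using tendsto_atTop_add_const_left _ (Real.log s₀) h3
    apply tendsto_atTop_mono' _ _ hgrow
    filter_upwards [Ioo_mem_nhdsLT_of_mem (⟨hs₀_pos, le_rfl⟩ : s₀ ∈ Ioc 0 s₀)]
      with s hs using hbound s hs.1.le hs.2
  -- bijection
  have hmaps : MapsTo Λ (Ico 0 s₀) (Ici 0) := by
    intro x hx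
    rcases eq_or_lt_of_le hx.1 with h | h
    · simp only [mem_Ici, ← h, hΛ0, le_refl]
    · have h2 := hmono ⟨le_rfl, hs₀_pos⟩ hx h
      rw [hΛ0] at h2
      exact le_of_lt h2
  have hsurj : SurjOn Λ (Ico 0 s₀) (Ici 0) := by
    intro y hy
    have hev : ∀ᶠ s in 𝓝[<] s₀, y ≤ Λ s := htend.eventually (eventually_ge_atTop y)
    obtain ⟨s, hs1, hs2⟩ :=
      (hev.and (Ioo_mem_nhdsLT_of_mem (⟨hs₀_pos, le_rfl⟩ : s₀ ∈ Ioc 0 s₀))).exists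
    have hsub : Icc (0:ℝ) s ⊆ Ico 0 s₀ :=
      fun u hu => ⟨hu.1, lt_of_le_of_lt hu.2 hs2.2⟩
    have hIVT : Icc (Λ 0) (Λ s) ⊆ Λ '' Icc 0 s :=
      intermediate_value_Icc hs2.1.le (hcont.mono hsub)
    obtain ⟨x, hx, hxy⟩ := hIVT ⟨by rw [hΛ0]; exact hy, hs1⟩
    exact ⟨x, hsub hx, hxy⟩
  exact ⟨hmono, hcont, hΛ0, htend, hmaps, hmono.injOn, hsurj⟩
end

section
/- For every x ≥ 0 and every s ∈ [0, s_0), Σ_{y≥0} 𝓗^{[y}(x) s^y = π*[s] · ∫_0^s v^x W*[v] ϖ*[v] dv, where f*[v] = Σ_{k≥0} f(k) v^k denotes the generating function. -/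
open Set Filter Topology

private lemma tri_eq (f : ℕ → ℕ → ℝ) (N : ℕ) :
    ∑ n ∈ Finset.range N, ∑ j ∈ Finset.range (n+1), f j (n - j)
      = ∑ j ∈ Finset.range N, ∑ m ∈ Finset.range (N - j), f j m := by
  induction N with
  | zero => simp
  | succ N ih =>
    rw [Finset.sum_range_succ, ih, Finset.sum_range_succ
      (fun j => ∑ m ∈ Finset.range (N + 1 - j), f j m)]
    have h1 : ∀ j ∈ Finset.range N, ∑ m ∈ Finset.range (N + 1 - j), f j m
        = ∑ m ∈ Finset.range (N - j), f j m + f j (N - j) := by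
      intro j hj
      have hj' : j < N := Finset.mem_range.mp hj
      have : N + 1 - j = (N - j) + 1 := by omega
      rw [this, Finset.sum_range_succ]
    rw [Finset.sum_congr rfl h1, Finset.sum_add_distrib]
    have h2 : ∑ j ∈ Finset.range (N + 1), f j (N - j)
        = ∑ j ∈ Finset.range N, f j (N - j) + f N 0 := by
      rw [Finset.sum_range_succ, Nat.sub_self]
    have h3 : N + 1 - N = 1 := by omega
    rw [h2, h3]
    simp [Finset.sum_range_one]
    ring

private lemma tri_bound (u c : ℕ → ℝ) (hu : ∀ n, 0 ≤ u n) (hc : ∀ n, 0 ≤ c n) (N : ℕ) :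
    ∑ n ∈ Finset.range N, ∑ j ∈ Finset.range (n+1), u j * c (n - j)
      ≤ (∑ j ∈ Finset.range N, u j) * (∑ m ∈ Finset.range N, c m) := by
  rw [tri_eq (fun j m => u j * c m) N, Finset.sum_mul]
  apply Finset.sum_le_sum
  intro j hj
  rw [← Finset.mul_sum]
  apply mul_le_mul_of_nonneg_left _ (hu j)
  apply Finset.sum_le_sum_of_subset_of_nonneg
  · exact Finset.range_subset_range.mpr (Nat.sub_le N j)
  · intro m _ _; exact hc m

private lemma cauchy_summable {f g : ℕ → ℝ} (hf : Summable fun k => |f k|)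
    (hg : Summable fun k => |g k|) :
    Summable (fun n => ∑ k ∈ Finset.range (n+1), f k * g (n-k)) := by
  have hf' : Summable fun k => ‖f k‖ := by simpa [Real.norm_eq_abs] using hf
  have hg' : Summable fun k => ‖g k‖ := by simpa [Real.norm_eq_abs] using hg
  exact (summable_norm_sum_mul_range_of_summable_norm hf' hg').of_norm

private lemma cauchy_tsum {f g : ℕ → ℝ} (hf : Summable fun k => |f k|)
    (hg : Summable fun k => |g k|) :
    (∑' n, f n) * (∑' n, g n) = ∑' n, ∑ k ∈ Finset.range (n+1), f k * g (n-k) := by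
  have hf' : Summable fun k => ‖f k‖ := by simpa [Real.norm_eq_abs] using hf
  have hg' : Summable fun k => ‖g k‖ := by simpa [Real.norm_eq_abs] using hg
  exact tsum_mul_tsum_eq_tsum_sum_range_of_summable_norm hf' hg'

set_option maxHeartbeats 2000000


open Set Filter Topology

theorem stmt_13 (α p : ℝ) (μ : ℕ → ℝ) (ψ : ℝ → ℝ) (s₀ : ℝ)
    (hα : 0 < α) (hp : 0 ≤ p)
    (hμ_nonneg : ∀ j, 0 ≤ μ j) (hμ_sum : ∑' j, μ j = 1)
    (hμ0 : 0 < μ 0) (hμ1 : μ 1 = 0)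
    (hψ : ∀ s : ℝ, ψ s = α * ((∑' j, μ j * s ^ j) - s) - p * s)
    (hs₀ : s₀ = sInf {s : ℝ | 0 < s ∧ ψ s = 0})
    (hs₀_mem : s₀ ∈ Ioc (0:ℝ) 1)
    (hψ_pos : ∀ s ∈ Ico (0:ℝ) s₀, 0 < ψ s)
    (β q : ℝ) (ν : ℕ → ℝ) (φ : ℝ → ℝ)
    (hβ : 0 ≤ β) (hq : 0 ≤ q)
    (hν_nonneg : ∀ j, 0 ≤ ν j) (hν0 : ν 0 = 0) (hν_sum : ∑' j, ν j = 1)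
    (hφ : ∀ s : ℝ, φ s = β * (1 - ∑' j, ν j * s ^ j) + q)
    (νbar : ℕ → ℝ)
    (hνbar : ∀ k, νbar k = 1 - ∑ j ∈ Finset.range (k+1), ν j)
    (μbar : ℕ → ℝ)
    (hμbar : ∀ k, μbar k = 1 - ∑ j ∈ Finset.range (k+1), μ j)
    (ΔW : ℕ → ℝ)
    (hΔW0 : ΔW 0 = 1 / (α * μ 0))
    (hΔW : ∀ k, ΔW (k+1) = (1 / μ 0) * ∑ j ∈ Finset.range (k+1), ΔW j * (μbar (k - j + 1) + p / α))
    (W : ℕ → ℝ)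
    (hW : ∀ k, W k = ∑ j ∈ Finset.range (k+1), ΔW j)
    (κ : ℕ → ℝ)
    (hκ : ∀ k, κ k = β * (∑ y ∈ Finset.range (k+1), ΔW (k - y) * νbar y) + q * W k)
    (π : ℕ → ℝ)
    (hπ0 : π 0 = 1)
    (hπ : ∀ k, π (k+1) = (∑ y ∈ Finset.range (k+1), π (k - y) * κ y) / (k + 1 : ℝ))
    (ϖ : ℕ → ℝ)
    (hϖ0 : ϖ 0 = 1)
    (hϖ : ∀ k, ϖ (k+1) = -(∑ y ∈ Finset.range (k+1), ϖ (k - y) * κ y) / (k + 1 : ℝ))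
    (H : ℕ → ℕ → ℝ)
    (hH : ∀ x y : ℕ, H x y = ∑ l ∈ Finset.range (y - x),
      π (y - x - 1 - l) * (∑ m ∈ Finset.range (l+1), W (l - m) * ϖ m) / (l + x + 1 : ℝ)) :
    ∀ (x : ℕ), ∀ s ∈ Ico (0:ℝ) s₀,
      ∑' y, H x y * s ^ y =
        (∑' k, π k * s ^ k) *
          ∫ v in (0:ℝ)..s, v ^ x * (∑' k, W k * v ^ k) * (∑' k, ϖ k * v ^ k) := by
  have hμ_summable : Summable μ := by
    by_contra h
    rw [tsum_eq_zero_of_not_summable h] at hμ_sum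
    norm_num at hμ_sum
  have hμbar_nonneg : ∀ k, 0 ≤ μbar k := by
    intro k
    rw [hμbar]
    have := Summable.sum_le_tsum (Finset.range (k+1)) (fun i _ => hμ_nonneg i) hμ_summable
    rw [hμ_sum] at this
    linarith
  have hμbar_le_one : ∀ k, μbar k ≤ 1 := by
    intro k
    rw [hμbar]
    have : 0 ≤ ∑ j ∈ Finset.range (k+1), μ j := Finset.sum_nonneg fun i _ => hμ_nonneg i
    linarith
  have hΔW_nonneg : ∀ k, 0 ≤ ΔW k := by
    intro k
    induction k using Nat.strong_induction_on with
    | _ k ih =>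
      match k with
      | 0 => rw [hΔW0]; positivity
      | (k+1) =>
        rw [hΔW]
        apply mul_nonneg (by positivity)
        apply Finset.sum_nonneg
        intro j hj
        have hj' := Finset.mem_range.mp hj
        exact mul_nonneg (ih j (by omega))
          (add_nonneg (hμbar_nonneg _) (div_nonneg hp hα.le))
  have hu_sum : ∀ t : ℝ, 0 ≤ t → t < s₀ → Summable (fun k => ΔW k * t ^ k) := by
    intro t ht0 hts
    have ht1 : t < 1 := lt_of_lt_of_le hts hs₀_mem.2
    have ht1' : (0:ℝ) < 1 - t := by linarith
    set c : ℕ → ℝ := fun m => (μbar (m+1) + p/α) * t^(m+1) with hc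
    have hc_nonneg : ∀ m, 0 ≤ c m := fun m =>
      mul_nonneg (add_nonneg (hμbar_nonneg _) (div_nonneg hp hα.le)) (by positivity)
    have hgeo : Summable (fun m : ℕ => t ^ m) := summable_geometric_of_lt_one ht0 ht1
    have hc_summable : Summable c := by
      have hle : ∀ m, c m ≤ ((1 + p/α) * t) * t ^ m := by
        intro m
        have h1 : μbar (m+1) + p/α ≤ 1 + p/α := by linarith [hμbar_le_one (m+1)]
        have h2 : t ^ (m+1) = t * t ^ m := by ring
        rw [hc]
        calc (μbar (m+1) + p/α) * t^(m+1) ≤ (1 + p/α) * t^(m+1) := by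
              apply mul_le_mul_of_nonneg_right h1 (by positivity)
          _ = ((1 + p/α) * t) * t ^ m := by rw [h2]; ring
      exact Summable.of_nonneg_of_le hc_nonneg hle (hgeo.mul_left _)
    set A := ∑' m, c m with hA
    have hμs_summable : Summable (fun j => μ j * t ^ j) := by
      have hle : ∀ j, μ j * t ^ j ≤ μ j := by
        intro j
        calc μ j * t ^ j ≤ μ j * 1 := by
              apply mul_le_mul_of_nonneg_left _ (hμ_nonneg j)
              exact pow_le_one₀ ht0 ht1.le
          _ = μ j := mul_one _
      exact Summable.of_nonneg_of_le (fun j => mul_nonneg (hμ_nonneg j) (by positivity)) hle hμ_summable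
    have hμbars : Summable (fun m => μbar m * t ^ m) := by
      have hle : ∀ m, μbar m * t ^ m ≤ t ^ m := by
        intro m
        calc μbar m * t ^ m ≤ 1 * t ^ m := by
              apply mul_le_mul_of_nonneg_right (hμbar_le_one m) (by positivity)
          _ = t ^ m := one_mul _
      exact Summable.of_nonneg_of_le
        (fun m => mul_nonneg (hμbar_nonneg m) (by positivity)) hle hgeo
    set F := ∑' j, μ j * t ^ j with hF
    -- key identity
    have hpartial : ∀ N : ℕ, (1 - t) * ∑ m ∈ Finset.range N, μbar m * t ^ m
        = 1 - μbar N * t ^ N - ∑ j ∈ Finset.range (N+1), μ j * t ^ j := by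
      intro N
      induction N with
      | zero =>
        simp [hμbar 0]
      | succ N ih =>
        rw [Finset.sum_range_succ, mul_add, ih,
          Finset.sum_range_succ (fun j => μ j * t ^ j) (N+1)]
        have hstep : μbar (N+1) = μbar N - μ (N+1) := by
          rw [hμbar, hμbar, Finset.sum_range_succ]
          ring
        rw [hstep]
        have : t ^ (N+1) = t * t ^ N := by ring
        rw [this]
        ring
    have hkey : (1 - t) * ∑' m, μbar m * t ^ m = 1 - F := by
      have l1 : Tendsto (fun N => (1 - t) * ∑ m ∈ Finset.range N, μbar m * t ^ m)
          atTop (𝓝 ((1 - t) * ∑' m, μbar m * t ^ m)) :=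
        (hμbars.hasSum.tendsto_sum_nat).const_mul _
      have l2 : Tendsto (fun N : ℕ => 1 - μbar N * t ^ N - ∑ j ∈ Finset.range (N+1), μ j * t ^ j)
          atTop (𝓝 (1 - 0 - F)) := by
        apply Tendsto.sub
        · apply Tendsto.const_sub
          have hb : Tendsto (fun N : ℕ => t ^ N) atTop (𝓝 0) :=
            tendsto_pow_atTop_nhds_zero_of_lt_one ht0 ht1
          apply squeeze_zero (fun N => mul_nonneg (hμbar_nonneg N) (by positivity)) _ hb
          intro N
          calc μbar N * t ^ N ≤ 1 * t ^ N :=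
                mul_le_mul_of_nonneg_right (hμbar_le_one N) (by positivity)
            _ = t ^ N := one_mul _
        · exact (hμs_summable.hasSum.tendsto_sum_nat).comp (tendsto_add_atTop_nat 1)
      rw [show (1:ℝ) - 0 - F = 1 - F by ring] at l2
      exact tendsto_nhds_unique (by simpa only [hpartial] using l1) l2
    -- A < μ 0
    have hμbars1 : Summable (fun m => μbar (m+1) * t ^ (m+1)) :=
      (summable_nat_add_iff 1).mpr hμbars
    have hgeo1 : Summable (fun m : ℕ => (p/α) * t ^ (m+1)) := by
      have : Summable (fun m : ℕ => ((p/α) * t) * t ^ m) := hgeo.mul_left _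
      apply this.congr
      intro m; ring
    have hA_eq : A = (∑' m, μbar m * t ^ m) - μbar 0 + (p/α) * (t * (1-t)⁻¹) := by
      have hsplit : A = (∑' m, μbar (m+1) * t ^ (m+1)) + ∑' m, (p/α) * t ^ (m+1) := by
        rw [hA, ← Summable.tsum_add hμbars1 hgeo1]
        apply tsum_congr; intro m; rw [hc]; ring
      have h1 : (∑' m, μbar (m+1) * t ^ (m+1)) = (∑' m, μbar m * t ^ m) - μbar 0 := by
        have := Summable.tsum_eq_zero_add hμbars
        simp only [pow_zero, mul_one] at this
        linarith
      have h2 : (∑' m : ℕ, (p/α) * t ^ (m+1)) = (p/α) * (t * (1-t)⁻¹) := by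
        rw [tsum_mul_left]
        congr 1
        have : (fun m : ℕ => t ^ (m+1)) = fun m => t * t ^ m := by funext m; ring
        rw [this, tsum_mul_left, tsum_geometric_of_lt_one ht0 ht1]
      rw [hsplit, h1, h2]
    have hψt : 0 < ψ t := hψ_pos t ⟨ht0, hts⟩
    have hψt' : 0 < F - t - p * t / α := by
      rw [hψ] at hψt
      rw [← hF] at hψt
      have := div_pos hψt hα
      calc (0:ℝ) < (α * (F - t) - p * t) / α := this
        _ = F - t - p * t / α := by field_simp
    have hAμ : A < μ 0 := by
      have hμbar0 : μbar 0 = 1 - μ 0 := by rw [hμbar]; simp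
      have hMbar : (∑' m, μbar m * t ^ m) = (1 - F) * (1-t)⁻¹ := by
        rw [← hkey]; field_simp
      rw [hA_eq, hMbar, hμbar0]
      rw [show μ 0 = 1 - (1 - μ 0) by ring]
      have : (1 - F) * (1 - t)⁻¹ + (p/α) * (t * (1-t)⁻¹) < 1 := by
        rw [← sub_pos]
        have hexp : 1 - ((1 - F) * (1 - t)⁻¹ + (p/α) * (t * (1-t)⁻¹))
            = (F - t - p * t / α) * (1-t)⁻¹ := by
          field_simp
          ring
        rw [hexp]
        exact mul_pos hψt' (inv_pos.mpr ht1')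
      linarith
    -- partial sum bound
    set u : ℕ → ℝ := fun k => ΔW k * t ^ k with hu
    have hu_nonneg : ∀ k, 0 ≤ u k := fun k => mul_nonneg (hΔW_nonneg k) (by positivity)
    have hrec : ∀ k, μ 0 * u (k+1) = ∑ j ∈ Finset.range (k+1), u j * c (k - j) := by
      intro k
      have e : μ 0 * u (k+1)
          = (∑ j ∈ Finset.range (k+1), ΔW j * (μbar (k - j + 1) + p / α)) * t ^ (k+1) := by
        simp only [hu]
        rw [hΔW k]
        field_simp
        rw [mul_comm]; congr 1; exact Finset.sum_congr rfl (fun j _ => by ring)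
      rw [e, Finset.sum_mul]
      apply Finset.sum_congr rfl
      intro j hj
      have hj' := Finset.mem_range.mp hj
      rw [hc]
      simp only
      have h1 : k - j + 1 = (k - j) + 1 := rfl
      have h2 : t ^ j * t ^ (k - j + 1) = t ^ (k + 1) := by
        rw [← pow_add]
        congr 1
        omega
      calc ΔW j * (μbar (k - j + 1) + p / α) * t ^ (k+1)
          = (ΔW j * t ^ j) * ((μbar (k - j + 1) + p / α) * t ^ (k - j + 1)) := by
            rw [← h2]; ring
        _ = _ := rfl
    have hbound : ∀ N, ∑ k ∈ Finset.range N, u k ≤ (1/α) / (μ 0 - A) := by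
      have hpos : (0:ℝ) < μ 0 - A := by linarith
      have hstep : ∀ N, (μ 0 - A) * ∑ k ∈ Finset.range (N+1), u k ≤ 1/α := by
        intro N
        have e1 : ∑ k ∈ Finset.range (N+1), u k = u 0 + ∑ n ∈ Finset.range N, u (n+1) := by
          rw [Finset.sum_range_succ']
          ring
        have e2 : μ 0 * ∑ k ∈ Finset.range (N+1), u k
            = μ 0 * u 0 + ∑ n ∈ Finset.range N, ∑ j ∈ Finset.range (n+1), u j * c (n - j) := by
          rw [e1, mul_add, Finset.mul_sum]
          congr 1
          apply Finset.sum_congr rfl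
          intro n _
          exact hrec n
        have e3 : μ 0 * u 0 = 1/α := by
          rw [hu]
          simp only [pow_zero, mul_one, hΔW0]
          field_simp
        have e4 : ∑ n ∈ Finset.range N, ∑ j ∈ Finset.range (n+1), u j * c (n - j)
            ≤ (∑ j ∈ Finset.range N, u j) * (∑ m ∈ Finset.range N, c m) :=
          tri_bound u c hu_nonneg hc_nonneg N
        have e5 : (∑ j ∈ Finset.range N, u j) * (∑ m ∈ Finset.range N, c m)
            ≤ (∑ j ∈ Finset.range (N+1), u j) * A := by
          apply mul_le_mul
          · apply Finset.sum_le_sum_of_subset_of_nonneg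
            · exact Finset.range_subset_range.mpr (by omega)
            · intro m _ _; exact hu_nonneg m
          · exact Summable.sum_le_tsum _ (fun m _ => hc_nonneg m) hc_summable
          · exact Finset.sum_nonneg fun m _ => hc_nonneg m
          · exact Finset.sum_nonneg fun m _ => hu_nonneg m
        nlinarith [e2, e3, e4, e5]
      intro N
      match N with
      | 0 =>
        simp only [Finset.range_zero, Finset.sum_empty]
        exact div_nonneg (by positivity) hpos.le
      | (N+1) =>
        rw [le_div_iff₀ hpos, mul_comm]
        exact hstep N
    exact summable_of_sum_range_le hu_nonneg hbound

  have hs₀_le1 : s₀ ≤ 1 := hs₀_mem.2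
  have hs₀_pos : 0 < s₀ := hs₀_mem.1
  have hν_summable : Summable ν := by
    by_contra h
    rw [tsum_eq_zero_of_not_summable h] at hν_sum
    norm_num at hν_sum
  have hνbar_nonneg : ∀ k, 0 ≤ νbar k := by
    intro k
    rw [hνbar]
    have := Summable.sum_le_tsum (Finset.range (k+1)) (fun i _ => hν_nonneg i) hν_summable
    rw [hν_sum] at this
    linarith
  have hνbar_le_one : ∀ k, νbar k ≤ 1 := by
    intro k
    rw [hνbar]
    have : 0 ≤ ∑ j ∈ Finset.range (k+1), ν j := Finset.sum_nonneg fun i _ => hν_nonneg i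
    linarith
  have hW_nonneg : ∀ k, 0 ≤ W k := by
    intro k
    rw [hW]
    exact Finset.sum_nonneg fun j _ => hΔW_nonneg j
  have hκ_nonneg : ∀ k, 0 ≤ κ k := by
    intro k
    rw [hκ]
    apply add_nonneg
    · exact mul_nonneg hβ (Finset.sum_nonneg fun y _ =>
        mul_nonneg (hΔW_nonneg _) (hνbar_nonneg y))
    · exact mul_nonneg hq (hW_nonneg k)
  have hπ_nonneg : ∀ k, 0 ≤ π k := by
    intro k
    induction k using Nat.strong_induction_on with
    | _ k ih =>
      match k with
      | 0 => rw [hπ0]; norm_num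
      | (k+1) =>
        rw [hπ]
        apply div_nonneg _ (by positivity)
        apply Finset.sum_nonneg
        intro y hy
        have hy' := Finset.mem_range.mp hy
        exact mul_nonneg (ih (k - y) (by omega)) (hκ_nonneg y)
  have habs : ∀ (f : ℕ → ℝ), (∀ k, 0 ≤ f k) → Summable f → Summable (fun k => |f k|) := by
    intro f hf hsf
    exact hsf.congr fun k => (abs_of_nonneg (hf k)).symm
  have hgeo : ∀ t : ℝ, 0 ≤ t → t < s₀ → Summable (fun k : ℕ => t ^ k) := fun t ht0 hts =>
    summable_geometric_of_lt_one ht0 (lt_of_lt_of_le hts hs₀_le1)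
  have hW_sum : ∀ t : ℝ, 0 ≤ t → t < s₀ → Summable (fun k => W k * t ^ k) := by
    intro t ht0 hts
    have h2 := cauchy_summable (f := fun k => ΔW k * t ^ k) (g := fun m : ℕ => t ^ m)
      (habs _ (fun k => mul_nonneg (hΔW_nonneg k) (by positivity)) (hu_sum t ht0 hts))
      (habs _ (fun k => by positivity) (hgeo t ht0 hts))
    apply h2.congr
    intro n
    rw [hW, Finset.sum_mul]
    apply Finset.sum_congr rfl
    intro j hj
    have hj' := Finset.mem_range.mp hj
    have e : t ^ j * t ^ (n - j) = t ^ n := by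
      rw [← pow_add]
      congr 1
      omega
    rw [mul_assoc, e]
  have hνbar_sum : ∀ t : ℝ, 0 ≤ t → t < s₀ → Summable (fun k => νbar k * t ^ k) := by
    intro t ht0 hts
    have hle : ∀ k, νbar k * t ^ k ≤ t ^ k := by
      intro k
      calc νbar k * t ^ k ≤ 1 * t ^ k :=
            mul_le_mul_of_nonneg_right (hνbar_le_one k) (by positivity)
        _ = t ^ k := one_mul _
    exact Summable.of_nonneg_of_le
      (fun k => mul_nonneg (hνbar_nonneg k) (by positivity)) hle (hgeo t ht0 hts)
  have hκ_sum : ∀ t : ℝ, 0 ≤ t → t < s₀ → Summable (fun k => κ k * t ^ k) := by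
    intro t ht0 hts
    have h2 := cauchy_summable (f := fun k => νbar k * t ^ k) (g := fun k => ΔW k * t ^ k)
      (habs _ (fun k => mul_nonneg (hνbar_nonneg k) (by positivity)) (hνbar_sum t ht0 hts))
      (habs _ (fun k => mul_nonneg (hΔW_nonneg k) (by positivity)) (hu_sum t ht0 hts))
    apply Summable.congr ((h2.mul_left β).add ((hW_sum t ht0 hts).mul_left q))
    intro k
    rw [hκ, add_mul, Finset.mul_sum, Finset.mul_sum, Finset.sum_mul]
    congr 1
    · apply Finset.sum_congr rfl
      intro y hy
      have hy' := Finset.mem_range.mp hy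
      have e : t ^ y * t ^ (k - y) = t ^ k := by
        rw [← pow_add]; congr 1; omega
      calc β * (νbar y * t ^ y * (ΔW (k - y) * t ^ (k - y)))
          = β * (ΔW (k - y) * νbar y * (t ^ y * t ^ (k - y))) := by ring
        _ = β * (ΔW (k - y) * νbar y * t ^ k) := by rw [e]
        _ = β * (ΔW (k - y) * νbar y) * t ^ k := by ring
    · ring
  have hπ_sum : ∀ t : ℝ, 0 ≤ t → t < s₀ → Summable (fun k => π k * t ^ k) := by
    intro s hs0 hss
    set r : ℝ := (s + s₀) / 2 with hr
    set r' : ℝ := (s + r) / 2 with hr'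
    have hrpos : 0 < r := by rw [hr]; linarith
    have hr'pos : 0 < r' := by rw [hr']; linarith
    have hsr' : s < r' := by rw [hr', hr]; linarith
    have hr'r : r' < r := by rw [hr', hr]; linarith
    have hrs₀ : r < s₀ := by rw [hr]; linarith
    have hκr : Summable (fun k => κ k * r ^ k) := hκ_sum r hrpos.le hrs₀
    set M : ℝ := ∑' k, κ k * r ^ k with hM
    have hM_nonneg : 0 ≤ M :=
      tsum_nonneg fun k => mul_nonneg (hκ_nonneg k) (by positivity)
    have hκM : ∀ k, κ k * r ^ k ≤ M := by
      intro k
      exact Summable.le_tsum hκr k fun j _ => mul_nonneg (hκ_nonneg j) (by positivity)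
    set ρ : ℝ := r' / r with hρ
    have hρ0 : 0 ≤ ρ := by positivity
    have hρ1 : ρ < 1 := by rw [hρ, div_lt_one hrpos]; exact hr'r
    have hgρ : ∑' y : ℕ, ρ ^ y = (1 - ρ)⁻¹ := tsum_geometric_of_lt_one hρ0 hρ1
    obtain ⟨K, hK⟩ := exists_nat_ge (M * r' * (1 - ρ)⁻¹)
    set C : ℝ := 1 + ∑ k ∈ Finset.range (K+1), π k * r' ^ k with hC
    have hC_pos : 0 < C := by
      rw [hC]
      have : 0 ≤ ∑ k ∈ Finset.range (K+1), π k * r' ^ k :=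
        Finset.sum_nonneg fun k _ => mul_nonneg (hπ_nonneg k) (by positivity)
      linarith
    have hCk : ∀ k, k ≤ K → π k * r' ^ k ≤ C := by
      intro k hk
      rw [hC]
      have h1 : π k * r' ^ k ≤ ∑ j ∈ Finset.range (K+1), π j * r' ^ j :=
        Finset.single_le_sum (fun j _ => mul_nonneg (hπ_nonneg j) (by positivity))
          (Finset.mem_range.mpr (by omega))
      linarith
    have hmain : ∀ k, π k * r' ^ k ≤ C := by
      intro k
      induction k using Nat.strong_induction_on with
      | _ k ih =>
        by_cases hk : k ≤ K
        · exact hCk k hk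
        · push_neg at hk
          match k, hk with
          | (n+1), hk =>
            have hnK : K ≤ n := by omega
            have hterm : ∀ y ∈ Finset.range (n+1),
                π (n - y) * κ y * r' ^ (n+1) ≤ C * M * r' * ρ ^ y := by
              intro y hy
              have hy' := Finset.mem_range.mp hy
              have hry : ρ ^ y = r' ^ y / r ^ y := by rw [hρ, div_pow]
              have h2 : r' ^ (n - y) * r' ^ y = r' ^ n := by
                rw [← pow_add]; congr 1; omega
              have e : (π (n - y) * r' ^ (n - y)) * (κ y * r ^ y) * (r' * ρ ^ y)
                  = π (n - y) * κ y * r' ^ (n+1) := by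
                rw [hry]
                calc (π (n - y) * r' ^ (n - y)) * (κ y * r ^ y) * (r' * (r' ^ y / r ^ y))
                    = π (n - y) * κ y * ((r' ^ (n - y) * r' ^ y) * r') * (r ^ y / r ^ y) := by
                      ring
                  _ = π (n - y) * κ y * (r' ^ n * r') * 1 := by
                      rw [h2, div_self (by positivity : (r:ℝ) ^ y ≠ 0)]
                  _ = π (n - y) * κ y * r' ^ (n+1) := by rw [← pow_succ]; ring
              rw [← e]
              have h1 : (π (n - y) * r' ^ (n - y)) * (κ y * r ^ y) ≤ C * M := by
                apply mul_le_mul (ih (n - y) (by omega)) (hκM y)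
                  (mul_nonneg (hκ_nonneg y) (by positivity))
                  hC_pos.le
              rw [show C * M * r' * ρ ^ y = (C * M) * (r' * ρ ^ y) by ring]
              exact mul_le_mul_of_nonneg_right h1 (by positivity)
            have hsum : ∑ y ∈ Finset.range (n+1), π (n - y) * κ y * r' ^ (n+1)
                ≤ C * M * r' * (1 - ρ)⁻¹ := by
              calc ∑ y ∈ Finset.range (n+1), π (n - y) * κ y * r' ^ (n+1)
                  ≤ ∑ y ∈ Finset.range (n+1), C * M * r' * ρ ^ y :=
                    Finset.sum_le_sum hterm
                _ = (C * M * r') * ∑ y ∈ Finset.range (n+1), ρ ^ y := by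
                    rw [Finset.mul_sum]
                _ ≤ (C * M * r') * (1 - ρ)⁻¹ := by
                    apply mul_le_mul_of_nonneg_left _ (by positivity)
                    rw [← hgρ]
                    exact Summable.sum_le_tsum _ (fun y _ => by positivity)
                      (summable_geometric_of_lt_one hρ0 hρ1)
                _ = C * M * r' * (1 - ρ)⁻¹ := by ring
            rw [hπ n, div_mul_eq_mul_div, div_le_iff₀ (by positivity), Finset.sum_mul]
            calc (∑ y ∈ Finset.range (n+1), π (n - y) * κ y * r' ^ (n+1))
                ≤ C * M * r' * (1 - ρ)⁻¹ := hsum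
              _ ≤ C * (K + 1) := by
                  have : M * r' * (1 - ρ)⁻¹ ≤ K + 1 := by linarith
                  calc C * M * r' * (1 - ρ)⁻¹ = C * (M * r' * (1 - ρ)⁻¹) := by ring
                    _ ≤ C * (K + 1) := mul_le_mul_of_nonneg_left this hC_pos.le
              _ ≤ C * (↑n + 1) := by
                  apply mul_le_mul_of_nonneg_left _ hC_pos.le
                  have : (K : ℝ) ≤ n := Nat.cast_le.mpr hnK
                  linarith
    -- conclude
    have hgeo2 : Summable (fun k : ℕ => C * (s / r') ^ k) :=
      (summable_geometric_of_lt_one (by positivity)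
        ((div_lt_one hr'pos).mpr hsr')).mul_left C
    apply Summable.of_nonneg_of_le
      (fun k => mul_nonneg (hπ_nonneg k) (by positivity)) _ hgeo2
    intro k
    have e : C * (s / r') ^ k = (C / r' ^ k) * s ^ k := by
      rw [div_pow]
      ring
    rw [e]
    apply mul_le_mul_of_nonneg_right _ (by positivity)
    rw [le_div_iff₀ (by positivity)]
    exact hmain k

  have hϖ_abs : ∀ k, |ϖ k| ≤ π k := by
    intro k
    induction k using Nat.strong_induction_on with
    | _ k ih =>
      match k with
      | 0 => rw [hϖ0, hπ0]; simp
      | (k+1) =>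
        rw [hϖ k, hπ k]
        rw [abs_div, abs_neg]
        rw [abs_of_nonneg (by positivity : (0:ℝ) ≤ (k:ℝ) + 1)]
        apply div_le_div_of_nonneg_right _ (by positivity)
        calc |∑ y ∈ Finset.range (k+1), ϖ (k - y) * κ y|
            ≤ ∑ y ∈ Finset.range (k+1), |ϖ (k - y) * κ y| := Finset.abs_sum_le_sum_abs _ _
          _ ≤ ∑ y ∈ Finset.range (k+1), π (k - y) * κ y := by
              apply Finset.sum_le_sum
              intro y hy
              have hy' := Finset.mem_range.mp hy
              rw [abs_mul, abs_of_nonneg (hκ_nonneg y)]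
              exact mul_le_mul_of_nonneg_right (ih (k - y) (by omega)) (hκ_nonneg y)
  -- abs summabilities
  have hπa : ∀ t : ℝ, 0 ≤ t → t < s₀ → Summable (fun k => |π k * t ^ k|) := by
    intro t ht0 hts
    exact (hπ_sum t ht0 hts).congr fun k =>
      (abs_of_nonneg (mul_nonneg (hπ_nonneg k) (by positivity))).symm
  have hWa : ∀ t : ℝ, 0 ≤ t → t < s₀ → Summable (fun k => |W k * t ^ k|) := by
    intro t ht0 hts
    exact (hW_sum t ht0 hts).congr fun k =>
      (abs_of_nonneg (mul_nonneg (hW_nonneg k) (by positivity))).symm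
  have hϖa : ∀ t : ℝ, 0 ≤ t → t < s₀ → Summable (fun k => |ϖ k * t ^ k|) := by
    intro t ht0 hts
    apply Summable.of_nonneg_of_le (fun k => abs_nonneg _) _ (hπ_sum t ht0 hts)
    intro k
    rw [abs_mul, abs_of_nonneg (by positivity : (0:ℝ) ≤ t ^ k)]
    exact mul_le_mul_of_nonneg_right (hϖ_abs k) (by positivity)
  have hϖ_sum : ∀ t : ℝ, 0 ≤ t → t < s₀ → Summable (fun k => ϖ k * t ^ k) := by
    intro t ht0 hts
    exact (hϖa t ht0 hts).of_abs
  set h : ℕ → ℝ := fun l => ∑ m ∈ Finset.range (l+1), W (l - m) * ϖ m with hh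
  -- |h l| * t^l summable
  have hha : ∀ t : ℝ, 0 ≤ t → t < s₀ → Summable (fun l => |h l * t ^ l|) := by
    intro t ht0 hts
    have hϖaa : Summable (fun k => |(|ϖ k * t ^ k|)|) :=
      (hϖa t ht0 hts).congr fun k => (abs_abs _).symm
    have hWaa : Summable (fun k => |(|W k * t ^ k|)|) :=
      (hWa t ht0 hts).congr fun k => (abs_abs _).symm
    have hbs := cauchy_summable hϖaa hWaa
    apply Summable.of_nonneg_of_le (fun l => abs_nonneg _) _ hbs
    intro l
    calc |h l * t ^ l| ≤ ∑ m ∈ Finset.range (l+1), |W (l - m) * ϖ m * t ^ l| := by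
          have e0 : h l * t ^ l = ∑ m ∈ Finset.range (l+1), W (l - m) * ϖ m * t ^ l := by
            rw [hh]
            simp only
            rw [Finset.sum_mul]
          rw [e0]
          exact Finset.abs_sum_le_sum_abs _ _
      _ ≤ ∑ m ∈ Finset.range (l+1), |ϖ m * t ^ m| * |W (l - m) * t ^ (l - m)| := by
          apply Finset.sum_le_sum
          intro m hm
          have hm' := Finset.mem_range.mp hm
          have e : t ^ m * t ^ (l - m) = t ^ l := by
            rw [← pow_add]; congr 1; omega
          have e2 : |W (l - m) * ϖ m * t ^ l| = |ϖ m * t ^ m| * |W (l - m) * t ^ (l - m)| := by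
            rw [← abs_mul]
            congr 1
            rw [← e]; ring
          exact e2.le
  -- pointwise product identity
  have hprod : ∀ v : ℝ, 0 ≤ v → v < s₀ →
      (∑' k, W k * v ^ k) * (∑' k, ϖ k * v ^ k) = ∑' l, h l * v ^ l := by
    intro v hv0 hvs
    rw [mul_comm]
    rw [cauchy_tsum (hϖa v hv0 hvs) (hWa v hv0 hvs)]
    apply tsum_congr
    intro n
    rw [hh]
    simp only
    rw [Finset.sum_mul]
    apply Finset.sum_congr rfl
    intro m hm
    have hm' := Finset.mem_range.mp hm
    have e : v ^ m * v ^ (n - m) = v ^ n := by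
      rw [← pow_add]; congr 1; omega
    calc ϖ m * v ^ m * (W (n - m) * v ^ (n - m))
        = W (n - m) * ϖ m * (v ^ m * v ^ (n - m)) := by ring
      _ = W (n - m) * ϖ m * v ^ n := by rw [e]
  intro x s hs
  obtain ⟨hs0, hss⟩ := hs
  -- the integral
  have hint : (∫ v in (0:ℝ)..s, v ^ x * (∑' k, W k * v ^ k) * (∑' k, ϖ k * v ^ k))
      = ∑' l, (h l / ((l:ℝ) + x + 1) * s ^ l) * s ^ (x+1) := by
    rw [intervalIntegral.integral_of_le hs0]
    have heq : Set.EqOn (fun v : ℝ => v ^ x * (∑' k, W k * v ^ k) * (∑' k, ϖ k * v ^ k))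
        (fun v : ℝ => ∑' l, h l * v ^ (l + x)) (Set.Ioc 0 s) := by
      intro v hv
      obtain ⟨hv0, hvs⟩ := hv
      simp only
      rw [mul_assoc, hprod v hv0.le (lt_of_le_of_lt hvs hss)]
      rw [← tsum_mul_left]
      apply tsum_congr
      intro l
      rw [pow_add]
      ring
    rw [MeasureTheory.setIntegral_congr_fun measurableSet_Ioc heq]
    have hFint : ∀ l : ℕ, MeasureTheory.IntegrableOn
        (fun v : ℝ => h l * v ^ (l + x)) (Set.Ioc 0 s) := by
      intro l
      exact (continuous_const.mul (continuous_pow (l + x))).integrableOn_Ioc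
    have hInorm : ∀ l : ℕ, (∫ v in Set.Ioc (0:ℝ) s, ‖h l * v ^ (l + x)‖)
        = |h l| * (s ^ (l + x + 1) / ((l:ℝ) + x + 1)) := by
      intro l
      have heq2 : Set.EqOn (fun v : ℝ => ‖h l * v ^ (l + x)‖)
          (fun v : ℝ => |h l| * v ^ (l + x)) (Set.Ioc 0 s) := by
        intro v hv
        simp only [Real.norm_eq_abs, abs_mul]
        rw [abs_of_nonneg (pow_nonneg hv.1.le _)]
      rw [MeasureTheory.setIntegral_congr_fun measurableSet_Ioc heq2,
        MeasureTheory.integral_const_mul, ← intervalIntegral.integral_of_le hs0,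
        integral_pow]
      congr 1
      rw [zero_pow (by omega : l + x + 1 ≠ 0)]
      push_cast
      ring
    have hIsum : Summable (fun l => ∫ v in Set.Ioc (0:ℝ) s, ‖h l * v ^ (l + x)‖) := by
      rw [funext hInorm]
      apply Summable.of_nonneg_of_le
        (fun l => mul_nonneg (abs_nonneg _) (by positivity)) _
        (((hha s hs0 hss).mul_right (s ^ (x+1))))
      intro l
      have e : s ^ (l + x + 1) = s ^ l * s ^ (x + 1) := by ring
      rw [e]
      calc |h l| * (s ^ l * s ^ (x+1) / ((l:ℝ) + x + 1))
          ≤ |h l| * (s ^ l * s ^ (x+1)) := by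
            apply mul_le_mul_of_nonneg_left _ (abs_nonneg _)
            apply div_le_self (by positivity)
            have : (0:ℝ) ≤ (l:ℝ) + x := by positivity
            linarith
        _ = |h l * s ^ l| * s ^ (x+1) := by
            rw [abs_mul, abs_of_nonneg (by positivity : (0:ℝ) ≤ s ^ l)]
            ring
    rw [← MeasureTheory.integral_tsum_of_summable_integral_norm hFint hIsum]
    apply tsum_congr
    intro l
    rw [MeasureTheory.integral_const_mul, ← intervalIntegral.integral_of_le hs0,
      integral_pow, zero_pow (by omega : l + x + 1 ≠ 0)]
    have ecast : ((l + x : ℕ) : ℝ) + 1 = (l:ℝ) + x + 1 := by push_cast; ring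
    rw [ecast]
    have e : s ^ (l + x + 1) = s ^ l * s ^ (x + 1) := by ring
    rw [e]
    ring
  -- the LHS
  set g : ℕ → ℝ := fun l => h l / ((l:ℝ) + x + 1) with hg
  have hga : Summable (fun l => |g l * s ^ l|) := by
    apply Summable.of_nonneg_of_le (fun l => abs_nonneg _) _ (hha s hs0 hss)
    intro l
    rw [hg]
    simp only
    rw [abs_mul, abs_mul, abs_div]
    apply mul_le_mul_of_nonneg_right _ (abs_nonneg _)
    rw [abs_of_nonneg (by positivity : (0:ℝ) ≤ (l:ℝ) + x + 1)]
    apply div_le_self (abs_nonneg _)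
    have : (0:ℝ) ≤ (l:ℝ) + x := by positivity
    linarith
  have hLHS : ∑' y, H x y * s ^ y
      = ((∑' l, g l * s ^ l) * (∑' k, π k * s ^ k)) * s ^ (x+1) := by
    have hinj : Function.Injective (fun n : ℕ => n + (x+1)) := fun a b hab => by
      simpa using hab
    have hsupp : Function.support (fun y => H x y * s ^ y)
        ⊆ Set.range (fun n : ℕ => n + (x+1)) := by
      intro y hy
      by_contra hc
      have hyx : y < x + 1 := by
        by_contra hc2
        push_neg at hc2
        exact hc ⟨y - (x+1), by simp only []; omega⟩
      apply hy
      show H x y * s ^ y = 0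
      rw [hH]
      have : y - x = 0 := by omega
      rw [this]
      simp
    rw [← Function.Injective.tsum_eq hinj hsupp]
    have hterm : ∀ n : ℕ, H x (n + (x+1)) * s ^ (n + (x+1))
        = (∑ l ∈ Finset.range (n+1), (g l * s ^ l) * (π (n - l) * s ^ (n - l))) * s ^ (x+1) := by
      intro n
      rw [hH]
      have e1 : n + (x+1) - x = n + 1 := by omega
      rw [e1, Finset.sum_mul, Finset.sum_mul]
      apply Finset.sum_congr rfl
      intro l hl
      have hl' := Finset.mem_range.mp hl
      have e2 : n + 1 - 1 - l = n - l := by omega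
      rw [e2, hg]
      simp only
      have e3 : s ^ l * (s ^ (n - l) * s ^ (x+1)) = s ^ (n + (x+1)) := by
        rw [← pow_add, ← pow_add]
        congr 1
        omega
      rw [← e3]
      ring
    calc ∑' n, H x (n + (x+1)) * s ^ (n + (x+1))
        = ∑' n, (∑ l ∈ Finset.range (n+1), (g l * s ^ l) * (π (n - l) * s ^ (n - l))) * s ^ (x+1) := by
          exact tsum_congr hterm
      _ = (∑' n, ∑ l ∈ Finset.range (n+1), (g l * s ^ l) * (π (n - l) * s ^ (n - l))) * s ^ (x+1) := by
          rw [tsum_mul_right]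
      _ = ((∑' l, g l * s ^ l) * (∑' k, π k * s ^ k)) * s ^ (x+1) := by
          rw [cauchy_tsum hga (hπa s hs0 hss)]
  rw [hLHS, hint]
  rw [tsum_mul_right]
  rw [hg]
  ring
end
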